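/- arXiv:1808.10127 — 4 statements merged into one kernel-verified Lean document; each statement's English description precedes it below -/
import Mathlib

section
/- For all real numbers α₁, α₂ with 0 < α₂ ≤ α₁ ≤ 1 and every ξ with 0 < ξ < 10⁻³, there exists N₀ such that the following holds for every bipartite graph G with bipartition {V₁, V₂} satisfying |V₁| = |V₂| = (α₁ + α₂ + 8ξ)k′ ≥ N₀ and |E(G)| ≥ (1 − ξ⁷)|V₁|². For every 2-edge-coloring of G, writing G₁ and G₂ for the spanning subgraphs formed by the edges of colors 1 and 2 respectively, there exists a color i ∈ {1, 2} such that some connected component of G_i contains a matching saturating at least (2α_i + 0.1ξ)k′ vertices. -/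
/-- The spanning subgraph of `G` consisting of the edges with color `i`,
given an edge coloring `χ` (on pairs of vertices) with `r` colors. -/
def colorSubgraph {V : Type*} {r : ℕ} (G : SimpleGraph V) (χ : Sym2 V → Fin r) (i : Fin r) :
    SimpleGraph V where
  Adj u v := G.Adj u v ∧ χ s(u, v) = i
  symm := ⟨fun u v h => ⟨h.1.symm, by rw [Sym2.eq_swap]; exact h.2⟩⟩
  loopless := ⟨fun u h => G.loopless.irrefl u h.1⟩

/-- `G` contains a cycle of length `m` (on `m` vertices) as a subgraph. -/
def HasCycleLength {V : Type*} (G : SimpleGraph V) (m : ℕ) : Prop :=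
  ∃ (v : V) (w : G.Walk v v), w.IsCycle ∧ w.length = m

/-- `G` contains a connected matching (all of whose edges lie in one connected
component of `G`) saturating at least `b` vertices. -/
def HasConnMatching {V : Type*} (G : SimpleGraph V) (b : ℝ) : Prop :=
  ∃ M : G.Subgraph, M.IsMatching ∧
    (∀ u ∈ M.verts, ∀ v ∈ M.verts, G.Reachable u v) ∧ b ≤ (M.verts.ncard : ℝ)

/-!
Let `m i = (α_i + ξ/20) k'` be the number of edges the colour-`i` matching needs and
`δ = ξ k'/2`; the at most `ξ⁷N²` missing edges are few compared with `δ²`. Suppose neither colour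
has such a connected matching, and call a vertex clean if it has at most `δ` non-neighbours on
the other side; `X` and `Y` are the clean vertices of the two sides. Almost all vertices are clean, two clean vertices
have a common neighbour in any set of more than `2δ` vertices, and any two sets of more than `δ`
vertices on opposite sides span an edge. The endpoints of a maximal matching inside one colour-`i`
component cover all its edges with fewer than `m i` vertices on each side, so a monochromatic
block of clean vertices has a side of size at most `m i + 2δ`. Applied to the two colour-`1`
blocks that a colour-`0` component cuts out, this bounds every colour-`0` component by
`m 1 + 2δ` on each side (`m 0` would not be enough). Hence every clean vertex of `X` sees more
than half of `Y` in colour `1`, all of `X` lies in one colour-`1` component, and the vertices left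
over by a maximal colour-`1` matching form a colour-`0` block with both sides larger than
`m 0 + 2δ`: a contradiction.
-/

open Finset Sum
open scoped Classical

variable {α β : Type*}

lemma card_le_card_sdiff_add_card_sdiff_add_card {γ : Type*} (X A t : Finset γ) :
    #X ≤ #(A \ t) + #((X \ A) \ t) + #t :=
  calc #X ≤ #(A \ t ∪ (X \ A) \ t ∪ t) := card_le_card fun x hx => by
        by_cases x ∈ A <;> by_cases x ∈ t <;> simp [*]
    _ ≤ _ := (card_union_le _ _).trans (Nat.add_le_add_right (card_union_le _ _) _)

lemma card_sdiff_le_card_sdiff_add_card_sdiff {γ : Type*} (A U t : Finset γ) :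
    #(A \ t) ≤ #(A \ U) + #(U \ t) :=
  (card_le_card fun x hx => by by_cases x ∈ U <;> simp_all).trans (card_union_le (A \ U) (U \ t))

lemma exists_mem_and_of_card_filter_not_le {γ : Type*} {T : Finset γ} {p q : γ → Prop} {δ : ℝ}
    (hp : (#{x ∈ T | ¬ p x} : ℝ) ≤ δ) (hq : (#{x ∈ T | ¬ q x} : ℝ) ≤ δ) (hT : 2 * δ < #T) :
    ∃ x ∈ T, p x ∧ q x := by
  by_contra! h
  have hsub : T ⊆ {x ∈ T | ¬ p x} ∪ {x ∈ T | ¬ q x} := fun x hx => by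
    by_cases hpx : p x <;> simp [hx, hpx, h x hx]
  have : (#T : ℝ) ≤ #{x ∈ T | ¬ p x} + #{x ∈ T | ¬ q x} := by
    exact_mod_cast (card_le_card hsub).trans (card_union_le _ _)
  linarith

lemma card_sub_sum_div_le_card_filter_le {ι : Type*} (s : Finset ι) (f : ι → ℕ) {δ : ℝ}
    (hδ : 0 < δ) : (#s : ℝ) - (∑ i ∈ s, f i : ℕ) / δ ≤ #{i ∈ s | (f i : ℝ) ≤ δ} := by
  have hsplit : (#{i ∈ s | (f i : ℝ) ≤ δ} : ℝ) + #{i ∈ s | ¬ (f i : ℝ) ≤ δ} = #s := by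
    exact_mod_cast card_filter_add_card_filter_not _
  have hbad : (#{i ∈ s | ¬ (f i : ℝ) ≤ δ} : ℝ) * δ ≤ (∑ i ∈ s, f i : ℕ) :=
    calc (#{i ∈ s | ¬ (f i : ℝ) ≤ δ} : ℝ) * δ = #{i ∈ s | ¬ (f i : ℝ) ≤ δ} • δ := by
          rw [nsmul_eq_mul]
      _ ≤ ∑ i ∈ {i ∈ s | ¬ (f i : ℝ) ≤ δ}, (f i : ℝ) :=
          card_nsmul_le_sum _ _ _ fun i hi => (not_le.1 (mem_filter.1 hi).2).le
      _ ≤ ∑ i ∈ s, (f i : ℝ) :=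
          sum_le_sum_of_subset_of_nonneg (filter_subset _ _) fun _ _ _ => Nat.cast_nonneg _
      _ = _ := by push_cast; rfl
  rw [← le_div_iff₀ hδ] at hbad
  linarith

lemma card_filter_prod_eq_sum_left [Fintype α] [Fintype β] (r : α → β → Prop) [DecidableRel r] :
    #{p : α × β | r p.1 p.2} = ∑ a, #{b | r a b} := by
  simp only [card_filter, Fintype.sum_prod_type]

lemma card_filter_prod_eq_sum_right [Fintype α] [Fintype β] (r : α → β → Prop) [DecidableRel r] :
    #{p : α × β | r p.1 p.2} = ∑ b, #{a | r a b} := by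
  simp only [card_filter, Fintype.sum_prod_type]
  exact sum_comm

lemma hasConnMatching_of_nonpos {V : Type*} (H : SimpleGraph V) {b : ℝ} (hb : b ≤ 0) :
    HasConnMatching H b :=
  ⟨⊥, fun _ hv => hv.elim, fun _ hu => hu.elim, by simpa using hb⟩

def IsPairMatching (R : α → β → Prop) (P : Finset (α × β)) : Prop :=
  (∀ p ∈ P, R p.1 p.2) ∧ Set.InjOn Prod.fst (P : Set (α × β)) ∧
    Set.InjOn Prod.snd (P : Set (α × β))

lemma exists_maximal_isPairMatching (R : α → β → Prop) (S : Finset α) (T : Finset β) :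
    ∃ P ⊆ S ×ˢ T, IsPairMatching R P ∧
      ∀ a ∈ S \ P.image Prod.fst, ∀ b ∈ T \ P.image Prod.snd, ¬ R a b := by
  obtain ⟨P, hP, hmax⟩ := ((S ×ˢ T).powerset.filter (IsPairMatching R)).exists_max_image card
    ⟨∅, by simp [IsPairMatching]⟩
  rw [mem_filter, mem_powerset] at hP
  refine ⟨P, hP.1, hP.2, fun a ha b hb hab => ?_⟩
  rw [mem_sdiff] at ha hb
  have hab' : (a, b) ∉ P := fun h => ha.2 (mem_image_of_mem _ h)
  have hins : IsPairMatching R (insert (a, b) P) := by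
    obtain ⟨hR, hfst, hsnd⟩ := hP.2
    refine ⟨forall_mem_insert _ _ _ |>.2 ⟨hab, hR⟩, ?_, ?_⟩ <;>
      rw [coe_insert, Set.injOn_insert (by exact_mod_cast hab')]
    · exact ⟨hfst, by simpa using ha.2⟩
    · exact ⟨hsnd, by simpa using hb.2⟩
  have := hmax _ (mem_filter.2 ⟨mem_powerset.2 (insert_subset (mem_product.2 ⟨ha.1, hb.1⟩) hP.1),
    hins⟩)
  rw [card_insert_of_notMem hab'] at this
  omega

namespace IsPairMatching

variable {R R' : α → β → Prop} {P : Finset (α × β)}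

lemma mono (hP : IsPairMatching R P) (h : ∀ a b, R a b → R' a b) : IsPairMatching R' P :=
  ⟨fun p hp => h _ _ (hP.1 p hp), hP.2⟩

lemma card_image_fst (hP : IsPairMatching R P) : #(P.image Prod.fst) = #P :=
  card_image_of_injOn hP.2.1

lemma card_image_snd (hP : IsPairMatching R P) : #(P.image Prod.snd) = #P :=
  card_image_of_injOn hP.2.2

variable {H : SimpleGraph (α ⊕ β)}

def toSubgraph (hP : IsPairMatching (fun a b => H.Adj (inl a) (inr b)) P) : H.Subgraph where
  verts := ↑((P.image Prod.fst).disjSum (P.image Prod.snd))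
  Adj u v := ∃ p ∈ P, u = inl p.1 ∧ v = inr p.2 ∨ u = inr p.2 ∧ v = inl p.1
  adj_sub := by
    rintro u v ⟨p, hp, ⟨rfl, rfl⟩ | ⟨rfl, rfl⟩⟩
    exacts [hP.1 p hp, (hP.1 p hp).symm]
  edge_vert := by
    rintro u v ⟨p, hp, ⟨rfl, -⟩ | ⟨rfl, -⟩⟩
    exacts [mem_coe.2 (inl_mem_disjSum.2 (mem_image_of_mem _ hp)),
      mem_coe.2 (inr_mem_disjSum.2 (mem_image_of_mem _ hp))]
  symm := ⟨fun _ _ ⟨p, hp, h⟩ => ⟨p, hp, h.symm.imp And.symm And.symm⟩⟩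

lemma isMatching_toSubgraph (hP : IsPairMatching (fun a b => H.Adj (inl a) (inr b)) P) :
    hP.toSubgraph.IsMatching := by
  rintro (a | b) hu
  · obtain ⟨p, hp, rfl⟩ := mem_image.1 (inl_mem_disjSum.1 (mem_coe.1 hu))
    refine ⟨inr p.2, ⟨p, hp, .inl ⟨rfl, rfl⟩⟩, ?_⟩
    rintro w ⟨q, hq, ⟨hpq, rfl⟩ | ⟨hpq, -⟩⟩
    · rw [hP.2.1 hq hp (inl_injective hpq).symm]
    · cases hpq
  · obtain ⟨p, hp, rfl⟩ := mem_image.1 (inr_mem_disjSum.1 (mem_coe.1 hu))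
    refine ⟨inl p.1, ⟨p, hp, .inr ⟨rfl, rfl⟩⟩, ?_⟩
    rintro w ⟨q, hq, ⟨hpq, -⟩ | ⟨hpq, rfl⟩⟩
    · cases hpq
    · rw [hP.2.2 hq hp (inr_injective hpq).symm]

lemma ncard_verts_toSubgraph (hP : IsPairMatching (fun a b => H.Adj (inl a) (inr b)) P) :
    hP.toSubgraph.verts.ncard = 2 * #P := by
  rw [toSubgraph, Set.ncard_coe_finset, card_disjSum, hP.card_image_fst, hP.card_image_snd]
  ring

lemma hasConnMatching (hP : IsPairMatching (fun a b => H.Adj (inl a) (inr b)) P) {v : α ⊕ β}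
    (hv : ∀ p ∈ P, H.Reachable (inl p.1) v) : HasConnMatching H (2 * #P) := by
  have hreach : ∀ u ∈ hP.toSubgraph.verts, H.Reachable u v := by
    rintro (a | b) hu
    · obtain ⟨p, hp, rfl⟩ := mem_image.1 (inl_mem_disjSum.1 (mem_coe.1 hu))
      exact hv p hp
    · obtain ⟨p, hp, rfl⟩ := mem_image.1 (inr_mem_disjSum.1 (mem_coe.1 hu))
      exact (hP.1 p hp).symm.reachable.trans (hv p hp)
  refine ⟨hP.toSubgraph, hP.isMatching_toSubgraph,
    fun u hu w hw => (hreach u hu).trans (hreach w hw).symm, ?_⟩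
  rw [hP.ncard_verts_toSubgraph]
  push_cast
  rfl

lemma card_lt (hP : IsPairMatching (fun a b => H.Adj (inl a) (inr b)) P) {v : α ⊕ β}
    (hv : ∀ p ∈ P, H.Reachable (inl p.1) v) {m : ℝ} (hm : ¬ HasConnMatching H (2 * m)) :
    (#P : ℝ) < m := by
  by_contra! hle
  obtain ⟨M, hM, hMreach, hMcard⟩ := hP.hasConnMatching hv
  exact hm ⟨M, hM, hMreach, by linarith⟩

end IsPairMatching

lemma ncard_edgeSet_eq_card_adj [Fintype α] [Fintype β] {G : SimpleGraph (α ⊕ β)}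
    (hG : G ≤ completeBipartiteGraph α β) :
    G.edgeSet.ncard = #{p : α × β | G.Adj (inl p.1) (inr p.2)} := by
  have himage : G.edgeSet = (fun p : α × β => s(inl p.1, inr p.2)) ''
      ↑({p : α × β | G.Adj (inl p.1) (inr p.2)} : Finset (α × β)) := by
    ext e
    induction e using Sym2.ind with
    | _ u v =>
      simp only [SimpleGraph.mem_edgeSet, coe_filter, mem_univ, true_and, Set.mem_image,
        Set.mem_ofPred_eq]
      constructor
      · intro huv
        rcases u with a | a <;> rcases v with b | b
        · simpa using hG huv
        · exact ⟨(a, b), huv, rfl⟩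
        · exact ⟨(b, a), huv.symm, Sym2.eq_swap⟩
        · simpa using hG huv
      · rintro ⟨p, hp, hpe⟩
        rwa [← SimpleGraph.mem_edgeSet, ← hpe]
  rw [himage, Set.ncard_image_of_injective _ fun p q hpq => by simpa [Prod.ext_iff] using hpq,
    Set.ncard_coe_finset]

lemma card_nonadj_eq [Fintype α] [Fintype β] {G : SimpleGraph (α ⊕ β)}
    (hG : G ≤ completeBipartiteGraph α β) :
    (#{p : α × β | ¬ G.Adj (inl p.1) (inr p.2)} : ℝ) =
      Fintype.card α * Fintype.card β - G.edgeSet.ncard := by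
  have := card_filter_add_card_filter_not (s := univ) fun p : α × β => G.Adj (inl p.1) (inr p.2)
  rw [card_univ, Fintype.card_prod, ← ncard_edgeSet_eq_card_adj hG] at this
  rw [eq_sub_iff_add_eq']
  exact_mod_cast this

def IsMonoBlock (G : SimpleGraph (α ⊕ β)) (χ : Sym2 (α ⊕ β) → Fin 2) (i : Fin 2)
    (S : Finset α) (T : Finset β) : Prop :=
  ∀ a ∈ S, ∀ b ∈ T, G.Adj (inl a) (inr b) → χ s(inl a, inr b) = i

structure Counterexample (G : SimpleGraph (α ⊕ β)) (χ : Sym2 (α ⊕ β) → Fin 2)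
    (X : Finset α) (Y : Finset β) (δ : ℝ) (m : Fin 2 → ℝ) : Prop where
  card_nonadj_left : ∀ a ∈ X, (#{b ∈ Y | ¬ G.Adj (inl a) (inr b)} : ℝ) ≤ δ
  card_nonadj_right : ∀ b ∈ Y, (#{a ∈ X | ¬ G.Adj (inl a) (inr b)} : ℝ) ≤ δ
  sparse : ∀ S ⊆ X, ∀ T ⊆ Y, (∀ a ∈ S, ∀ b ∈ T, ¬ G.Adj (inl a) (inr b)) →
    (#S : ℝ) ≤ δ ∨ (#T : ℝ) ≤ δ
  m_one_le : m 1 ≤ m 0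
  card_left : m 0 + m 1 + 8 * δ < #X
  card_right : m 0 + m 1 + 8 * δ < #Y
  not_hasConnMatching : ∀ i, ¬ HasConnMatching (colorSubgraph G χ i) (2 * m i)

namespace Counterexample

variable {G : SimpleGraph (α ⊕ β)} {χ : Sym2 (α ⊕ β) → Fin 2} {X : Finset α} {Y : Finset β}
  {δ : ℝ} {m : Fin 2 → ℝ}

lemma delta_nonneg (h : Counterexample G χ X Y δ m) : 0 ≤ δ := by
  simpa using h.sparse ∅ (empty_subset _) ∅ (empty_subset _) (by simp)

lemma m_pos (h : Counterexample G χ X Y δ m) (i : Fin 2) : 0 < m i := by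
  by_contra! hm
  exact h.not_hasConnMatching i (hasConnMatching_of_nonpos _ (by linarith))

lemma exists_common_neighbor_right (h : Counterexample G χ X Y δ m) {a a' : α} (ha : a ∈ X)
    (ha' : a' ∈ X) {T : Finset β} (hT : T ⊆ Y) (hTcard : 2 * δ < #T) :
    ∃ b ∈ T, G.Adj (inl a) (inr b) ∧ G.Adj (inl a') (inr b) := by
  have hle (x) (hx : x ∈ X) : (#{b ∈ T | ¬ G.Adj (inl x) (inr b)} : ℝ) ≤ δ :=
    le_trans (by exact_mod_cast card_le_card (filter_subset_filter _ hT)) (h.card_nonadj_left x hx)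
  exact exists_mem_and_of_card_filter_not_le (hle a ha) (hle a' ha') hTcard

lemma exists_common_neighbor_left (h : Counterexample G χ X Y δ m) {b b' : β} (hb : b ∈ Y)
    (hb' : b' ∈ Y) {S : Finset α} (hS : S ⊆ X) (hScard : 2 * δ < #S) :
    ∃ a ∈ S, G.Adj (inl a) (inr b) ∧ G.Adj (inl a) (inr b') := by
  have hle (y) (hy : y ∈ Y) : (#{a ∈ S | ¬ G.Adj (inl a) (inr y)} : ℝ) ≤ δ :=
    le_trans (by exact_mod_cast card_le_card (filter_subset_filter _ hS)) (h.card_nonadj_right y hy)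
  exact exists_mem_and_of_card_filter_not_le (hle b hb) (hle b' hb') hScard

lemma reachable_of_isMonoBlock (h : Counterexample G χ X Y δ m) {i : Fin 2} {S : Finset α}
    {T : Finset β} (hS : S ⊆ X) (hT : T ⊆ Y) (hST : IsMonoBlock G χ i S T)
    (hScard : 2 * δ < #S) (hTcard : 2 * δ < #T) {a : α} {b : β} (ha : a ∈ S) (hb : b ∈ T) :
    (colorSubgraph G χ i).Reachable (inl a) (inr b) := by
  have adj {a b} (ha : a ∈ S) (hb : b ∈ T) (hab : G.Adj (inl a) (inr b)) :
      (colorSubgraph G χ i).Adj (inl a) (inr b) := ⟨hab, hST a ha b hb hab⟩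
  obtain ⟨a', ha', ha'b, -⟩ := h.exists_common_neighbor_left (hT hb) (hT hb) hS hScard
  obtain ⟨b', hb', hab', ha'b'⟩ := h.exists_common_neighbor_right (hS ha) (hS ha') hT hTcard
  exact (adj ha hb' hab').reachable.trans
    ((adj ha' hb' ha'b').symm.reachable.trans (adj ha' hb ha'b).reachable)

lemma exists_small_cover (h : Counterexample G χ X Y δ m) (i : Fin 2) (v : α ⊕ β) :
    ∃ (t₁ : Finset α) (t₂ : Finset β), (#t₁ : ℝ) < m i ∧ (#t₂ : ℝ) < m i ∧
      ∀ a ∈ X, ∀ b ∈ Y, (colorSubgraph G χ i).Adj (inl a) (inr b) →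
        (colorSubgraph G χ i).Reachable (inl a) v → a ∈ t₁ ∨ b ∈ t₂ := by
  obtain ⟨P, -, hP, hmax⟩ := exists_maximal_isPairMatching (fun a b =>
    (colorSubgraph G χ i).Adj (inl a) (inr b) ∧ (colorSubgraph G χ i).Reachable (inl a) v) X Y
  have hPm : (#P : ℝ) < m i :=
    (hP.mono fun _ _ => And.left).card_lt (fun p hp => (hP.1 p hp).2) (h.not_hasConnMatching i)
  refine ⟨P.image Prod.fst, P.image Prod.snd, ?_, ?_, fun a ha b hb hab hav => ?_⟩
  · exact lt_of_le_of_lt (by exact_mod_cast card_image_le) hPm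
  · exact lt_of_le_of_lt (by exact_mod_cast card_image_le) hPm
  · by_contra! hnot
    exact hmax a (mem_sdiff.2 ⟨ha, hnot.1⟩) b (mem_sdiff.2 ⟨hb, hnot.2⟩) ⟨hab, hav⟩

lemma sparse_sdiff_of_cover (h : Counterexample G χ X Y δ m) {i : Fin 2} {v : α ⊕ β}
    {t₁ : Finset α} {t₂ : Finset β}
    (hcover : ∀ a ∈ X, ∀ b ∈ Y, (colorSubgraph G χ i).Adj (inl a) (inr b) →
      (colorSubgraph G χ i).Reachable (inl a) v → a ∈ t₁ ∨ b ∈ t₂)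
    {S : Finset α} {T : Finset β} (hS : S ⊆ X) (hT : T ⊆ Y) (hST : IsMonoBlock G χ i S T)
    (hSv : ∀ a ∈ S, ∀ b ∈ T, G.Adj (inl a) (inr b) → (colorSubgraph G χ i).Reachable (inl a) v) :
    (#(S \ t₁) : ℝ) ≤ δ ∨ (#(T \ t₂) : ℝ) ≤ δ :=
  h.sparse _ (sdiff_subset.trans hS) _ (sdiff_subset.trans hT) fun a ha b hb hab => by
    rw [mem_sdiff] at ha hb
    exact (hcover a (hS ha.1) b (hT hb.1) ⟨hab, hST a ha.1 b hb.1 hab⟩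
      (hSv a ha.1 b hb.1 hab)).elim ha.2 hb.2

lemma exists_isMonoBlock_sdiff (h : Counterexample G χ X Y δ m) {i j : Fin 2} (hij : j ≠ i)
    {v : α ⊕ β} {S : Finset α} {T : Finset β} (hS : S ⊆ X) (hT : T ⊆ Y)
    (hSv : ∀ a ∈ S, (colorSubgraph G χ i).Reachable (inl a) v) :
    ∃ U ⊆ S, ∃ W ⊆ T, (#S : ℝ) < #U + m i ∧ (#T : ℝ) < #W + m i ∧ IsMonoBlock G χ j U W := by
  obtain ⟨t₁, t₂, ht₁, ht₂, hcover⟩ := h.exists_small_cover i v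
  refine ⟨S \ t₁, sdiff_subset, T \ t₂, sdiff_subset, ?_, ?_, fun a ha b hb hab => ?_⟩
  · have : (#S : ℝ) ≤ #(S \ t₁) + #t₁ := by exact_mod_cast card_le_card_sdiff_add_card
    linarith
  · have : (#T : ℝ) ≤ #(T \ t₂) + #t₂ := by exact_mod_cast card_le_card_sdiff_add_card
    linarith
  · rw [mem_sdiff] at ha hb
    by_contra hj
    have hi : χ s(inl a, inr b) = i := by omega
    exact (hcover a (hS ha.1) b (hT hb.1) ⟨hab, hi⟩ (hSv a ha.1)).elim ha.2 hb.2

lemma isMonoBlock_card_le (h : Counterexample G χ X Y δ m) {i : Fin 2} {S : Finset α}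
    {T : Finset β} (hS : S ⊆ X) (hT : T ⊆ Y) (hST : IsMonoBlock G χ i S T) :
    (#S : ℝ) ≤ m i + 2 * δ ∨ (#T : ℝ) ≤ m i + 2 * δ := by
  have := h.m_pos i
  by_cases hScard : (#S : ℝ) ≤ 2 * δ
  · left; linarith
  by_cases hTcard : (#T : ℝ) ≤ 2 * δ
  · right; linarith
  rw [not_le] at hScard hTcard
  obtain ⟨b₀, hb₀⟩ : T.Nonempty :=
    card_pos.1 (by exact_mod_cast (by linarith [h.delta_nonneg] : (0 : ℝ) < #T))
  obtain ⟨t₁, t₂, ht₁, ht₂, hcover⟩ := h.exists_small_cover i (inr b₀)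
  have hS' : (#S : ℝ) ≤ #(S \ t₁) + #t₁ := by exact_mod_cast card_le_card_sdiff_add_card
  have hT' : (#T : ℝ) ≤ #(T \ t₂) + #t₂ := by exact_mod_cast card_le_card_sdiff_add_card
  rcases h.sparse_sdiff_of_cover hcover hS hT hST
    (fun a ha _ _ _ => h.reachable_of_isMonoBlock hS hT hST hScard hTcard ha hb₀) with h' | h'
  · left; linarith
  · right; linarith

lemma exists_cover_of_isMonoBlock_compl (h : Counterexample G χ X Y δ m) {A U : Finset α}
    {C W : Finset β} (hA : A ⊆ X) (hC : C ⊆ Y) (hUA : U ⊆ A) (hWC : W ⊆ C)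
    (hUW : IsMonoBlock G χ 1 U W) (hAD : IsMonoBlock G χ 1 A (Y \ C))
    (hBC : IsMonoBlock G χ 1 (X \ A) C) (hU : 2 * δ < #U) (hW : 2 * δ < #W) :
    ∃ (t₁ : Finset α) (t₂ : Finset β), (#t₁ : ℝ) < m 1 ∧ (#t₂ : ℝ) < m 1 ∧
      ((#(U \ t₁) : ℝ) ≤ δ ∨ (#(W \ t₂) : ℝ) ≤ δ) ∧
      ((#(A \ t₁) : ℝ) ≤ δ ∨ (#((Y \ C) \ t₂) : ℝ) ≤ δ) ∧
      ((#((X \ A) \ t₁) : ℝ) ≤ δ ∨ (#(C \ t₂) : ℝ) ≤ δ) := by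
  have := h.delta_nonneg
  obtain ⟨a₀, ha₀⟩ : U.Nonempty := card_pos.1 (by exact_mod_cast (by linarith : (0 : ℝ) < #U))
  obtain ⟨b₀, hb₀⟩ : W.Nonempty := card_pos.1 (by exact_mod_cast (by linarith : (0 : ℝ) < #W))
  have hUX := hUA.trans hA
  have hWY := hWC.trans hC
  have hreachU {a} (ha : a ∈ U) : (colorSubgraph G χ 1).Reachable (inl a) (inr b₀) :=
    h.reachable_of_isMonoBlock hUX hWY hUW hU hW ha hb₀
  have hreachW {b} (hb : b ∈ W) : (colorSubgraph G χ 1).Reachable (inr b) (inr b₀) :=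
    (h.reachable_of_isMonoBlock hUX hWY hUW hU hW ha₀ hb).symm.trans (hreachU ha₀)
  have hreachD {d} (hd : d ∈ Y \ C) : (colorSubgraph G χ 1).Reachable (inr d) (inr b₀) := by
    obtain ⟨a, ha, had, -⟩ :=
      h.exists_common_neighbor_left (sdiff_subset hd) (sdiff_subset hd) hUX hU
    exact (show (colorSubgraph G χ 1).Adj (inl a) (inr d) from
      ⟨had, hAD a (hUA ha) d hd had⟩).symm.reachable.trans (hreachU ha)
  have hreachB {x} (hx : x ∈ X \ A) : (colorSubgraph G χ 1).Reachable (inl x) (inr b₀) := by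
    obtain ⟨b, hb, hxb, -⟩ :=
      h.exists_common_neighbor_right (sdiff_subset hx) (sdiff_subset hx) hWY hW
    exact (show (colorSubgraph G χ 1).Adj (inl x) (inr b) from
      ⟨hxb, hBC x hx b (hWC hb) hxb⟩).reachable.trans (hreachW hb)
  obtain ⟨t₁, t₂, ht₁, ht₂, hcover⟩ := h.exists_small_cover 1 (inr b₀)
  refine ⟨t₁, t₂, ht₁, ht₂, h.sparse_sdiff_of_cover hcover hUX hWY hUW fun a ha _ _ _ =>
    hreachU ha, h.sparse_sdiff_of_cover hcover hA sdiff_subset hAD fun a ha d hd had =>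
    (show (colorSubgraph G χ 1).Adj (inl a) (inr d) from ⟨had, hAD a ha d hd had⟩).reachable.trans
      (hreachD hd), h.sparse_sdiff_of_cover hcover sdiff_subset hC hBC fun x hx _ _ _ =>
    hreachB hx⟩

lemma false_of_isMonoBlock_compl (h : Counterexample G χ X Y δ m) {v : α ⊕ β} {A : Finset α}
    {C : Finset β} (hA : A ⊆ X) (hC : C ⊆ Y)
    (hAv : ∀ a ∈ A, (colorSubgraph G χ 0).Reachable (inl a) v)
    (hAD : IsMonoBlock G χ 1 A (Y \ C)) (hBC : IsMonoBlock G χ 1 (X \ A) C)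
    (hB : (#(X \ A) : ℝ) ≤ m 1 + 2 * δ) (hD : (#(Y \ C) : ℝ) ≤ m 1 + 2 * δ) : False := by
  obtain ⟨U, hUA, W, hWC, hAU, hCW, hUW⟩ :=
    h.exists_isMonoBlock_sdiff (by decide : (1 : Fin 2) ≠ 0) hA hC hAv
  have := h.delta_nonneg; have := h.m_one_le; have := h.card_left; have := h.card_right
  have hXA : (#X : ℝ) = #A + #(X \ A) := by
    rw [card_sdiff_of_subset hA, Nat.cast_sub (card_le_card hA)]; ring
  have hYC : (#Y : ℝ) = #C + #(Y \ C) := by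
    rw [card_sdiff_of_subset hC, Nat.cast_sub (card_le_card hC)]; ring
  obtain ⟨t₁, t₂, ht₁, ht₂, hUW', hAD', hBC'⟩ :=
    h.exists_cover_of_isMonoBlock_compl hA hC hUA hWC hUW hAD hBC (by linarith) (by linarith)
  have hX : (#X : ℝ) ≤ #(A \ t₁) + #((X \ A) \ t₁) + #t₁ := by
    exact_mod_cast card_le_card_sdiff_add_card_sdiff_add_card X A t₁
  have hY : (#Y : ℝ) ≤ #(C \ t₂) + #((Y \ C) \ t₂) + #t₂ := by
    exact_mod_cast card_le_card_sdiff_add_card_sdiff_add_card Y C t₂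
  have hA' : (#(A \ t₁) : ℝ) ≤ #(A \ U) + #(U \ t₁) := by
    exact_mod_cast card_sdiff_le_card_sdiff_add_card_sdiff A U t₁
  have hC' : (#(C \ t₂) : ℝ) ≤ #(C \ W) + #(W \ t₂) := by
    exact_mod_cast card_sdiff_le_card_sdiff_add_card_sdiff C W t₂
  have hAU' : (#(A \ U) : ℝ) = #A - #U := by
    rw [card_sdiff_of_subset hUA, Nat.cast_sub (card_le_card hUA)]
  have hCW' : (#(C \ W) : ℝ) = #C - #W := by
    rw [card_sdiff_of_subset hWC, Nat.cast_sub (card_le_card hWC)]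
  have hB' : (#((X \ A) \ t₁) : ℝ) ≤ #(X \ A) := by exact_mod_cast card_le_card sdiff_subset
  have hD' : (#((Y \ C) \ t₂) : ℝ) ≤ #(Y \ C) := by exact_mod_cast card_le_card sdiff_subset
  rcases hUW' with h₁ | h₁ <;> rcases hAD' with h₂ | h₂ <;> rcases hBC' with h₃ | h₃ <;> linarith

lemma card_reachable_le (h : Counterexample G χ X Y δ m) (v : α ⊕ β) :
    (#{a ∈ X | (colorSubgraph G χ 0).Reachable (inl a) v} : ℝ) ≤ m 1 + 2 * δ ∧
      (#{b ∈ Y | (colorSubgraph G χ 0).Reachable (inr b) v} : ℝ) ≤ m 1 + 2 * δ := by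
  set A := {a ∈ X | (colorSubgraph G χ 0).Reachable (inl a) v}
  set C := {b ∈ Y | (colorSubgraph G χ 0).Reachable (inr b) v}
  have hAD : IsMonoBlock G χ 1 A (Y \ C) := fun a ha d hd had => by
    rw [mem_sdiff, mem_filter] at hd
    rw [mem_filter] at ha
    by_contra hne
    exact hd.2 ⟨hd.1, (show (colorSubgraph G χ 0).Adj (inl a) (inr d) from
      ⟨had, by omega⟩).symm.reachable.trans ha.2⟩
  have hBC : IsMonoBlock G χ 1 (X \ A) C := fun x hx b hb hxb => by
    rw [mem_sdiff, mem_filter] at hx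
    rw [mem_filter] at hb
    by_contra hne
    exact hx.2 ⟨hx.1, (show (colorSubgraph G χ 0).Adj (inl x) (inr b) from
      ⟨hxb, by omega⟩).reachable.trans hb.2⟩
  have := h.delta_nonneg; have := h.m_one_le; have := h.card_left; have := h.card_right
  have hXA : (#X : ℝ) = #A + #(X \ A) := by
    rw [card_sdiff_of_subset (filter_subset _ _), Nat.cast_sub (card_le_card (filter_subset _ _))]
    ring
  have hYC : (#Y : ℝ) = #C + #(Y \ C) := by
    rw [card_sdiff_of_subset (filter_subset _ _), Nat.cast_sub (card_le_card (filter_subset _ _))]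
    ring
  rcases h.isMonoBlock_card_le (filter_subset _ _) sdiff_subset hAD with hA | hD <;>
    rcases h.isMonoBlock_card_le sdiff_subset (filter_subset _ _) hBC with hB | hC
  · linarith
  · exact ⟨hA, hC⟩
  · exact (h.false_of_isMonoBlock_compl (filter_subset _ _) (filter_subset _ _)
      (fun a ha => (mem_filter.1 ha).2) hAD hBC hB hD).elim
  · linarith

lemma reachable_colorSubgraph_one (h : Counterexample G χ X Y δ m) {u u' : α} (hu : u ∈ X)
    (hu' : u' ∈ X) :
    (colorSubgraph G χ 1).Reachable (inl u) (inl u') := by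
  have hN {x} (hx : x ∈ X) :
      (#Y : ℝ) ≤ #{b ∈ Y | (colorSubgraph G χ 1).Adj (inl x) (inr b)} + m 1 + 3 * δ := by
    have hsub : Y ⊆ {b ∈ Y | ¬ G.Adj (inl x) (inr b)} ∪
        {b ∈ Y | (colorSubgraph G χ 0).Reachable (inr b) (inl x)} ∪
        {b ∈ Y | (colorSubgraph G χ 1).Adj (inl x) (inr b)} := fun b hb => by
      by_cases hxb : G.Adj (inl x) (inr b)
      · by_cases hc : χ s(inl x, inr b) = 0
        · exact mem_union_left _ (mem_union_right _ (mem_filter.2 ⟨hb,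
            (show (colorSubgraph G χ 0).Adj (inl x) (inr b) from ⟨hxb, hc⟩).symm.reachable⟩))
        · exact mem_union_right _ (mem_filter.2 ⟨hb, hxb, by omega⟩)
      · exact mem_union_left _ (mem_union_left _ (mem_filter.2 ⟨hb, hxb⟩))
    have : (#Y : ℝ) ≤ #{b ∈ Y | ¬ G.Adj (inl x) (inr b)} +
        #{b ∈ Y | (colorSubgraph G χ 0).Reachable (inr b) (inl x)} +
        #{b ∈ Y | (colorSubgraph G χ 1).Adj (inl x) (inr b)} := by
      exact_mod_cast (card_le_card hsub).trans
        ((card_union_le _ _).trans (Nat.add_le_add_right (card_union_le _ _) _))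
    linarith [h.card_nonadj_left x hx, (h.card_reachable_le (inl x)).2]
  have := h.delta_nonneg; have := h.m_one_le; have := h.card_right
  obtain ⟨b, hb⟩ := inter_nonempty_of_card_lt_card_add_card (filter_subset _ Y)
    (filter_subset _ Y) (by exact_mod_cast (by linarith [hN hu, hN hu'] : (#Y : ℝ) <
      #{b ∈ Y | (colorSubgraph G χ 1).Adj (inl u) (inr b)} +
        #{b ∈ Y | (colorSubgraph G χ 1).Adj (inl u') (inr b)}))
  rw [mem_inter, mem_filter, mem_filter] at hb
  exact hb.1.2.reachable.trans hb.2.2.symm.reachable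

theorem false (h : Counterexample G χ X Y δ m) : False := by
  have := h.delta_nonneg; have := h.m_pos 1; have := h.m_one_le
  have := h.card_left; have := h.card_right
  obtain ⟨u₀, hu₀⟩ : X.Nonempty := card_pos.1 (by exact_mod_cast (by linarith : (0 : ℝ) < #X))
  obtain ⟨U, hU, W, hW, hXU, hYW, hUW⟩ := h.exists_isMonoBlock_sdiff (by decide : (0 : Fin 2) ≠ 1)
    subset_rfl subset_rfl fun a ha => h.reachable_colorSubgraph_one ha hu₀
  rcases h.isMonoBlock_card_le hU hW hUW with h₁ | h₁ <;> linarith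

end Counterexample

lemma Counterexample.of_card_nonadj_le [Fintype α] [Fintype β] {G : SimpleGraph (α ⊕ β)}
    {χ : Sym2 (α ⊕ β) → Fin 2} {δ c : ℝ} {m : Fin 2 → ℝ} (hδ : 0 < δ)
    (hM : (#{p : α × β | ¬ G.Adj (inl p.1) (inr p.2)} : ℝ) ≤ c) (hc : c < δ ^ 2)
    (hα : m 0 + m 1 + 8 * δ + c / δ < Fintype.card α)
    (hβ : m 0 + m 1 + 8 * δ + c / δ < Fintype.card β) (hm : m 1 ≤ m 0)
    (hno : ∀ i, ¬ HasConnMatching (colorSubgraph G χ i) (2 * m i)) :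
    Counterexample G χ {a | (#{b | ¬ G.Adj (inl a) (inr b)} : ℝ) ≤ δ}
      {b | (#{a | ¬ G.Adj (inl a) (inr b)} : ℝ) ≤ δ} δ m where
  card_nonadj_left a ha := le_trans
    (by exact_mod_cast card_le_card (filter_subset_filter _ (subset_univ _))) (mem_filter.1 ha).2
  card_nonadj_right b hb := le_trans
    (by exact_mod_cast card_le_card (filter_subset_filter _ (subset_univ _))) (mem_filter.1 hb).2
  sparse S _ T _ hST := by
    by_contra! h
    have hprod : #S * #T ≤ #{p : α × β | ¬ G.Adj (inl p.1) (inr p.2)} := by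
      rw [← card_product]
      exact card_le_card fun p hp =>
        mem_filter.2 ⟨mem_univ _, hST _ (mem_product.1 hp).1 _ (mem_product.1 hp).2⟩
    have : (#S : ℝ) * #T ≤ c := le_trans (by exact_mod_cast hprod) hM
    nlinarith
  m_one_le := hm
  card_left := by
    have := card_sub_sum_div_le_card_filter_le univ
      (fun a => #{b | ¬ G.Adj (inl a) (inr b)}) hδ
    rw [← card_filter_prod_eq_sum_left (fun a b => ¬ G.Adj (inl a) (inr b)), card_univ] at this
    linarith [div_le_div_of_nonneg_right hM hδ.le]
  card_right := by
    have := card_sub_sum_div_le_card_filter_le univ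
      (fun b => #{a | ¬ G.Adj (inl a) (inr b)}) hδ
    rw [← card_filter_prod_eq_sum_right (fun a b => ¬ G.Adj (inl a) (inr b)), card_univ] at this
    linarith [div_le_div_of_nonneg_right hM hδ.le]
  not_hasConnMatching := hno

/-- For `0 < α₂ ≤ α₁ ≤ 1` and `0 < ξ < 10⁻³` there exists `N₀` such that: for every
bipartite graph `G` with parts of size `N = (α₁ + α₂ + 8ξ)k' ≥ N₀` and at least
`(1 − ξ⁷)N²` edges, every 2-edge-coloring of `G` has a color `i` such that some
component of the color-`i` subgraph contains a matching saturating at least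
`(2α_i + 0.1ξ)k'` vertices. -/
theorem connected_matching_two_colors (α₁ α₂ : ℝ) (hα₂ : 0 < α₂) (hα₂₁ : α₂ ≤ α₁)
    (hα₁ : α₁ ≤ 1) (ξ : ℝ) (hξ0 : 0 < ξ) (hξ1 : ξ < 1 / 1000) :
    ∃ N₀ : ℕ, ∀ (k' : ℝ) (N : ℕ), (N : ℝ) = (α₁ + α₂ + 8 * ξ) * k' → N₀ ≤ N →
      ∀ G : SimpleGraph (Fin N ⊕ Fin N), G ≤ completeBipartiteGraph (Fin N) (Fin N) →
      (1 - ξ ^ 7) * (N : ℝ) ^ 2 ≤ (G.edgeSet.ncard : ℝ) →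
      ∀ χ : Sym2 (Fin N ⊕ Fin N) → Fin 2,
        ∃ i : Fin 2, HasConnMatching (colorSubgraph G χ i)
          ((2 * (if i = 0 then α₁ else α₂) + 0.1 * ξ) * k') := by
  refine ⟨0, fun k' N hN _ G hG hE χ => ?_⟩
  by_contra! hno
  set m : Fin 2 → ℝ := fun i => ((if i = 0 then α₁ else α₂) + ξ / 20) * k' with hm
  have hno' (i : Fin 2) : ¬ HasConnMatching (colorSubgraph G χ i) (2 * m i) := by
    convert hno i using 2
    ring
  have hk' : 0 < k' := by
    by_contra! hk'
    exact hno' 1 (hasConnMatching_of_nonpos _ (by simp only [hm]; norm_num; nlinarith))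
  have hNk : (N : ℝ) ≤ 3 * k' := by rw [hN]; nlinarith
  have hM : (#{p : Fin N × Fin N | ¬ G.Adj (inl p.1) (inr p.2)} : ℝ) ≤ ξ ^ 2 * k' ^ 2 / 8 := by
    rw [card_nonadj_eq hG, Fintype.card_fin]
    calc _ ≤ ξ ^ 2 * ξ ^ 5 * N ^ 2 := by linarith
      _ ≤ ξ ^ 2 * (1 / 1000) ^ 5 * (3 * k') ^ 2 := by gcongr
      _ ≤ _ := by nlinarith [sq_nonneg (ξ * k')]
  have hcard : m 0 + m 1 + 8 * (ξ * k' / 2) + ξ ^ 2 * k' ^ 2 / 8 / (ξ * k' / 2) <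
      Fintype.card (Fin N) := by
    rw [show ξ ^ 2 * k' ^ 2 / 8 / (ξ * k' / 2) = ξ * k' / 4 by field_simp; ring,
      Fintype.card_fin, hN]
    simp only [hm]
    norm_num
    nlinarith [mul_pos hξ0 hk']
  exact (Counterexample.of_card_nonadj_le (by positivity) hM (by nlinarith [mul_pos hξ0 hk'])
    hcard hcard (by simp only [hm]; norm_num; nlinarith) hno').false
end

section
/- For every ξ with 0 < ξ ≤ 10⁻³ there exists N₀ such that the following holds for every bipartite graph G with bipartition {V₁, V₂} satisfying |V₁| = |V₂| = (2 + 8ξ)k′ ≥ N₀ and minimum degree δ(G) ≥ (7/8 + ξ)(2 + 8ξ)k′. For every 2-edge-coloring of G there exists a monochromatic connected component (a connected component of the spanning subgraph formed by the edges of one of the two colors) containing a matching that saturates at least (2 + 0.1ξ)k′ vertices. -/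
set_option maxHeartbeats 1000000


namespace CMMD
open Finset
open scoped Classical

structure BipSetup (V : Type*) [Fintype V] [DecidableEq V] where
  A : Finset V
  B : Finset V
  adj : V → V → Prop
  c : V → V → Fin 2
  ξ : ℝ
  k' : ℝ
  N : ℕ
  hAB : Disjoint A B
  hA : A.card = N
  hB : B.card = N
  hsymm : ∀ u v, adj u v → adj v u
  hbip : ∀ u v, adj u v → (u ∈ A ∧ v ∈ B) ∨ (u ∈ B ∧ v ∈ A)
  hcsymm : ∀ u v, c u v = c v u
  hξ0 : 0 < ξ
  hξ1 : ξ ≤ 1 / 1000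
  hNk : (N : ℝ) = (2 + 8 * ξ) * k'
  hNbig : 1000 ≤ ξ * N
  hdeg : ∀ v, v ∈ A ∨ v ∈ B → (7 / 8 + ξ) * ((2 + 8 * ξ) * k') ≤ ((Finset.univ.filter (adj v)).card : ℝ)

namespace BipSetup
variable {V : Type*} [Fintype V] [DecidableEq V] (S : BipSetup V)

noncomputable def m0 : ℝ := (1 + 0.05 * S.ξ) * S.k'
noncomputable def nn : ℝ := (S.N : ℝ)
noncomputable def s0 : ℝ := S.nn / 2 - S.m0
noncomputable def D0 : ℝ := (7 / 8 + S.ξ) * S.nn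
noncomputable def ee : ℝ := S.nn / 8 - S.ξ * S.nn

def R (i : Fin 2) (u v : V) : Prop := S.adj u v ∧ S.c u v = i

noncomputable def comp (i : Fin 2) (v : V) : Finset V :=
  univ.filter (fun u => Relation.ReflTransGen (S.R i) v u)

noncomputable def dg (i : Fin 2) (v : V) : ℕ := (univ.filter (fun u => S.R i v u)).card

noncomputable def dgG (v : V) : ℕ := (univ.filter (fun u => S.adj v u)).card

def Sides (X Y : Finset V) : Prop := (X = S.A ∧ Y = S.B) ∨ (X = S.B ∧ Y = S.A)

def MP (i : Fin 2) (X Y : Finset V) (pr : Finset (V × V)) : Prop :=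
  (∀ p ∈ pr, p.1 ∈ X ∧ p.2 ∈ Y ∧ S.R i p.1 p.2) ∧
  Set.InjOn Prod.fst (↑pr : Set (V × V)) ∧ Set.InjOn Prod.snd (↑pr : Set (V × V)) ∧
  ∀ p ∈ pr, ∀ q ∈ pr, Relation.ReflTransGen (S.R i) p.1 q.1

def Star : Prop := ∀ (i : Fin 2) (X Y : Finset V) (pr : Finset (V × V)),
  S.Sides X Y → S.MP i X Y pr → (pr.card : ℝ) < S.m0

/-! ### numeric facts -/

lemma hξnn : 1000 ≤ S.ξ * S.nn := S.hNbig

lemma nn_big : (1000000 : ℝ) ≤ S.nn := by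
  have h0 := S.hξ0; have h1 := S.hξ1; have h2 := S.hNbig
  show (1000000 : ℝ) ≤ (S.N : ℝ)
  nlinarith [h2, mul_le_mul_of_nonneg_right h1 (le_of_lt (show (0:ℝ) < (S.N:ℝ) by nlinarith))]

lemma k'pos : 0 < S.k' := by
  have h0 := S.hξ0; have hb := S.nn_big
  have hk : S.nn = (2 + 8 * S.ξ) * S.k' := S.hNk
  by_contra h
  push_neg at h
  have : (2 + 8 * S.ξ) * S.k' ≤ 0 := mul_nonpos_of_nonneg_of_nonpos (by linarith) h
  linarith

lemma hξe : S.ξ * S.nn ≤ S.nn / 1000 := by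
  have := S.nn_big; have h1 := S.hξ1
  have : (0:ℝ) ≤ S.nn := by linarith
  nlinarith [S.hξ1]

lemma m0_eq : S.m0 = S.nn / 2 - S.s0 := by unfold s0; ring

lemma s0_lb : 1.9 * (S.ξ * S.nn) ≤ S.s0 := by
  have h0 := S.hξ0; have h1 := S.hξ1; have hk := S.hNk; have hkp := S.k'pos
  unfold s0 m0 nn
  rw [hk]
  nlinarith [sq_nonneg S.ξ, mul_pos h0 hkp]

lemma s0_ub : S.s0 ≤ 2 * (S.ξ * S.nn) := by
  have h0 := S.hξ0; have h1 := S.hξ1; have hk := S.hNk; have hkp := S.k'pos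
  unfold s0 m0 nn
  rw [hk]
  nlinarith [sq_nonneg S.ξ, mul_pos h0 hkp]

lemma s0_big : 1900 ≤ S.s0 := by
  have := S.s0_lb; have := S.hξnn; linarith

lemma m0_pos : 0 < S.m0 := by
  have := S.m0_eq; have := S.s0_ub; have := S.hξe; have := S.nn_big; linarith

lemma D0_eq : S.D0 = 7 * S.nn / 8 + S.ξ * S.nn := by unfold D0; ring

/-! ### basic structural lemmas -/

lemma Rsymm {i : Fin 2} {u v : V} (h : S.R i u v) : S.R i v u :=
  ⟨S.hsymm _ _ h.1, (S.hcsymm v u).trans h.2⟩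

lemma rtg_symm {i : Fin 2} {a b : V} (h : Relation.ReflTransGen (S.R i) a b) :
    Relation.ReflTransGen (S.R i) b a := by
  induction h with
  | refl => exact .refl
  | tail _ h2 ih => exact Relation.ReflTransGen.head (S.Rsymm h2) ih

lemma mem_comp {i : Fin 2} {v u : V} : u ∈ S.comp i v ↔ Relation.ReflTransGen (S.R i) v u := by
  simp [comp]

lemma mem_comp_self (i : Fin 2) (v : V) : v ∈ S.comp i v :=
  S.mem_comp.mpr .refl

lemma comp_closed {i : Fin 2} {v u w : V} (hu : u ∈ S.comp i v) (h : S.R i u w) :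
    w ∈ S.comp i v := by
  rw [mem_comp] at *
  exact hu.tail h

lemma comp_eq_of_mem {i : Fin 2} {v u : V} (hu : u ∈ S.comp i v) : S.comp i u = S.comp i v := by
  rw [mem_comp] at hu
  ext w
  rw [mem_comp, mem_comp]
  exact ⟨fun h => hu.trans h, fun h => (S.rtg_symm hu).trans h⟩

lemma comp_eq_of_inter {i : Fin 2} {v v' : V} (h : (S.comp i v ∩ S.comp i v').Nonempty) :
    S.comp i v = S.comp i v' := by
  obtain ⟨w, hw⟩ := h
  simp only [mem_inter] at hw
  rw [← S.comp_eq_of_mem hw.1, S.comp_eq_of_mem hw.2]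

lemma sides_symm {X Y : Finset V} (h : S.Sides X Y) : S.Sides Y X :=
  h.elim (fun h => .inr ⟨h.2, h.1⟩) (fun h => .inl ⟨h.2, h.1⟩)

lemma sides_AB : S.Sides S.A S.B := .inl ⟨rfl, rfl⟩

lemma sides_card {X Y : Finset V} (h : S.Sides X Y) : X.card = S.N := by
  rcases h with ⟨h1, _⟩ | ⟨h1, _⟩ <;> simp [h1, S.hA, S.hB]

lemma sides_disj {X Y : Finset V} (h : S.Sides X Y) : Disjoint X Y := by
  rcases h with ⟨h1, h2⟩ | ⟨h1, h2⟩ <;> subst h1 <;> subst h2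
  · exact S.hAB
  · exact S.hAB.symm

lemma sides_mem {X Y : Finset V} {v : V} (h : S.Sides X Y) (hv : v ∈ X) :
    v ∈ S.A ∨ v ∈ S.B := by
  rcases h with ⟨h1, _⟩ | ⟨h1, _⟩
  · exact .inl (h1 ▸ hv)
  · exact .inr (h1 ▸ hv)

lemma sides_opp {X Y : Finset V} {u v : V} (h : S.Sides X Y) (hu : u ∈ X) (ha : S.adj u v) :
    v ∈ Y := by
  rcases h with ⟨h1, h2⟩ | ⟨h1, h2⟩ <;> subst h1 <;> subst h2
  · rcases S.hbip u v ha with ⟨_, hv⟩ | ⟨hu', _⟩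
    · exact hv
    · exact absurd hu' (Finset.disjoint_left.mp S.hAB hu)
  · rcases S.hbip u v ha with ⟨hu', _⟩ | ⟨_, hv⟩
    · exact absurd hu (Finset.disjoint_left.mp S.hAB hu')
    · exact hv

lemma dgG_ge {v : V} (hv : v ∈ S.A ∨ v ∈ S.B) : S.D0 ≤ (S.dgG v : ℝ) := by
  have h := S.hdeg v hv
  have he : S.D0 = (7 / 8 + S.ξ) * ((2 + 8 * S.ξ) * S.k') := by
    unfold D0 nn
    rw [S.hNk]
  rw [he]
  exact h

lemma nbrs_sub {i : Fin 2} {v : V} {X Y : Finset V} (hS : S.Sides X Y) (hv : v ∈ X) :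
    univ.filter (fun u => S.R i v u) ⊆ S.comp i v ∩ Y := by
  intro u hu
  simp only [mem_filter, mem_univ, true_and] at hu
  exact mem_inter.mpr ⟨S.comp_closed (S.mem_comp_self i v) hu, S.sides_opp hS hv hu.1⟩

lemma dg_le_comp {i : Fin 2} {v : V} {X Y : Finset V} (hS : S.Sides X Y) (hv : v ∈ X) :
    S.dg i v ≤ (S.comp i v ∩ Y).card :=
  card_le_card (S.nbrs_sub hS hv)

lemma Gnbrs_sub {v : V} {X Y : Finset V} (hS : S.Sides X Y) (hv : v ∈ X) :
    univ.filter (fun u => S.adj v u) ⊆ Y := by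
  intro u hu
  simp only [mem_filter, mem_univ, true_and] at hu
  exact S.sides_opp hS hv hu

def otherC (i : Fin 2) : Fin 2 := 1 - i

lemma otherC_ne (i : Fin 2) : otherC i ≠ i := by fin_cases i <;> decide

lemma eq_otherC {x i : Fin 2} (h : x ≠ i) : x = otherC i := by
  fin_cases x <;> fin_cases i <;> simp_all <;> rfl

lemma dgG_split (i : Fin 2) (v : V) : S.dgG v = S.dg i v + S.dg (otherC i) v := by
  unfold dgG dg
  rw [← card_union_of_disjoint]
  · congr 1
    ext u
    simp only [Finset.mem_union, Finset.mem_filter, Finset.mem_univ, true_and]; simp only [R]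
    constructor
    · intro h
      by_cases hc : S.c v u = i
      · exact Or.inl ⟨h, hc⟩
      · exact Or.inr ⟨h, eq_otherC hc⟩
    · rintro (⟨h, _⟩ | ⟨h, _⟩) <;> exact h
  · refine disjoint_left.mpr ?_
    intro u hu1 hu2
    simp only [Finset.mem_filter] at hu1 hu2; simp only [R] at hu1 hu2
    exact (otherC_ne i) (by rw [← hu2.2.2, hu1.2.2])

lemma dg_other {i : Fin 2} {v : V} (hv : v ∈ S.A ∨ v ∈ S.B) :
    S.D0 - (S.dg i v : ℝ) ≤ (S.dg (otherC i) v : ℝ) := by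
  have h1 := S.dgG_ge hv
  have h2 := S.dgG_split i v
  have h3 : (S.dgG v : ℝ) = (S.dg i v : ℝ) + (S.dg (otherC i) v : ℝ) := by
    exact_mod_cast congrArg (Nat.cast : ℕ → ℝ) h2
  linarith

lemma nonadj_bound {v : V} {X Y Q : Finset V} (hS : S.Sides X Y) (hv : v ∈ X) (hQ : Q ⊆ Y) :
    ((Q.filter (fun b => ¬ S.adj v b)).card : ℝ) ≤ S.nn - S.D0 := by
  have h1 : Q.filter (fun b => ¬ S.adj v b) ⊆ Y.filter (fun b => ¬ S.adj v b) :=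
    filter_subset_filter _ hQ
  have h2 : Y.filter (fun b => S.adj v b) = univ.filter (fun u => S.adj v u) := by
    apply Finset.Subset.antisymm
    · exact filter_subset_filter _ (subset_univ Y)
    · intro u hu
      have := S.Gnbrs_sub hS hv hu
      simp only [mem_filter, mem_univ, true_and] at hu ⊢
      exact ⟨this, hu⟩
  have h3 := Finset.card_filter_add_card_filter_not (s := Y) (p := fun b => S.adj v b)
  have h4 : S.D0 ≤ ((Y.filter (fun b => S.adj v b)).card : ℝ) := by
    rw [h2]; exact S.dgG_ge (S.sides_mem hS hv)
  have h5 : (Y.card : ℝ) = S.nn := by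
    unfold nn
    exact_mod_cast congrArg (Nat.cast : ℕ → ℝ) (S.sides_card (S.sides_symm hS))
  have h6 := card_le_card h1
  have h7 : ((Y.filter (fun b => S.adj v b)).card : ℝ)
      + ((Y.filter (fun b => ¬ S.adj v b)).card : ℝ) = (Y.card : ℝ) := by
    exact_mod_cast congrArg (Nat.cast : ℕ → ℝ) h3
  have h8 : ((Q.filter (fun b => ¬ S.adj v b)).card : ℝ)
      ≤ ((Y.filter (fun b => ¬ S.adj v b)).card : ℝ) := by exact_mod_cast h6
  linarith

lemma ee_eq : S.nn - S.D0 = S.ee := by unfold ee D0; ring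

lemma exists_adj_in {v : V} {X Y T : Finset V} (hS : S.Sides X Y) (hv : v ∈ X) (hT : T ⊆ Y)
    (hbig : S.nn - S.D0 < (T.card : ℝ)) : ∃ b ∈ T, S.adj v b := by
  by_contra h
  push_neg at h
  have he : T.filter (fun b => ¬ S.adj v b) = T := filter_eq_self.mpr h
  have hnb := S.nonadj_bound hS hv hT
  rw [he] at hnb
  linarith

/-- Single good-block tool: if all `G`-edges between `P ⊆ X` and `Q ⊆ Y` have color `j`,
then under `Star` one of the two blocks is small. -/
lemma T1 (hstar : S.Star) {X Y P Q : Finset V} (hS : S.Sides X Y) (hP : P ⊆ X) (hQ : Q ⊆ Y)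
    (j : Fin 2) (good : ∀ a ∈ P, ∀ b ∈ Q, S.adj a b → S.c a b = j) :
    ((P.card : ℝ) < S.m0 ∨ (Q.card : ℝ) < S.m0) := by
  by_contra hm
  push_neg at hm
  obtain ⟨hPm, hQm⟩ := hm
  set k := ⌈S.m0⌉₊ with hkdef
  have hkub : (k : ℝ) < S.m0 + 1 := Nat.ceil_lt_add_one (le_of_lt S.m0_pos)
  have hklb : S.m0 ≤ (k : ℝ) := Nat.le_ceil _
  -- numeric facts
  have hEe : S.nn - S.D0 = S.nn / 8 - S.ξ * S.nn := by unfold D0; ring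
  have hm0e := S.m0_eq
  have hs0u := S.s0_ub
  have hξe := S.hξe
  have hnnb := S.nn_big
  have hξnn := S.hξnn
  have hξpos : 0 < S.ξ * S.nn := by linarith
  obtain ⟨P', hP'sub, hP'card⟩ :=
    Finset.exists_subset_card_eq (show k ≤ P.card from Nat.ceil_le.mpr hPm)
  obtain ⟨Q', hQ'sub, hQ'card⟩ :=
    Finset.exists_subset_card_eq (show k ≤ Q.card from Nat.ceil_le.mpr hQm)
  have hP'X : P' ⊆ X := hP'sub.trans hP
  have hQ'Y : Q' ⊆ Y := hQ'sub.trans hQ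
  set t : {x // x ∈ P'} → Finset V := fun a => Q'.filter (fun b => S.R j (↑a) b) with htdef
  have hdegt : ∀ a : {x // x ∈ P'}, (k : ℝ) - (S.nn - S.D0) ≤ ((t a).card : ℝ) := by
    intro a
    have hsplit := Finset.card_filter_add_card_filter_not
      (s := Q') (p := fun b => S.R j (↑a) b)
    have hsub : Q'.filter (fun b => ¬ S.R j (↑a) b) ⊆ Q'.filter (fun b => ¬ S.adj (↑a) b) := by
      intro b hb
      simp only [mem_filter] at hb ⊢
      refine ⟨hb.1, fun hadj => hb.2 ⟨hadj, good _ (hP'sub a.2) _ (hQ'sub hb.1) hadj⟩⟩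
    have hna := S.nonadj_bound hS (hP'X a.2) hQ'Y
    have h6 : ((Q'.filter (fun b => ¬ S.R j (↑a) b)).card : ℝ)
        ≤ ((Q'.filter (fun b => ¬ S.adj (↑a) b)).card : ℝ) := by
      exact_mod_cast card_le_card hsub
    have h7 : ((t a).card : ℝ) + ((Q'.filter (fun b => ¬ S.R j (↑a) b)).card : ℝ)
        = (Q'.card : ℝ) := by exact_mod_cast congrArg (Nat.cast : ℕ → ℝ) hsplit
    have hQR : ((Q'.card : ℕ) : ℝ) = (k : ℝ) := by rw [hQ'card]
    linarith
  have hall : ∀ s : Finset {x // x ∈ P'}, s.card ≤ (s.biUnion t).card := by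
    intro s
    rcases s.eq_empty_or_nonempty with rfl | ⟨a0, ha0⟩
    · simp
    have hscard : s.card ≤ k := by
      calc s.card ≤ Fintype.card {x // x ∈ P'} := Finset.card_le_univ s
        _ = P'.card := Fintype.card_coe _
        _ = k := hP'card
    by_cases hsize : (s.card : ℝ) ≤ (k : ℝ) - (S.nn - S.D0)
    · have h1 := hdegt a0
      have h2 : t a0 ⊆ s.biUnion t := subset_biUnion_of_mem t ha0
      have h3 : ((t a0).card : ℝ) ≤ ((s.biUnion t).card : ℝ) := by
        exact_mod_cast card_le_card h2
      have : (s.card : ℝ) ≤ ((s.biUnion t).card : ℝ) := by linarith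
      exact_mod_cast this
    · push_neg at hsize
      have hQsub : Q' ⊆ s.biUnion t := by
        intro b hb
        have hb' : b ∈ Y := hQ'Y hb
        have hTsub : s.image (Subtype.val) ⊆ X := fun x hx => by
          obtain ⟨a, _, rfl⟩ := mem_image.mp hx
          exact hP'X a.2
        have hTcard : ((s.image (Subtype.val)).card : ℝ) = (s.card : ℝ) := by
          exact_mod_cast congrArg (Nat.cast : ℕ → ℝ)
            (card_image_of_injective s Subtype.val_injective)
        obtain ⟨a', ha's, hadj⟩ := S.exists_adj_in (S.sides_symm hS) hb' hTsub (by linarith)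
        obtain ⟨a, has, rfl⟩ := mem_image.mp ha's
        have hadj' : S.adj (↑a) b := S.hsymm _ _ hadj
        have hc : S.c (↑a) b = j := good _ (hP'sub a.2) _ (hQ'sub hb) hadj'
        exact mem_biUnion.mpr ⟨a, has, mem_filter.mpr ⟨hb, hadj', hc⟩⟩
      calc s.card ≤ k := hscard
        _ = Q'.card := hQ'card.symm
        _ ≤ (s.biUnion t).card := card_le_card hQsub
  obtain ⟨f, hfinj, hft⟩ := (Finset.all_card_le_biUnion_card_iff_exists_injective t).mp hall
  set pairs : Finset (V × V) :=
    P'.attach.image (fun (a : {x // x ∈ P'}) => ((a : V), f a)) with hprdef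
  have hprcard : pairs.card = k := by
    rw [hprdef, card_image_of_injective, card_attach, hP'card]
    intro a b hab
    exact Subtype.val_injective (congrArg Prod.fst hab)
  have hmem : ∀ p ∈ pairs, ∃ a : {x // x ∈ P'}, p = ((a : V), f a) := by
    intro p hp
    obtain ⟨a, _, rfl⟩ := mem_image.mp hp
    exact ⟨a, rfl⟩
  have hMP : S.MP j X Y pairs := by
    refine ⟨?_, ?_, ?_, ?_⟩
    · intro p hp
      obtain ⟨a, rfl⟩ := hmem p hp
      have hfa := hft a
      rw [htdef] at hfa
      simp only [mem_filter] at hfa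
      exact ⟨hP'X a.2, hQ'Y hfa.1, hfa.2⟩
    · intro p hp q hq hfst
      obtain ⟨a, rfl⟩ := hmem p (by exact_mod_cast hp)
      obtain ⟨b, rfl⟩ := hmem q (by exact_mod_cast hq)
      simp only at hfst
      have : a = b := Subtype.val_injective hfst
      rw [this]
    · intro p hp q hq hsnd
      obtain ⟨a, rfl⟩ := hmem p (by exact_mod_cast hp)
      obtain ⟨b, rfl⟩ := hmem q (by exact_mod_cast hq)
      simp only at hsnd
      rw [hfinj hsnd]
    · intro p hp q hq
      obtain ⟨a, rfl⟩ := hmem p hp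
      obtain ⟨b, rfl⟩ := hmem q hq
      have hw : ((t a) ∩ (t b)).Nonempty := by
        rw [← Finset.card_pos]
        have hu : ((t a) ∪ (t b)).card ≤ k := by
          rw [← hQ'card]
          exact card_le_card (union_subset (filter_subset _ _) (filter_subset _ _))
        have h1 := hdegt a
        have h2 := hdegt b
        have h3 := Finset.card_union_add_card_inter (t a) (t b)
        have h4 : ((t a).card : ℝ) + ((t b).card : ℝ)
            = (((t a) ∪ (t b)).card : ℝ) + (((t a) ∩ (t b)).card : ℝ) := by
          exact_mod_cast congrArg (Nat.cast : ℕ → ℝ) h3.symm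
        have h5 : (0 : ℝ) < (((t a) ∩ (t b)).card : ℝ) := by
          have huR : ((((t a) ∪ (t b))).card : ℝ) ≤ (k : ℝ) := by exact_mod_cast hu
          linarith
        exact_mod_cast h5
      obtain ⟨w, hw⟩ := hw
      simp only [mem_inter, htdef, mem_filter] at hw
      exact (Relation.ReflTransGen.single hw.1.2).trans
        (Relation.ReflTransGen.single (S.Rsymm hw.2.2))
  have := hstar j X Y pairs hS hMP
  rw [hprcard] at this
  linarith

/-- Two-sided saturation tool: disjointly match `S1 ⊆ X` and `S2 ⊆ Y` (all in one
`i`-component, all of large `i`-degree) into fresh partners. -/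
lemma SAT (hstar : S.Star) {X Y S1 S2 : Finset V} {i : Fin 2} {v0 : V}
    (hS : S.Sides X Y) (h1X : S1 ⊆ X) (h2Y : S2 ⊆ Y)
    (h1c : ∀ a ∈ S1, a ∈ S.comp i v0) (h2c : ∀ b ∈ S2, b ∈ S.comp i v0)
    {d : ℝ} (h1d : ∀ a ∈ S1, d ≤ (S.dg i a : ℝ)) (h2d : ∀ b ∈ S2, d ≤ (S.dg i b : ℝ))
    (hsum : (S1.card : ℝ) + (S2.card : ℝ) ≤ d) :
    (S1.card : ℝ) + (S2.card : ℝ) < S.m0 := by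
  set t1 : {x // x ∈ S1} → Finset V := fun a => (univ.filter (fun u => S.R i (↑a) u)) \ S2
    with ht1def
  set t2 : {x // x ∈ S2} → Finset V := fun b => (univ.filter (fun u => S.R i (↑b) u)) \ S1
    with ht2def
  have hd1 : ∀ a : {x // x ∈ S1}, (S1.card : ℝ) ≤ ((t1 a).card : ℝ) := by
    intro a
    have h1 := Finset.card_le_card_sdiff_add_card
      (s := univ.filter (fun u => S.R i (↑a) u)) (t := S2)
    have h2 := h1d _ a.2
    have : (S.dg i (↑a) : ℝ) ≤ ((t1 a).card : ℝ) + (S2.card : ℝ) := by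
      unfold dg; exact_mod_cast h1
    linarith
  have hd2 : ∀ b : {x // x ∈ S2}, (S2.card : ℝ) ≤ ((t2 b).card : ℝ) := by
    intro b
    have h1 := Finset.card_le_card_sdiff_add_card
      (s := univ.filter (fun u => S.R i (↑b) u)) (t := S1)
    have h2 := h2d _ b.2
    have : (S.dg i (↑b) : ℝ) ≤ ((t2 b).card : ℝ) + (S1.card : ℝ) := by
      unfold dg; exact_mod_cast h1
    linarith
  have hall1 : ∀ s : Finset {x // x ∈ S1}, s.card ≤ (s.biUnion t1).card := by
    intro s
    rcases s.eq_empty_or_nonempty with rfl | ⟨a0, ha0⟩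
    · simp
    have h2 : ((t1 a0).card : ℝ) ≤ ((s.biUnion t1).card : ℝ) := by
      exact_mod_cast card_le_card (subset_biUnion_of_mem t1 ha0)
    have h3 : (s.card : ℝ) ≤ (S1.card : ℝ) := by
      exact_mod_cast (Finset.card_le_univ s).trans (le_of_eq (Fintype.card_coe _))
    have := hd1 a0
    have : (s.card : ℝ) ≤ ((s.biUnion t1).card : ℝ) := by linarith
    exact_mod_cast this
  have hall2 : ∀ s : Finset {x // x ∈ S2}, s.card ≤ (s.biUnion t2).card := by
    intro s
    rcases s.eq_empty_or_nonempty with rfl | ⟨b0, hb0⟩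
    · simp
    have h2 : ((t2 b0).card : ℝ) ≤ ((s.biUnion t2).card : ℝ) := by
      exact_mod_cast card_le_card (subset_biUnion_of_mem t2 hb0)
    have h3 : (s.card : ℝ) ≤ (S2.card : ℝ) := by
      exact_mod_cast (Finset.card_le_univ s).trans (le_of_eq (Fintype.card_coe _))
    have := hd2 b0
    have : (s.card : ℝ) ≤ ((s.biUnion t2).card : ℝ) := by linarith
    exact_mod_cast this
  obtain ⟨f1, hf1inj, hf1t⟩ := (Finset.all_card_le_biUnion_card_iff_exists_injective t1).mp hall1
  obtain ⟨f2, hf2inj, hf2t⟩ := (Finset.all_card_le_biUnion_card_iff_exists_injective t2).mp hall2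
  have hf1R : ∀ a : {x // x ∈ S1}, S.R i (↑a) (f1 a) ∧ f1 a ∉ S2 := by
    intro a
    have := hf1t a
    rw [ht1def] at this
    simp only [mem_sdiff, mem_filter, mem_univ, true_and] at this
    exact this
  have hf2R : ∀ b : {x // x ∈ S2}, S.R i (↑b) (f2 b) ∧ f2 b ∉ S1 := by
    intro b
    have := hf2t b
    rw [ht2def] at this
    simp only [mem_sdiff, mem_filter, mem_univ, true_and] at this
    exact this
  set pr1 : Finset (V × V) := S1.attach.image (fun (a : {x // x ∈ S1}) => ((a : V), f1 a))
    with hpr1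
  set pr2 : Finset (V × V) := S2.attach.image (fun (b : {x // x ∈ S2}) => (f2 b, (b : V)))
    with hpr2
  have hmem1 : ∀ p ∈ pr1, ∃ a : {x // x ∈ S1}, p = ((a : V), f1 a) := by
    intro p hp; obtain ⟨a, _, rfl⟩ := mem_image.mp hp; exact ⟨a, rfl⟩
  have hmem2 : ∀ p ∈ pr2, ∃ b : {x // x ∈ S2}, p = (f2 b, (b : V)) := by
    intro p hp; obtain ⟨b, _, rfl⟩ := mem_image.mp hp; exact ⟨b, rfl⟩
  have hdisj : Disjoint pr1 pr2 := by
    refine disjoint_left.mpr ?_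
    intro p hp1 hp2
    obtain ⟨a, rfl⟩ := hmem1 p hp1
    obtain ⟨b, hb⟩ := hmem2 _ hp2
    have h1 : (a : V) = f2 b := congrArg Prod.fst hb
    exact (hf2R b).2 (h1 ▸ a.2)
  have hc1 : pr1.card = S1.card := by
    rw [hpr1, card_image_of_injective, card_attach]
    intro a b hab
    exact Subtype.val_injective (congrArg Prod.fst hab)
  have hc2 : pr2.card = S2.card := by
    rw [hpr2, card_image_of_injective, card_attach]
    intro a b hab
    exact Subtype.val_injective (congrArg Prod.snd hab)
  set pairs := pr1 ∪ pr2 with hprs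
  have hcard : pairs.card = S1.card + S2.card := by
    rw [hprs, card_union_of_disjoint hdisj, hc1, hc2]
  have hcompmem : ∀ p ∈ pairs, p.1 ∈ S.comp i v0 ∧ p.2 ∈ S.comp i v0 := by
    intro p hp
    rcases mem_union.mp hp with hp1 | hp2
    · obtain ⟨a, rfl⟩ := hmem1 p hp1
      exact ⟨h1c _ a.2, S.comp_closed (h1c _ a.2) (hf1R a).1⟩
    · obtain ⟨b, rfl⟩ := hmem2 p hp2
      exact ⟨S.comp_closed (h2c _ b.2) (hf2R b).1, h2c _ b.2⟩
  have hMP : S.MP i X Y pairs := by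
    refine ⟨?_, ?_, ?_, ?_⟩
    · intro p hp
      rcases mem_union.mp hp with hp1 | hp2
      · obtain ⟨a, rfl⟩ := hmem1 p hp1
        have hR := (hf1R a).1
        exact ⟨h1X a.2, S.sides_opp hS (h1X a.2) hR.1, hR⟩
      · obtain ⟨b, rfl⟩ := hmem2 p hp2
        have hR := (hf2R b).1
        exact ⟨S.sides_opp (S.sides_symm hS) (h2Y b.2) hR.1, h2Y b.2, S.Rsymm hR⟩
    · intro p hp q hq hfst
      rcases mem_union.mp (by exact_mod_cast hp) with hp1 | hp2 <;>
        rcases mem_union.mp (by exact_mod_cast hq) with hq1 | hq2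
      · obtain ⟨a, rfl⟩ := hmem1 p hp1
        obtain ⟨a', rfl⟩ := hmem1 q hq1
        rw [show a = a' from Subtype.val_injective hfst]
      · obtain ⟨a, rfl⟩ := hmem1 p hp1
        obtain ⟨b, rfl⟩ := hmem2 q hq2
        exact absurd ((show (a : V) = f2 b from hfst) ▸ a.2) (hf2R b).2
      · obtain ⟨b, rfl⟩ := hmem2 p hp2
        obtain ⟨a, rfl⟩ := hmem1 q hq1
        exact absurd ((show (a : V) = f2 b from hfst.symm) ▸ a.2) (hf2R b).2
      · obtain ⟨b, rfl⟩ := hmem2 p hp2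
        obtain ⟨b', rfl⟩ := hmem2 q hq2
        rw [hf2inj hfst]
    · intro p hp q hq hsnd
      rcases mem_union.mp (by exact_mod_cast hp) with hp1 | hp2 <;>
        rcases mem_union.mp (by exact_mod_cast hq) with hq1 | hq2
      · obtain ⟨a, rfl⟩ := hmem1 p hp1
        obtain ⟨a', rfl⟩ := hmem1 q hq1
        rw [hf1inj hsnd]
      · obtain ⟨a, rfl⟩ := hmem1 p hp1
        obtain ⟨b, rfl⟩ := hmem2 q hq2
        exact absurd ((show (b : V) = f1 a from hsnd.symm) ▸ b.2) (hf1R a).2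
      · obtain ⟨b, rfl⟩ := hmem2 p hp2
        obtain ⟨a, rfl⟩ := hmem1 q hq1
        exact absurd ((show (b : V) = f1 a from hsnd) ▸ b.2) (hf1R a).2
      · obtain ⟨b, rfl⟩ := hmem2 p hp2
        obtain ⟨b', rfl⟩ := hmem2 q hq2
        rw [show b = b' from Subtype.val_injective hsnd]
    · intro p hp q hq
      have h1 := (hcompmem p hp).1
      have h2 := (hcompmem q hq).1
      rw [S.mem_comp] at h1 h2
      exact (S.rtg_symm h1).trans h2
  have := hstar i X Y pairs hS hMP
  rw [hcard] at this
  exact_mod_cast (by exact_mod_cast this : ((S1.card + S2.card : ℕ) : ℝ) < S.m0)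

/-- König-type cover for the `i`-component of `v0`: a vertex cover of all its
`i`-edges of total size `< m₀` (under `Star`). -/
lemma konig (hstar : S.Star) {X Y : Finset V} (hS : S.Sides X Y) (i : Fin 2) (v0 : V) :
    ∃ TA TB : Finset V, TA ⊆ S.comp i v0 ∩ X ∧ TB ⊆ S.comp i v0 ∩ Y ∧
      ((TA.card : ℝ) + (TB.card : ℝ) < S.m0) ∧
      (∀ a b, a ∈ S.comp i v0 ∩ X → S.R i a b → a ∈ TA ∨ b ∈ TB) := by
  classical
  set X0 := S.comp i v0 ∩ X with hX0
  set nb : V → Finset V := fun a => univ.filter (fun u => S.R i a u) with hnb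
  have hnbsub : ∀ a ∈ X0, nb a ⊆ S.comp i v0 ∩ Y := by
    intro a ha
    have h1 : nb a ⊆ S.comp i a ∩ Y := S.nbrs_sub hS (mem_inter.mp ha).2
    rwa [S.comp_eq_of_mem (mem_inter.mp ha).1] at h1
  set FZ : Finset V → ℤ := fun T => (T.card : ℤ) - ((T.biUnion nb).card : ℤ) with hFZ
  obtain ⟨Sm, hSmmem, hSmmax⟩ := Finset.exists_max_image (X0.powerset) FZ ⟨∅, by simp⟩
  have hSmsub : Sm ⊆ X0 := mem_powerset.mp hSmmem
  have hd0 : 0 ≤ FZ Sm := by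
    have := hSmmax ∅ (by simp)
    simpa [hFZ] using this
  set d := (FZ Sm).toNat with hd
  have hdZ : (d : ℤ) = FZ Sm := Int.toNat_of_nonneg hd0
  -- Hall system with d dummies
  set t : {x // x ∈ X0} → Finset (V ⊕ Fin d) := fun a =>
    ((nb (↑a)).map ⟨Sum.inl, Sum.inl_injective⟩) ∪
      ((univ : Finset (Fin d)).map ⟨Sum.inr, Sum.inr_injective⟩) with htdef
  have hall : ∀ s : Finset {x // x ∈ X0}, s.card ≤ (s.biUnion t).card := by
    intro s
    rcases s.eq_empty_or_nonempty with rfl | ⟨a0, ha0⟩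
    · simp
    set Sim := s.image (Subtype.val) with hSim
    have hSimcard : Sim.card = s.card := card_image_of_injective s Subtype.val_injective
    have hSimsub : Sim ⊆ X0 := by
      intro x hx; obtain ⟨a, _, rfl⟩ := mem_image.mp hx; exact a.2
    have hFle : FZ Sim ≤ (d : ℤ) := hdZ ▸ hSmmax Sim (mem_powerset.mpr hSimsub)
    have hU : ((Sim.biUnion nb).map ⟨Sum.inl, Sum.inl_injective⟩) ∪
        ((univ : Finset (Fin d)).map ⟨Sum.inr, Sum.inr_injective⟩) ⊆ s.biUnion t := by
      intro x hx
      rcases mem_union.mp hx with hx1 | hx2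
      · obtain ⟨b, hb, rfl⟩ := Finset.mem_map.mp hx1
        obtain ⟨a, ha, hab⟩ := mem_biUnion.mp hb
        obtain ⟨a', ha's, rfl⟩ := mem_image.mp ha
        refine mem_biUnion.mpr ⟨a', ha's, ?_⟩
        rw [htdef]
        exact mem_union_left _ (Finset.mem_map_of_mem _ hab)
      · refine mem_biUnion.mpr ⟨a0, ha0, ?_⟩
        rw [htdef]
        exact mem_union_right _ hx2
    have hdisj : Disjoint ((Sim.biUnion nb).map ⟨Sum.inl, Sum.inl_injective⟩)
        ((univ : Finset (Fin d)).map ⟨Sum.inr, Sum.inr_injective⟩) := by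
      refine disjoint_left.mpr ?_
      intro x hx1 hx2
      obtain ⟨b, _, rfl⟩ := Finset.mem_map.mp hx1
      obtain ⟨y, _, hy⟩ := Finset.mem_map.mp hx2
      exact Sum.inl_ne_inr hy.symm
    have hcardU := card_le_card hU
    rw [card_union_of_disjoint hdisj, Finset.card_map, Finset.card_map, Finset.card_univ,
      Fintype.card_fin] at hcardU
    have h2 : s.card ≤ (Sim.biUnion nb).card + d := by
      have hFle' : (Sim.card : ℤ) - ((Sim.biUnion nb).card : ℤ) ≤ (d : ℤ) := hFle
      have : (Sim.card : ℤ) ≤ ((Sim.biUnion nb).card : ℤ) + (d : ℤ) := by linarith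
      rw [← hSimcard]
      exact_mod_cast this
    exact h2.trans hcardU
  obtain ⟨f, hfinj, hft⟩ := (Finset.all_card_le_biUnion_card_iff_exists_injective t).mp hall
  set good := X0.attach.filter (fun a => (f a).isLeft) with hgood
  set bad := X0.attach.filter (fun a => ¬ (f a).isLeft) with hbad
  have hgb : good.card + bad.card = X0.card := by
    rw [hgood, hbad, Finset.card_filter_add_card_filter_not, card_attach]
  have hbadle : bad.card ≤ d := by
    have h1 : (bad.image f).card = bad.card := card_image_of_injective bad hfinj
    have h2 : bad.image f ⊆ (univ : Finset (Fin d)).map ⟨Sum.inr, Sum.inr_injective⟩ := by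
      intro x hx
      obtain ⟨a, ha, rfl⟩ := mem_image.mp hx
      have hnl : ¬ (f a).isLeft := (mem_filter.mp ha).2
      rcases hfa : f a with b | y
      · rw [hfa] at hnl; simp at hnl
      · exact Finset.mem_map_of_mem _ (mem_univ y)
    have := card_le_card h2
    rw [h1, Finset.card_map, Finset.card_univ, Fintype.card_fin] at this
    exact this
  set gv : {x // x ∈ X0} → V := fun a => Sum.elim id (fun _ => v0) (f a) with hgv
  have hgvgood : ∀ a ∈ good, f a = Sum.inl (gv a) := by
    intro a ha
    have hl : (f a).isLeft := (mem_filter.mp ha).2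
    rcases hfa : f a with b | y
    · rw [hgv]; simp [hfa]
    · rw [hfa] at hl; simp at hl
  have hgvR : ∀ a ∈ good, S.R i (↑a) (gv a) := by
    intro a ha
    have h1 := hft a
    rw [hgvgood a ha, htdef] at h1
    rcases mem_union.mp h1 with h2 | h2
    · obtain ⟨b, hb, hbe⟩ := Finset.mem_map.mp h2
      have : b = gv a := Sum.inl_injective hbe
      subst this
      rw [hnb] at hb
      simpa using hb
    · obtain ⟨y, _, hy⟩ := Finset.mem_map.mp h2
      simp at hy
  set pairs : Finset (V × V) :=
    good.image (fun (a : {x // x ∈ X0}) => ((a : V), gv a)) with hprdef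
  have hmem : ∀ p ∈ pairs, ∃ a, a ∈ good ∧ p = ((a : V), gv a) := by
    intro p hp; obtain ⟨a, ha, rfl⟩ := mem_image.mp hp; exact ⟨a, ha, rfl⟩
  have hprcard : pairs.card = good.card := by
    rw [hprdef]
    apply card_image_of_injOn
    intro a _ b _ hab
    exact Subtype.val_injective (congrArg Prod.fst hab)
  have hMP : S.MP i X Y pairs := by
    refine ⟨?_, ?_, ?_, ?_⟩
    · intro p hp
      obtain ⟨a, ha, rfl⟩ := hmem p hp
      have hR := hgvR a ha
      exact ⟨(mem_inter.mp a.2).2, S.sides_opp hS (mem_inter.mp a.2).2 hR.1, hR⟩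
    · intro p hp q hq hfst
      obtain ⟨a, ha, rfl⟩ := hmem p (by exact_mod_cast hp)
      obtain ⟨b, hb, rfl⟩ := hmem q (by exact_mod_cast hq)
      rw [show a = b from Subtype.val_injective hfst]
    · intro p hp q hq hsnd
      obtain ⟨a, ha, rfl⟩ := hmem p (by exact_mod_cast hp)
      obtain ⟨b, hb, rfl⟩ := hmem q (by exact_mod_cast hq)
      have hfe : f a = f b := by
        rw [hgvgood a ha, hgvgood b hb]
        exact congrArg Sum.inl hsnd
      rw [hfinj hfe]
    · intro p hp q hq
      obtain ⟨a, _, rfl⟩ := hmem p hp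
      obtain ⟨b, _, rfl⟩ := hmem q hq
      have h1 := (mem_inter.mp a.2).1
      have h2 := (mem_inter.mp b.2).1
      rw [S.mem_comp] at h1 h2
      exact (S.rtg_symm h1).trans h2
  have hgoodlt : ((good.card : ℕ) : ℝ) < S.m0 := by
    have := hstar i X Y pairs hS hMP
    rwa [hprcard] at this
  refine ⟨X0 \ Sm, Sm.biUnion nb, sdiff_subset, ?_, ?_, ?_⟩
  · intro b hb
    obtain ⟨a, ha, hab⟩ := mem_biUnion.mp hb
    exact hnbsub a (hSmsub ha) hab
  · have hTA0 := card_sdiff_of_subset hSmsub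
    have hTA : ((X0 \ Sm).card : ℝ) = (X0.card : ℝ) - (Sm.card : ℝ) := by
      have h1 : ((X0 \ Sm).card : ℝ) = ((X0.card - Sm.card : ℕ) : ℝ) := by
        exact_mod_cast congrArg (Nat.cast : ℕ → ℝ) hTA0
      rwa [Nat.cast_sub (card_le_card hSmsub)] at h1
    have hdZ' : (d : ℤ) = (Sm.card : ℤ) - ((Sm.biUnion nb).card : ℤ) := hdZ
    have hdR : (d : ℝ) = (Sm.card : ℝ) - ((Sm.biUnion nb).card : ℝ) := by
      exact_mod_cast hdZ'
    have hgX0 : (X0.card : ℝ) - (d : ℝ) ≤ (good.card : ℝ) := by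
      have h1 : (good.card : ℝ) + (bad.card : ℝ) = (X0.card : ℝ) := by exact_mod_cast hgb
      have h2 : ((bad.card : ℕ) : ℝ) ≤ (d : ℝ) := by exact_mod_cast hbadle
      linarith
    linarith [hgoodlt]
  · intro a b ha hR
    by_cases hm : a ∈ Sm
    · refine Or.inr (mem_biUnion.mpr ⟨a, hm, ?_⟩)
      rw [hnb]
      simp only [mem_filter, mem_univ, true_and]
      exact hR
    · exact Or.inl (mem_sdiff.mpr ⟨ha, hm⟩)


lemma card_sdiff_inter {X Y : Finset V} (hS : S.Sides X Y) (T : Finset V) :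
    ((Y \ T).card : ℝ) = S.nn - ((T ∩ Y).card : ℝ) := by
  have h1 : Y \ T = Y \ (T ∩ Y) := by
    ext b
    simp only [mem_sdiff, mem_inter]
    tauto
  have h2 : (Y \ (T ∩ Y)).card = Y.card - (T ∩ Y).card := card_sdiff_of_subset inter_subset_right
  have h3 : ((Y \ T).card : ℝ) = ((Y.card - (T ∩ Y).card : ℕ) : ℝ) := by
    rw [h1]; exact_mod_cast congrArg (Nat.cast : ℕ → ℝ) h2
  rw [Nat.cast_sub (card_le_card inter_subset_right)] at h3
  have h4 : ((Y.card : ℕ) : ℝ) = S.nn := by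
    unfold nn
    exact_mod_cast congrArg (Nat.cast : ℕ → ℝ) (S.sides_card (S.sides_symm hS))
  rw [h4] at h3
  exact h3

lemma gap : S.m0 < S.nn - S.m0 := by
  have h1 := S.m0_eq
  have h2 := S.s0_big
  linarith

/-- Every monochromatic component is either small on both sides or huge on both sides. -/
lemma dicho (hstar : S.Star) {X Y : Finset V} (hS : S.Sides X Y) (i : Fin 2) (v : V) :
    (((S.comp i v ∩ X).card : ℝ) < S.m0 ∧ ((S.comp i v ∩ Y).card : ℝ) < S.m0) ∨
    ((S.nn - S.m0 < ((S.comp i v ∩ X).card : ℝ)) ∧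
      (S.nn - S.m0 < ((S.comp i v ∩ Y).card : ℝ))) := by
  have hgap := S.gap
  have key : ∀ X' Y' : Finset V, S.Sides X' Y' →
      ((S.comp i v ∩ X').card : ℝ) < S.m0 ∨ S.nn - S.m0 < ((S.comp i v ∩ Y').card : ℝ) := by
    intro X' Y' hS'
    have good : ∀ a ∈ S.comp i v ∩ X', ∀ b ∈ Y' \ S.comp i v,
        S.adj a b → S.c a b = otherC i := by
      intro a ha b hb hadj
      refine eq_otherC (fun hci => ?_)
      exact (mem_sdiff.mp hb).2 (S.comp_closed (mem_inter.mp ha).1 ⟨hadj, hci⟩)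
    rcases S.T1 hstar hS' inter_subset_right sdiff_subset (otherC i) good with h | h
    · exact .inl h
    · right
      have := S.card_sdiff_inter hS' (S.comp i v)
      linarith
  rcases key X Y hS with h1 | h1 <;> rcases key Y X (S.sides_symm hS) with h2 | h2
  · exact .inl ⟨h1, h2⟩
  · exact (by linarith : False).elim
  · exact (by linarith : False).elim
  · exact .inr ⟨h2, h1⟩

lemma comp_unique {i : Fin 2} {v v' : V} {X Y : Finset V} (hS : S.Sides X Y)
    (h1 : S.nn / 2 < ((S.comp i v ∩ X).card : ℝ))
    (h2 : S.nn / 2 < ((S.comp i v' ∩ X).card : ℝ)) :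
    S.comp i v = S.comp i v' := by
  apply S.comp_eq_of_inter
  have hsub : (S.comp i v ∩ X) ∪ (S.comp i v' ∩ X) ⊆ X :=
    union_subset inter_subset_right inter_subset_right
  have hu : ((((S.comp i v ∩ X) ∪ (S.comp i v' ∩ X)).card : ℕ) : ℝ) ≤ S.nn := by
    have h3 := card_le_card hsub
    rw [S.sides_card hS] at h3
    unfold nn
    exact_mod_cast h3
  have hci := Finset.card_union_add_card_inter (S.comp i v ∩ X) (S.comp i v' ∩ X)
  have hciR : ((((S.comp i v ∩ X) ∪ (S.comp i v' ∩ X)).card : ℕ) : ℝ)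
      + ((((S.comp i v ∩ X) ∩ (S.comp i v' ∩ X)).card : ℕ) : ℝ)
      = ((S.comp i v ∩ X).card : ℝ) + ((S.comp i v' ∩ X).card : ℝ) := by
    exact_mod_cast congrArg (Nat.cast : ℕ → ℝ) hci
  have hpos : (0 : ℝ) < ((((S.comp i v ∩ X) ∩ (S.comp i v' ∩ X)).card : ℕ) : ℝ) := by
    linarith
  have hne : (((S.comp i v ∩ X) ∩ (S.comp i v' ∩ X))).Nonempty := by
    rw [← Finset.card_pos]
    exact_mod_cast hpos
  obtain ⟨w, hw⟩ := hne
  simp only [mem_inter] at hw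
  exact ⟨w, mem_inter.mpr ⟨hw.1.1, hw.2.1⟩⟩

/-- A vertex on side `X` with `j`-degree `> m₀` lies in the (unique) huge `j`-component. -/
lemma mem_huge_of_bigdeg (hstar : S.Star) {X Y : Finset V} (hS : S.Sides X Y)
    {j : Fin 2} {a vD : V}
    (hD : S.nn - S.m0 < ((S.comp j vD ∩ Y).card : ℝ))
    (ha : a ∈ X) (hd : S.m0 < (S.dg j a : ℝ)) :
    a ∈ S.comp j vD := by
  have h1 : (S.dg j a : ℝ) ≤ ((S.comp j a ∩ Y).card : ℝ) := by
    exact_mod_cast S.dg_le_comp hS ha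
  have hgap := S.gap
  have h2 : S.nn - S.m0 < ((S.comp j a ∩ Y).card : ℝ) := by
    rcases S.dicho hstar hS j a with ⟨_, hsm⟩ | ⟨_, hhg⟩
    · linarith
    · exact hhg
  have h3 : S.comp j a = S.comp j vD := by
    apply S.comp_unique (S.sides_symm hS) (by linarith) (by linarith)
  exact h3 ▸ S.mem_comp_self j a

lemma otherC_inv (i : Fin 2) : otherC (otherC i) = i := by fin_cases i <;> decide

lemma nbrs_sub' {i : Fin 2} {b v0 : V} {X Y : Finset V} (hS : S.Sides X Y)
    (hb : b ∈ S.comp i v0 ∩ X) :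
    univ.filter (fun u => S.R i b u) ⊆ S.comp i v0 ∩ Y := by
  have h := S.nbrs_sub (i := i) hS (mem_inter.mp hb).2 (v := b)
  rwa [S.comp_eq_of_mem (mem_inter.mp hb).1] at h

lemma exists_nbr {i : Fin 2} {v : V} (h : 0 < (S.dg i v : ℝ)) :
    ∃ b, S.R i v b ∧ b ∈ S.comp i v := by
  have h1 : 0 < (univ.filter (fun u => S.R i v u)).card := by
    unfold dg at h; exact_mod_cast h
  obtain ⟨b, hb⟩ := Finset.card_pos.mp h1
  simp only [mem_filter, mem_univ, true_and] at hb
  exact ⟨b, hb, S.comp_closed (S.mem_comp_self i v) hb⟩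

lemma comp_disjoint {i : Fin 2} {v v' : V} (h : v' ∉ S.comp i v) :
    Disjoint (S.comp i v') (S.comp i v) := by
  rw [Finset.disjoint_left]
  intro w hw1 hw2
  have e1 := S.comp_eq_of_mem hw1
  have e2 := S.comp_eq_of_mem hw2
  have : v' ∈ S.comp i w := by rw [e1]; exact S.mem_comp_self i v'
  rw [e2] at this
  exact h this

/-- Hall with min-degree `g ≥ (larger side)/2` inside a component: the smaller side
is saturated. Under `Star` this forces the smaller side to be small. -/
lemma hallmin (hstar : S.Star) {X Y : Finset V} (hS : S.Sides X Y) (i : Fin 2) (v0 : V)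
    (hxy : (S.comp i v0 ∩ X).card ≤ (S.comp i v0 ∩ Y).card)
    {g : ℝ} (hdgs : ∀ v, (v ∈ S.comp i v0 ∩ X ∨ v ∈ S.comp i v0 ∩ Y) → g ≤ (S.dg i v : ℝ))
    (hbig : ((S.comp i v0 ∩ Y).card : ℝ) ≤ 2 * g - 2) :
    ((S.comp i v0 ∩ X).card : ℝ) < S.m0 := by
  set CX := S.comp i v0 ∩ X with hCX
  set CY := S.comp i v0 ∩ Y with hCY
  have hxyR : ((CX.card : ℕ) : ℝ) ≤ ((CY.card : ℕ) : ℝ) := by exact_mod_cast hxy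
  set t : {x // x ∈ CX} → Finset V := fun a => univ.filter (fun u => S.R i (↑a) u) with htdef
  have htsub : ∀ a : {x // x ∈ CX}, t a ⊆ CY := fun a => S.nbrs_sub' hS a.2
  have htcard : ∀ a : {x // x ∈ CX}, g ≤ ((t a).card : ℝ) := by
    intro a
    have := hdgs (↑a) (Or.inl a.2)
    unfold dg at this
    exact this
  have hall : ∀ s : Finset {x // x ∈ CX}, s.card ≤ (s.biUnion t).card := by
    intro s
    rcases s.eq_empty_or_nonempty with rfl | ⟨a0, ha0⟩
    · simp
    by_cases hsize : (s.card : ℝ) ≤ g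
    · have h2 : ((t a0).card : ℝ) ≤ ((s.biUnion t).card : ℝ) := by
        exact_mod_cast card_le_card (subset_biUnion_of_mem t ha0)
      have := htcard a0
      have : (s.card : ℝ) ≤ ((s.biUnion t).card : ℝ) := by linarith
      exact_mod_cast this
    · push_neg at hsize
      have hCYsub : CY ⊆ s.biUnion t := by
        intro b hb
        set NB := univ.filter (fun u => S.R i b u) with hNB
        have hNBsub : NB ⊆ CX := S.nbrs_sub' (S.sides_symm hS) hb
        have hNBcard : g ≤ ((NB.card : ℕ) : ℝ) := hdgs b (Or.inr hb)
        set Sim := s.image (Subtype.val) with hSim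
        have hSimcard : Sim.card = s.card := card_image_of_injective s Subtype.val_injective
        have hSimsub : Sim ⊆ CX := by
          intro x hx; obtain ⟨a, _, rfl⟩ := mem_image.mp hx; exact a.2
        have hu : ((Sim ∪ NB).card : ℝ) ≤ ((CX.card : ℕ) : ℝ) := by
          exact_mod_cast card_le_card (union_subset hSimsub hNBsub)
        have hci := Finset.card_union_add_card_inter Sim NB
        have hciR : ((Sim ∪ NB).card : ℝ) + ((Sim ∩ NB).card : ℝ)
            = ((Sim.card : ℕ) : ℝ) + ((NB.card : ℕ) : ℝ) := by
          exact_mod_cast congrArg (Nat.cast : ℕ → ℝ) hci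
        have hSimR : ((Sim.card : ℕ) : ℝ) = (s.card : ℝ) := by exact_mod_cast hSimcard
        have hpos : (0 : ℝ) < ((Sim ∩ NB).card : ℝ) := by linarith
        have hne : (Sim ∩ NB).Nonempty := by
          rw [← Finset.card_pos]; exact_mod_cast hpos
        obtain ⟨w, hw⟩ := hne
        simp only [mem_inter] at hw
        obtain ⟨a, has, rfl⟩ := mem_image.mp hw.1
        have hR : S.R i b (↑a) := by
          have := hw.2
          rw [hNB] at this
          simpa using this
        refine mem_biUnion.mpr ⟨a, has, ?_⟩
        rw [htdef]
        simp only [mem_filter, mem_univ, true_and]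
        exact S.Rsymm hR
      have h3 : s.card ≤ CX.card := by
        calc s.card ≤ Fintype.card {x // x ∈ CX} := Finset.card_le_univ s
          _ = CX.card := Fintype.card_coe _
      exact (h3.trans hxy).trans (card_le_card hCYsub)
  obtain ⟨f, hfinj, hft⟩ := (Finset.all_card_le_biUnion_card_iff_exists_injective t).mp hall
  set pairs : Finset (V × V) :=
    CX.attach.image (fun (a : {x // x ∈ CX}) => ((a : V), f a)) with hprdef
  have hmem : ∀ p ∈ pairs, ∃ a : {x // x ∈ CX}, p = ((a : V), f a) := by
    intro p hp; obtain ⟨a, _, rfl⟩ := mem_image.mp hp; exact ⟨a, rfl⟩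
  have hprcard : pairs.card = CX.card := by
    rw [hprdef, card_image_of_injective, card_attach]
    intro a b hab
    exact Subtype.val_injective (congrArg Prod.fst hab)
  have hMP : S.MP i X Y pairs := by
    refine ⟨?_, ?_, ?_, ?_⟩
    · intro p hp
      obtain ⟨a, rfl⟩ := hmem p hp
      have h1 := hft a
      have h2 := htsub a h1
      rw [htdef] at h1
      simp only [mem_filter, mem_univ, true_and] at h1
      exact ⟨(mem_inter.mp a.2).2, (mem_inter.mp h2).2, h1⟩
    · intro p hp q hq hfst
      obtain ⟨a, rfl⟩ := hmem p (by exact_mod_cast hp)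
      obtain ⟨b, rfl⟩ := hmem q (by exact_mod_cast hq)
      rw [show a = b from Subtype.val_injective hfst]
    · intro p hp q hq hsnd
      obtain ⟨a, rfl⟩ := hmem p (by exact_mod_cast hp)
      obtain ⟨b, rfl⟩ := hmem q (by exact_mod_cast hq)
      rw [hfinj hsnd]
    · intro p hp q hq
      obtain ⟨a, rfl⟩ := hmem p hp
      obtain ⟨b, rfl⟩ := hmem q hq
      have h1 := (mem_inter.mp a.2).1
      have h2 := (mem_inter.mp b.2).1
      rw [S.mem_comp] at h1 h2
      exact (S.rtg_symm h1).trans h2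
  have := hstar i X Y pairs hS hMP
  rwa [hprcard] at this

/-- If every `j`-component has small `A`-side, then they are small on both sides. -/
lemma allsmall (hstar : S.Star) {j : Fin 2}
    (hsm : ∀ v, ((S.comp j v ∩ S.A).card : ℝ) < S.m0) (v : V) :
    ((S.comp j v ∩ S.A).card : ℝ) < S.m0 ∧ ((S.comp j v ∩ S.B).card : ℝ) < S.m0 := by
  rcases S.dicho hstar S.sides_AB j v with h | h
  · exact h
  · exfalso
    have := hsm v
    have := S.gap
    linarith [h.1]

/-- If all `j`-components are small, every vertex has `i := otherC j` degree at least
`D₀ - m₀`. -/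
lemma dg_ge_of_allsmall (hstar : S.Star) {j : Fin 2}
    (hsm : ∀ v, ((S.comp j v ∩ S.A).card : ℝ) < S.m0) {v : V} (hv : v ∈ S.A ∨ v ∈ S.B) :
    S.D0 - S.m0 ≤ (S.dg (otherC j) v : ℝ) := by
  have hcap : (S.dg j v : ℝ) < S.m0 := by
    rcases hv with hv | hv
    · have h1 := S.dg_le_comp (i := j) S.sides_AB hv
      have h2 := (S.allsmall hstar hsm v).2
      have h1R : ((S.dg j v : ℕ) : ℝ) ≤ ((S.comp j v ∩ S.B).card : ℝ) := by exact_mod_cast h1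
      linarith
    · have h1 := S.dg_le_comp (i := j) (S.sides_symm S.sides_AB) hv
      have h2 := (S.allsmall hstar hsm v).1
      have h1R : ((S.dg j v : ℕ) : ℝ) ≤ ((S.comp j v ∩ S.A).card : ℝ) := by exact_mod_cast h1
      linarith
  have := S.dg_other (i := j) hv
  linarith

lemma g0_pos : 0 < S.D0 - S.m0 := by
  have h1 := S.D0_eq
  have h2 := S.m0_eq
  have h3 := S.s0_big
  have h4 := S.nn_big
  have h5 := S.hξnn
  have h6 : 0 < S.ξ * S.nn := by linarith
  linarith

lemma A_nonempty : S.A.Nonempty := by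
  rw [← Finset.card_pos, S.hA]
  have h := S.nn_big
  unfold nn at h
  exact_mod_cast (by linarith : (0:ℝ) < (S.N : ℝ))

/-- The case where both colors have only small components. -/
lemma branch_SS (hstar : S.Star)
    (h0 : ∀ v, ((S.comp 0 v ∩ S.A).card : ℝ) < S.m0)
    (h1 : ∀ v, ((S.comp 1 v ∩ S.A).card : ℝ) < S.m0) : False := by
  have hdg : ∀ v, (v ∈ S.A ∨ v ∈ S.B) → S.D0 - S.m0 ≤ (S.dg 0 v : ℝ) := by
    intro v hv
    have := S.dg_ge_of_allsmall hstar (j := 1) h1 hv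
    rwa [show otherC 1 = 0 by decide] at this
  -- the A-side of the 0-component of any vertex of A ∪ B is ≥ D0 - m0
  have hcompA : ∀ v, (v ∈ S.A ∨ v ∈ S.B) → ∀ a ∈ S.A,
      v ∈ S.comp 0 a → S.D0 - S.m0 ≤ ((S.comp 0 a ∩ S.A).card : ℝ) := by
    intro v hv a ha hva
    -- v has a 0-neighbor b in B; b's 0-neighbors lie in comp ∩ A... instead:
    -- use a itself: a ∈ A, dg 0 a ≥ g0, pick neighbor b ∈ comp ∩ B, then
    -- comp ∩ A ⊇ neighbors of b.
    have hga := hdg a (Or.inl ha)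
    have hpos : 0 < (S.dg 0 a : ℝ) := lt_of_lt_of_le S.g0_pos hga
    obtain ⟨b, hb, hbc⟩ := S.exists_nbr hpos
    have hbB : b ∈ S.B := S.sides_opp S.sides_AB ha hb.1
    have hgb := hdg b (Or.inr hbB)
    have h2 : S.dg 0 b ≤ (S.comp 0 a ∩ S.A).card := by
      have h3 := S.dg_le_comp (i := 0) (S.sides_symm S.sides_AB) hbB
      rwa [S.comp_eq_of_mem hbc] at h3
    have h2R : ((S.dg 0 b : ℕ) : ℝ) ≤ ((S.comp 0 a ∩ S.A).card : ℝ) := by exact_mod_cast h2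
    linarith
  obtain ⟨a1, ha1⟩ := S.A_nonempty
  have hAcard : ((S.A.card : ℕ) : ℝ) = S.nn := by
    unfold nn; exact_mod_cast congrArg (Nat.cast : ℕ → ℝ) S.hA
  have hgap := S.gap
  -- pick a2
  have hne2 : (S.A \ (S.comp 0 a1 ∩ S.A)).Nonempty := by
    rw [← Finset.card_pos]
    have h3 := Finset.card_le_card_sdiff_add_card (s := S.A) (t := S.comp 0 a1 ∩ S.A)
    have h4 := h0 a1
    have h5 : (0:ℝ) < ((S.A \ (S.comp 0 a1 ∩ S.A)).card : ℝ) := by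
      have h6 : ((S.A.card : ℕ) : ℝ) ≤ ((S.A \ (S.comp 0 a1 ∩ S.A)).card : ℝ)
          + ((S.comp 0 a1 ∩ S.A).card : ℝ) := by exact_mod_cast h3
      linarith
    exact_mod_cast h5
  obtain ⟨a2, ha2⟩ := hne2
  rw [mem_sdiff] at ha2
  have ha2A := ha2.1
  have ha2n : a2 ∉ S.comp 0 a1 := fun h => ha2.2 (mem_inter.mpr ⟨h, ha2A⟩)
  have hd12 : Disjoint (S.comp 0 a2) (S.comp 0 a1) := S.comp_disjoint ha2n
  -- pick a3
  have hne3 : (S.A \ ((S.comp 0 a1 ∩ S.A) ∪ (S.comp 0 a2 ∩ S.A))).Nonempty := by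
    rw [← Finset.card_pos]
    have h3 := Finset.card_le_card_sdiff_add_card (s := S.A)
      (t := (S.comp 0 a1 ∩ S.A) ∪ (S.comp 0 a2 ∩ S.A))
    have h4 := h0 a1
    have h5 := h0 a2
    have h6 := card_union_le (S.comp 0 a1 ∩ S.A) (S.comp 0 a2 ∩ S.A)
    have h7 : (((S.comp 0 a1 ∩ S.A) ∪ (S.comp 0 a2 ∩ S.A)).card : ℝ)
        ≤ ((S.comp 0 a1 ∩ S.A).card : ℝ) + ((S.comp 0 a2 ∩ S.A).card : ℝ) := by
      exact_mod_cast h6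
    have h8 : ((S.A.card : ℕ) : ℝ)
        ≤ ((S.A \ ((S.comp 0 a1 ∩ S.A) ∪ (S.comp 0 a2 ∩ S.A))).card : ℝ)
          + (((S.comp 0 a1 ∩ S.A) ∪ (S.comp 0 a2 ∩ S.A)).card : ℝ) := by exact_mod_cast h3
    have h9 : (0:ℝ) < ((S.A \ ((S.comp 0 a1 ∩ S.A) ∪ (S.comp 0 a2 ∩ S.A))).card : ℝ) := by
      linarith
    exact_mod_cast h9
  obtain ⟨a3, ha3⟩ := hne3
  rw [mem_sdiff, mem_union] at ha3
  have ha3A := ha3.1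
  have ha3n1 : a3 ∉ S.comp 0 a1 := fun h => ha3.2 (Or.inl (mem_inter.mpr ⟨h, ha3A⟩))
  have ha3n2 : a3 ∉ S.comp 0 a2 := fun h => ha3.2 (Or.inr (mem_inter.mpr ⟨h, ha3A⟩))
  have hd13 : Disjoint (S.comp 0 a3) (S.comp 0 a1) := S.comp_disjoint ha3n1
  have hd23 : Disjoint (S.comp 0 a3) (S.comp 0 a2) := S.comp_disjoint ha3n2
  -- each has A-side ≥ D0 - m0
  have hx1 := hcompA a1 (Or.inl ha1) a1 ha1 (S.mem_comp_self 0 a1)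
  have hx2 := hcompA a2 (Or.inl ha2A) a2 ha2A (S.mem_comp_self 0 a2)
  have hx3 := hcompA a3 (Or.inl ha3A) a3 ha3A (S.mem_comp_self 0 a3)
  -- disjoint subsets of A
  have hsum : ((S.comp 0 a1 ∩ S.A).card : ℝ) + ((S.comp 0 a2 ∩ S.A).card : ℝ)
      + ((S.comp 0 a3 ∩ S.A).card : ℝ) ≤ S.nn := by
    have hu12 : Disjoint (S.comp 0 a1 ∩ S.A) (S.comp 0 a2 ∩ S.A) :=
      hd12.symm.mono inter_subset_left inter_subset_left
    have hu13 : Disjoint (S.comp 0 a1 ∩ S.A) (S.comp 0 a3 ∩ S.A) :=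
      (hd13.symm).mono inter_subset_left inter_subset_left
    have hu23 : Disjoint (S.comp 0 a2 ∩ S.A) (S.comp 0 a3 ∩ S.A) :=
      (hd23.symm).mono inter_subset_left inter_subset_left
    have hU : Disjoint ((S.comp 0 a1 ∩ S.A) ∪ (S.comp 0 a2 ∩ S.A)) (S.comp 0 a3 ∩ S.A) :=
      disjoint_union_left.mpr ⟨hu13, hu23⟩
    have e1 := card_union_of_disjoint hu12
    have e2 := card_union_of_disjoint hU
    have hsub : ((S.comp 0 a1 ∩ S.A) ∪ (S.comp 0 a2 ∩ S.A)) ∪ (S.comp 0 a3 ∩ S.A) ⊆ S.A :=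
      union_subset (union_subset inter_subset_right inter_subset_right) inter_subset_right
    have h3 := card_le_card hsub
    rw [e2, e1, S.hA] at h3
    have h4 : ((S.comp 0 a1 ∩ S.A).card + (S.comp 0 a2 ∩ S.A).card
        + (S.comp 0 a3 ∩ S.A).card : ℕ) ≤ S.N := h3
    have h5 : (((S.comp 0 a1 ∩ S.A).card + (S.comp 0 a2 ∩ S.A).card
        + (S.comp 0 a3 ∩ S.A).card : ℕ) : ℝ) ≤ (S.N : ℝ) := by exact_mod_cast h4
    unfold nn
    push_cast at h5
    linarith
  -- numeric contradiction : 3 * (D0 - m0) ≤ nn is impossible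
  have hD0 := S.D0_eq
  have hm0 := S.m0_eq
  have hs0 := S.s0_big
  have hξp : 0 < S.ξ * S.nn := by linarith [S.hξnn]
  have hnb := S.nn_big
  linarith

/-- One huge component of color `i` while all components of the other color are small. -/
lemma branch_single (hstar : S.Star) (i : Fin 2) (vC : V)
    (hCA : S.nn - S.m0 < ((S.comp i vC ∩ S.A).card : ℝ))
    (hCB : S.nn - S.m0 < ((S.comp i vC ∩ S.B).card : ℝ))
    (hsm : ∀ v, ((S.comp (otherC i) v ∩ S.A).card : ℝ) < S.m0) : False := by
  have hdg : ∀ v, (v ∈ S.A ∨ v ∈ S.B) → S.D0 - S.m0 ≤ (S.dg i v : ℝ) := by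
    intro v hv
    have := S.dg_ge_of_allsmall hstar (j := otherC i) hsm hv
    rwa [otherC_inv i] at this
  have hgap := S.gap
  obtain ⟨TA, TB, hTA, hTB, hTcard, hcov⟩ := S.konig hstar S.sides_AB i vC
  have hTAnn : (0:ℝ) ≤ (TA.card : ℝ) := Nat.cast_nonneg _
  have hTBnn : (0:ℝ) ≤ (TB.card : ℝ) := Nat.cast_nonneg _
  have good : ∀ a ∈ (S.comp i vC ∩ S.A) \ TA, ∀ b ∈ S.B \ TB,
      S.adj a b → S.c a b = otherC i := by
    intro a ha b hb hadj
    rw [mem_sdiff] at ha hb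
    refine eq_otherC (fun hci => ?_)
    rcases hcov a b ha.1 ⟨hadj, hci⟩ with h | h
    · exact ha.2 h
    · exact hb.2 h
  have hT1 := S.T1 hstar S.sides_AB (sdiff_subset.trans inter_subset_right) sdiff_subset
    (otherC i) good
  have hQcard : ((S.B \ TB).card : ℝ) = S.nn - ((TB ∩ S.B).card : ℝ) :=
    S.card_sdiff_inter S.sides_AB TB
  have hTBB : TB ∩ S.B = TB := inter_eq_left.mpr (hTB.trans inter_subset_right)
  have hTAcard : (((S.comp i vC ∩ S.A) \ TA).card : ℝ)
      = ((S.comp i vC ∩ S.A).card : ℝ) - (TA.card : ℝ) := by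
    have h1 := card_sdiff_of_subset hTA
    have h2 : ((((S.comp i vC ∩ S.A) \ TA).card : ℕ) : ℝ)
        = (((S.comp i vC ∩ S.A).card - TA.card : ℕ) : ℝ) := by
      exact_mod_cast congrArg (Nat.cast : ℕ → ℝ) h1
    rwa [Nat.cast_sub (card_le_card hTA)] at h2
  have hx : ((S.comp i vC ∩ S.A).card : ℝ) < S.m0 + (TA.card : ℝ) := by
    rcases hT1 with h | h
    · linarith
    · rw [hQcard, hTBB] at h
      linarith
  -- pick a vertex outside C on side A
  have hAcard : ((S.A.card : ℕ) : ℝ) = S.nn := by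
    unfold nn; exact_mod_cast congrArg (Nat.cast : ℕ → ℝ) S.hA
  have hne : (S.A \ (S.comp i vC ∩ S.A)).Nonempty := by
    rw [← Finset.card_pos]
    have h3 := Finset.card_le_card_sdiff_add_card (s := S.A) (t := S.comp i vC ∩ S.A)
    have h6 : ((S.A.card : ℕ) : ℝ) ≤ ((S.A \ (S.comp i vC ∩ S.A)).card : ℝ)
        + ((S.comp i vC ∩ S.A).card : ℝ) := by exact_mod_cast h3
    have h5 : (0:ℝ) < ((S.A \ (S.comp i vC ∩ S.A)).card : ℝ) := by linarith
    exact_mod_cast h5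
  obtain ⟨as, hasd⟩ := hne
  rw [mem_sdiff] at hasd
  have hasA := hasd.1
  have hasn : as ∉ S.comp i vC := fun h => hasd.2 (mem_inter.mpr ⟨h, hasA⟩)
  have hdisj : Disjoint (S.comp i as) (S.comp i vC) := S.comp_disjoint hasn
  have hga := hdg as (Or.inl hasA)
  have hpos : 0 < (S.dg i as : ℝ) := lt_of_lt_of_le S.g0_pos hga
  obtain ⟨bs, hbs, hbsc⟩ := S.exists_nbr hpos
  have hbsB : bs ∈ S.B := S.sides_opp S.sides_AB hasA hbs.1
  have hy2 : S.D0 - S.m0 ≤ ((S.comp i as ∩ S.B).card : ℝ) := by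
    have h1 := S.dg_le_comp (i := i) S.sides_AB hasA
    have h1R : ((S.dg i as : ℕ) : ℝ) ≤ ((S.comp i as ∩ S.B).card : ℝ) := by exact_mod_cast h1
    linarith
  have hx2 : S.D0 - S.m0 ≤ ((S.comp i as ∩ S.A).card : ℝ) := by
    have h1 := S.dg_le_comp (i := i) (S.sides_symm S.sides_AB) hbsB
    rw [S.comp_eq_of_mem hbsc] at h1
    have h2 := hdg bs (Or.inr hbsB)
    have h1R : ((S.dg i bs : ℕ) : ℝ) ≤ ((S.comp i as ∩ S.A).card : ℝ) := by exact_mod_cast h1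
    linarith
  have hdsum : ∀ X' : Finset V, X'.card = S.N →
      ∀ P Q : Finset V, P ⊆ X' → Q ⊆ X' → Disjoint P Q →
      (P.card : ℝ) + (Q.card : ℝ) ≤ S.nn := by
    intro X' hX' P Q hP hQ hPQ
    have h1 := card_le_card (union_subset hP hQ)
    rw [card_union_of_disjoint hPQ, hX'] at h1
    have h2 : ((P.card + Q.card : ℕ) : ℝ) ≤ ((S.N : ℕ) : ℝ) := by exact_mod_cast h1
    unfold nn
    push_cast at h2
    linarith
  have hyub : ((S.comp i vC ∩ S.B).card : ℝ) ≤ S.nn - (S.D0 - S.m0) := by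
    have := hdsum S.B S.hB (S.comp i vC ∩ S.B) (S.comp i as ∩ S.B)
      inter_subset_right inter_subset_right
      (hdisj.symm.mono inter_subset_left inter_subset_left)
    linarith
  have hxub : ((S.comp i vC ∩ S.A).card : ℝ) ≤ S.nn - (S.D0 - S.m0) := by
    have := hdsum S.A S.hA (S.comp i vC ∩ S.A) (S.comp i as ∩ S.A)
      inter_subset_right inter_subset_right
      (hdisj.symm.mono inter_subset_left inter_subset_left)
    linarith
  -- numeric: nn - g0 ≤ 2 g0 - 2
  have hD0 := S.D0_eq
  have hm0 := S.m0_eq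
  have hs0 := S.s0_big
  have hnb := S.nn_big
  have hξp : 0 < S.ξ * S.nn := by linarith [S.hξnn]
  have hbig : S.nn - (S.D0 - S.m0) ≤ 2 * (S.D0 - S.m0) - 2 := by linarith
  have hdgs : ∀ v, (v ∈ S.comp i vC ∩ S.A ∨ v ∈ S.comp i vC ∩ S.B) →
      (S.D0 - S.m0) ≤ (S.dg i v : ℝ) := by
    intro v hv
    rcases hv with hv | hv
    · exact hdg v (Or.inl (mem_inter.mp hv).2)
    · exact hdg v (Or.inr (mem_inter.mp hv).2)
  rcases le_total ((S.comp i vC ∩ S.A).card) ((S.comp i vC ∩ S.B).card) with hle | hle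
  · have := S.hallmin hstar S.sides_AB i vC hle hdgs (by linarith)
    linarith
  · have hdgs' : ∀ v, (v ∈ S.comp i vC ∩ S.B ∨ v ∈ S.comp i vC ∩ S.A) →
        (S.D0 - S.m0) ≤ (S.dg i v : ℝ) := fun v hv => hdgs v hv.symm
    have := S.hallmin hstar (S.sides_symm S.sides_AB) i vC hle hdgs' (by linarith)
    linarith

lemma cov_flip {i : Fin 2} {vC : V} {TX TY X Y : Finset V} (hS : S.Sides X Y)
    (hcov : ∀ a b, a ∈ S.comp i vC ∩ X → S.R i a b → a ∈ TX ∨ b ∈ TY) :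
    ∀ b a, b ∈ S.comp i vC ∩ Y → S.R i b a → b ∈ TY ∨ a ∈ TX := by
  intro b a hb hR
  have haX : a ∈ X := S.sides_opp (S.sides_symm hS) (mem_inter.mp hb).2 hR.1
  have haC : a ∈ S.comp i vC := S.comp_closed (mem_inter.mp hb).1 hR
  rcases hcov a b (mem_inter.mpr ⟨haC, haX⟩) (S.Rsymm hR) with h | h
  · exact .inr h
  · exact .inl h

lemma dg_le_cover {i : Fin 2} {vC : V} {TX TY X : Finset V}
    (hcov : ∀ a b, a ∈ S.comp i vC ∩ X → S.R i a b → a ∈ TX ∨ b ∈ TY)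
    {a : V} (ha : a ∈ (S.comp i vC ∩ X) \ TX) : (S.dg i a : ℝ) ≤ (TY.card : ℝ) := by
  rw [mem_sdiff] at ha
  have hsub : univ.filter (fun u => S.R i a u) ⊆ TY := by
    intro u hu
    simp only [mem_filter, mem_univ, true_and] at hu
    rcases hcov a u ha.1 hu with h | h
    · exact absurd h ha.2
    · exact h
  have := card_le_card hsub
  unfold dg
  exact_mod_cast this

/-- `T1` applied to the cover-block `((C∩X)\TX, Y\TY)`: the `X`-side of a covered
component is bounded by `m₀ + |TX|`. -/
lemma cover_xbound (hstar : S.Star) {i : Fin 2} {vC : V} {TX TY X Y : Finset V}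
    (hS : S.Sides X Y)
    (hTX : TX ⊆ S.comp i vC ∩ X) (hTY : TY ⊆ S.comp i vC ∩ Y)
    (hsum : (TX.card : ℝ) + (TY.card : ℝ) < S.m0)
    (hcov : ∀ a b, a ∈ S.comp i vC ∩ X → S.R i a b → a ∈ TX ∨ b ∈ TY) :
    ((S.comp i vC ∩ X).card : ℝ) < S.m0 + (TX.card : ℝ) := by
  have hgap := S.gap
  have hTXnn : (0:ℝ) ≤ (TX.card : ℝ) := Nat.cast_nonneg _
  have good : ∀ a ∈ (S.comp i vC ∩ X) \ TX, ∀ b ∈ Y \ TY,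
      S.adj a b → S.c a b = otherC i := by
    intro a ha b hb hadj
    rw [mem_sdiff] at ha hb
    refine eq_otherC (fun hci => ?_)
    rcases hcov a b ha.1 ⟨hadj, hci⟩ with h | h
    · exact ha.2 h
    · exact hb.2 h
  have hT1 := S.T1 hstar hS (sdiff_subset.trans inter_subset_right) sdiff_subset
    (otherC i) good
  have hQcard : ((Y \ TY).card : ℝ) = S.nn - ((TY ∩ Y).card : ℝ) := S.card_sdiff_inter hS TY
  have hTYY : TY ∩ Y = TY := inter_eq_left.mpr (hTY.trans inter_subset_right)
  have hTXcard : (((S.comp i vC ∩ X) \ TX).card : ℝ)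
      = ((S.comp i vC ∩ X).card : ℝ) - (TX.card : ℝ) := by
    have h1 := card_sdiff_of_subset hTX
    have h2 : ((((S.comp i vC ∩ X) \ TX).card : ℕ) : ℝ)
        = (((S.comp i vC ∩ X).card - TX.card : ℕ) : ℝ) := by
      exact_mod_cast congrArg (Nat.cast : ℕ → ℝ) h1
    rwa [Nat.cast_sub (card_le_card hTX)] at h2
  rcases hT1 with h | h
  · linarith
  · rw [hQcard, hTYY] at h
    linarith

lemma split_sets {S1 S2 : Finset V} {k : ℕ} (hk : k ≤ S1.card + S2.card) :
    ∃ S1' S2', S1' ⊆ S1 ∧ S2' ⊆ S2 ∧ S1'.card + S2'.card = k := by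
  rcases le_total k S2.card with h | h
  · obtain ⟨S2', h1, h2⟩ := Finset.exists_subset_card_eq h
    exact ⟨∅, S2', empty_subset _, h1, by simp [h2]⟩
  · obtain ⟨S1', h1, h2⟩ := Finset.exists_subset_card_eq
      (show k - S2.card ≤ S1.card by omega)
    exact ⟨S1', S2, h1, Finset.Subset.refl _, by omega⟩

/-- Both-huge case, sub-branch B1: the cover of the huge `i`-component is small on
both sides. -/
lemma bb_B1 (hstar : S.Star) {i j : Fin 2} (hj : j = otherC i) {vC vD : V}
    (hDA : S.nn - S.m0 < ((S.comp j vD ∩ S.A).card : ℝ))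
    (hDB : S.nn - S.m0 < ((S.comp j vD ∩ S.B).card : ℝ))
    {TA TB : Finset V}
    (hTA : TA ⊆ S.comp i vC ∩ S.A) (hTB : TB ⊆ S.comp i vC ∩ S.B)
    (hCA : S.nn - S.m0 < ((S.comp i vC ∩ S.A).card : ℝ))
    (hCB : S.nn - S.m0 < ((S.comp i vC ∩ S.B).card : ℝ))
    (hsum : (TA.card : ℝ) + (TB.card : ℝ) < S.m0)
    (hcov : ∀ a b, a ∈ S.comp i vC ∩ S.A → S.R i a b → a ∈ TA ∨ b ∈ TB)
    (hsA : (TA.card : ℝ) < 3 * S.nn / 8) (hsB : (TB.card : ℝ) < 3 * S.nn / 8) : False := by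
  have hD0 := S.D0_eq
  have hm0 := S.m0_eq
  have hs0 := S.s0_big
  have hnb := S.nn_big
  have hξp : 0 < S.ξ * S.nn := by linarith [S.hξnn]
  have hgap := S.gap
  set CA := (S.comp i vC ∩ S.A) \ TA with hCAdef
  set CB := (S.comp i vC ∩ S.B) \ TB with hCBdef
  have hcovB := S.cov_flip S.sides_AB hcov
  -- members of CA have large j-degree and lie in D
  have hmemA : ∀ a ∈ CA, a ∈ S.comp j vD ∧ S.D0 - 3 * S.nn / 8 ≤ (S.dg j a : ℝ) := by
    intro a ha
    have h1 : (S.dg i a : ℝ) ≤ (TB.card : ℝ) := S.dg_le_cover hcov ha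
    have haA : a ∈ S.A := (mem_inter.mp (mem_sdiff.mp ha).1).2
    have h2 := S.dg_other (i := i) (Or.inl haA)
    rw [← hj] at h2
    have h3 : S.D0 - 3 * S.nn / 8 ≤ (S.dg j a : ℝ) := by linarith
    have hdm : S.m0 < (S.dg j a : ℝ) := by linarith
    exact ⟨S.mem_huge_of_bigdeg hstar S.sides_AB hDB haA hdm, h3⟩
  have hmemB : ∀ b ∈ CB, b ∈ S.comp j vD ∧ S.D0 - 3 * S.nn / 8 ≤ (S.dg j b : ℝ) := by
    intro b hb
    have h1 : (S.dg i b : ℝ) ≤ (TA.card : ℝ) := by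
      have := S.dg_le_cover (X := S.B) (TX := TB) (TY := TA)
        (fun a b' ha hR => hcovB a b' ha hR) hb
      exact this
    have hbB : b ∈ S.B := (mem_inter.mp (mem_sdiff.mp hb).1).2
    have h2 := S.dg_other (i := i) (Or.inr hbB)
    rw [← hj] at h2
    have h3 : S.D0 - 3 * S.nn / 8 ≤ (S.dg j b : ℝ) := by linarith
    have hdm : S.m0 < (S.dg j b : ℝ) := by linarith
    exact ⟨S.mem_huge_of_bigdeg hstar (S.sides_symm S.sides_AB) hDA hbB hdm, h3⟩
  -- sizes
  have hCAcard : ((CA.card : ℕ) : ℝ) = ((S.comp i vC ∩ S.A).card : ℝ) - (TA.card : ℝ) := by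
    have h1 := card_sdiff_of_subset hTA
    have h2 : ((CA.card : ℕ) : ℝ) = (((S.comp i vC ∩ S.A).card - TA.card : ℕ) : ℝ) := by
      rw [hCAdef]; exact_mod_cast congrArg (Nat.cast : ℕ → ℝ) h1
    rwa [Nat.cast_sub (card_le_card hTA)] at h2
  have hCBcard : ((CB.card : ℕ) : ℝ) = ((S.comp i vC ∩ S.B).card : ℝ) - (TB.card : ℝ) := by
    have h1 := card_sdiff_of_subset hTB
    have h2 : ((CB.card : ℕ) : ℝ) = (((S.comp i vC ∩ S.B).card - TB.card : ℕ) : ℝ) := by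
      rw [hCBdef]; exact_mod_cast congrArg (Nat.cast : ℕ → ℝ) h1
    rwa [Nat.cast_sub (card_le_card hTB)] at h2
  set k := ⌈S.m0⌉₊ with hkdef
  have hkub : (k : ℝ) < S.m0 + 1 := Nat.ceil_lt_add_one (le_of_lt S.m0_pos)
  have hklb : S.m0 ≤ (k : ℝ) := Nat.le_ceil _
  have hkle : k ≤ CA.card + CB.card := by
    have : (k : ℝ) ≤ ((CA.card : ℕ) : ℝ) + ((CB.card : ℕ) : ℝ) := by linarith
    exact_mod_cast this
  obtain ⟨S1, S2, hS1, hS2, hScard⟩ := split_sets hkle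
  have hfin := S.SAT hstar (i := j) (v0 := vD) S.sides_AB
    (hS1.trans (sdiff_subset.trans inter_subset_right))
    (hS2.trans (sdiff_subset.trans inter_subset_right))
    (fun a ha => (hmemA a (hS1 ha)).1) (fun b hb => (hmemB b (hS2 hb)).1)
    (d := S.D0 - 3 * S.nn / 8)
    (fun a ha => (hmemA a (hS1 ha)).2) (fun b hb => (hmemB b (hS2 hb)).2)
    (by
      have : ((S1.card + S2.card : ℕ) : ℝ) = (k : ℝ) := by exact_mod_cast congrArg (Nat.cast : ℕ → ℝ) hScard
      push_cast at this
      linarith)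
  have : ((S1.card + S2.card : ℕ) : ℝ) = (k : ℝ) := by exact_mod_cast congrArg (Nat.cast : ℕ → ℝ) hScard
  push_cast at this
  linarith

/-- Both-huge case, sub-branch P: both covers are heavy on the `Y`-side. -/
lemma bb_P (hstar : S.Star) {i j : Fin 2} (hj : j = otherC i) {vC vD : V}
    {X Y : Finset V} (hS : S.Sides X Y)
    (hCY : S.nn - S.m0 < ((S.comp i vC ∩ Y).card : ℝ))
    (hDX : S.nn - S.m0 < ((S.comp j vD ∩ X).card : ℝ))
    {TX TY UX UY : Finset V}
    (hTX : TX ⊆ S.comp i vC ∩ X) (hTY : TY ⊆ S.comp i vC ∩ Y)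
    (hUX : UX ⊆ S.comp j vD ∩ X) (hUY : UY ⊆ S.comp j vD ∩ Y)
    (hTsum : (TX.card : ℝ) + (TY.card : ℝ) < S.m0)
    (hUsum : (UX.card : ℝ) + (UY.card : ℝ) < S.m0)
    (hcovC : ∀ a b, a ∈ S.comp i vC ∩ X → S.R i a b → a ∈ TX ∨ b ∈ TY)
    (hcovD : ∀ a b, a ∈ S.comp j vD ∩ X → S.R j a b → a ∈ UX ∨ b ∈ UY)
    (hTXs : (TX.card : ℝ) < S.m0 - 3 * S.nn / 8)
    (hUXs : (UX.card : ℝ) < S.m0 - 3 * S.nn / 8) : False := by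
  have hD0 := S.D0_eq
  have hm0 := S.m0_eq
  have hs0 := S.s0_big
  have hnb := S.nn_big
  have hξp : 0 < S.ξ * S.nn := by linarith [S.hξnn]
  have hgap := S.gap
  have hTYnn : (0:ℝ) ≤ (TY.card : ℝ) := Nat.cast_nonneg _
  -- CB := (C ∩ Y) \ TY is nonempty
  have hne : ((S.comp i vC ∩ Y) \ TY).Nonempty := by
    rw [← Finset.card_pos]
    have h1 := Finset.card_le_card_sdiff_add_card (s := S.comp i vC ∩ Y) (t := TY)
    have h2 : ((S.comp i vC ∩ Y).card : ℝ)
        ≤ (((S.comp i vC ∩ Y) \ TY).card : ℝ) + (TY.card : ℝ) := by exact_mod_cast h1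
    have : (0:ℝ) < (((S.comp i vC ∩ Y) \ TY).card : ℝ) := by linarith
    exact_mod_cast this
  obtain ⟨b0, hb0⟩ := hne
  have hb0Y : b0 ∈ Y := (mem_inter.mp (mem_sdiff.mp hb0).1).2
  have h1 : (S.dg i b0 : ℝ) ≤ (TX.card : ℝ) :=
    S.dg_le_cover (fun b a hb hR => S.cov_flip hS hcovC b a hb hR) hb0
  have h2 := S.dg_other (i := i) (S.sides_mem (S.sides_symm hS) hb0Y)
  rw [← hj] at h2
  have h3 : S.D0 - S.m0 + 3 * S.nn / 8 ≤ (S.dg j b0 : ℝ) := by linarith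
  have hdm : S.m0 < (S.dg j b0 : ℝ) := by linarith
  have hb0D : b0 ∈ S.comp j vD :=
    S.mem_huge_of_bigdeg hstar (S.sides_symm hS) hDX hb0Y hdm
  -- hence the X-side of D is at least D0 - m0 + 3nn/8
  have h4 : S.D0 - S.m0 + 3 * S.nn / 8 ≤ ((S.comp j vD ∩ X).card : ℝ) := by
    have h5 := S.dg_le_comp (i := j) (S.sides_symm hS) hb0Y
    rw [S.comp_eq_of_mem hb0D] at h5
    have h5R : ((S.dg j b0 : ℕ) : ℝ) ≤ ((S.comp j vD ∩ X).card : ℝ) := by exact_mod_cast h5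
    linarith
  -- but the cover bound for D forces it below m0 + |UX|
  have h6 := S.cover_xbound hstar hS hUX hUY hUsum hcovD
  linarith

/-- Both-huge case, sub-branch CORE: the `i`-cover is heavy on `Y`, the `j`-cover heavy
on `X`. -/
lemma bb_CORE (hstar : S.Star) {i j : Fin 2} (hj : j = otherC i) {vC vD : V}
    {X Y : Finset V} (hS : S.Sides X Y)
    (hCX : S.nn - S.m0 < ((S.comp i vC ∩ X).card : ℝ))
    (hCY : S.nn - S.m0 < ((S.comp i vC ∩ Y).card : ℝ))
    (hDX : S.nn - S.m0 < ((S.comp j vD ∩ X).card : ℝ))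
    (hDY : S.nn - S.m0 < ((S.comp j vD ∩ Y).card : ℝ))
    {TX TY UX UY : Finset V}
    (hTX : TX ⊆ S.comp i vC ∩ X) (hTY : TY ⊆ S.comp i vC ∩ Y)
    (hUX : UX ⊆ S.comp j vD ∩ X) (hUY : UY ⊆ S.comp j vD ∩ Y)
    (hTsum : (TX.card : ℝ) + (TY.card : ℝ) < S.m0)
    (hUsum : (UX.card : ℝ) + (UY.card : ℝ) < S.m0)
    (hcovC : ∀ a b, a ∈ S.comp i vC ∩ X → S.R i a b → a ∈ TX ∨ b ∈ TY)
    (hcovD : ∀ a b, a ∈ S.comp j vD ∩ X → S.R j a b → a ∈ UX ∨ b ∈ UY)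
    (hTXs : (TX.card : ℝ) < S.m0 - 3 * S.nn / 8)
    (hUYs : (UY.card : ℝ) < S.m0 - 3 * S.nn / 8) : False := by
  have hD0 := S.D0_eq
  have hm0 := S.m0_eq
  have hs0 := S.s0_big
  have hnb := S.nn_big
  have hξe := S.hξe
  have hξp : 0 < S.ξ * S.nn := by linarith [S.hξnn]
  have hgap := S.gap
  have hUXnn : (0:ℝ) ≤ (UX.card : ℝ) := Nat.cast_nonneg _
  have hTYnn : (0:ℝ) ≤ (TY.card : ℝ) := Nat.cast_nonneg _
  have hTXnn : (0:ℝ) ≤ (TX.card : ℝ) := Nat.cast_nonneg _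
  have hUYnn : (0:ℝ) ≤ (UY.card : ℝ) := Nat.cast_nonneg _
  -- step 1 : some a0 ∈ (D ∩ X) \ UX gives y := |C ∩ Y| ≥ D0 - m0 + 3nn/8
  have hneD : ((S.comp j vD ∩ X) \ UX).Nonempty := by
    rw [← Finset.card_pos]
    have h1 := Finset.card_le_card_sdiff_add_card (s := S.comp j vD ∩ X) (t := UX)
    have h2 : ((S.comp j vD ∩ X).card : ℝ)
        ≤ (((S.comp j vD ∩ X) \ UX).card : ℝ) + (UX.card : ℝ) := by exact_mod_cast h1
    have : (0:ℝ) < (((S.comp j vD ∩ X) \ UX).card : ℝ) := by linarith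
    exact_mod_cast this
  obtain ⟨a0, ha0⟩ := hneD
  have ha0X : a0 ∈ X := (mem_inter.mp (mem_sdiff.mp ha0).1).2
  have h1 : (S.dg j a0 : ℝ) ≤ (UY.card : ℝ) := S.dg_le_cover hcovD ha0
  have h2 := S.dg_other (i := j) (S.sides_mem hS ha0X)
  have hji : otherC j = i := by rw [hj, otherC_inv]
  rw [hji] at h2
  have h3 : S.D0 - S.m0 + 3 * S.nn / 8 ≤ (S.dg i a0 : ℝ) := by linarith
  have hdm : S.m0 < (S.dg i a0 : ℝ) := by linarith
  have ha0C : a0 ∈ S.comp i vC := S.mem_huge_of_bigdeg hstar hS hCY ha0X hdm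
  have hy : S.D0 - S.m0 + 3 * S.nn / 8 ≤ ((S.comp i vC ∩ Y).card : ℝ) := by
    have h5 := S.dg_le_comp (i := i) hS ha0X
    rw [S.comp_eq_of_mem ha0C] at h5
    have h5R : ((S.dg i a0 : ℕ) : ℝ) ≤ ((S.comp i vC ∩ Y).card : ℝ) := by exact_mod_cast h5
    linarith
  -- step 2 : x := |C ∩ X| < m0 + |TX|
  have hxub := S.cover_xbound hstar hS hTX hTY hTsum hcovC
  -- step 3 : S1 := X \ (C ∩ X)
  set S1 := X \ (S.comp i vC ∩ X) with hS1def
  have hS1card : ((S1.card : ℕ) : ℝ) = S.nn - ((S.comp i vC ∩ X).card : ℝ) := by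
    rw [hS1def]
    have h6 : X \ (S.comp i vC ∩ X) = X \ S.comp i vC := by
      ext w
      simp only [mem_sdiff, mem_inter]
      tauto
    rw [h6]
    exact S.card_sdiff_inter (S.sides_symm hS) (S.comp i vC)
  have hmemS1 : ∀ a ∈ S1, a ∈ S.comp j vD ∧ 5 * S.nn / 8 + S.ξ * S.nn ≤ (S.dg j a : ℝ) := by
    intro a ha
    rw [hS1def, mem_sdiff] at ha
    have haX := ha.1
    have han : a ∉ S.comp i vC := fun h => ha.2 (mem_inter.mpr ⟨h, haX⟩)
    -- i-neighbours of a avoid C ∩ Y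
    have hdga : (S.dg i a : ℝ) ≤ S.nn - ((S.comp i vC ∩ Y).card : ℝ) := by
      have hsub : univ.filter (fun u => S.R i a u) ⊆ Y \ (S.comp i vC ∩ Y) := by
        intro u hu
        have hu' := S.nbrs_sub (i := i) hS haX (v := a) hu
        rw [mem_inter] at hu'
        refine mem_sdiff.mpr ⟨hu'.2, fun hum => ?_⟩
        have hud : Disjoint (S.comp i a) (S.comp i vC) := S.comp_disjoint han
        exact (Finset.disjoint_left.mp hud hu'.1) (mem_inter.mp hum).1
      have h7 := card_le_card hsub
      have h8 : ((univ.filter (fun u => S.R i a u)).card : ℝ)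
          ≤ ((Y \ (S.comp i vC ∩ Y)).card : ℝ) := by exact_mod_cast h7
      have h9 : ((Y \ (S.comp i vC ∩ Y)).card : ℝ)
          = S.nn - (((S.comp i vC ∩ Y) ∩ Y).card : ℝ) :=
        S.card_sdiff_inter hS (S.comp i vC ∩ Y)
      have h10 : (S.comp i vC ∩ Y) ∩ Y = S.comp i vC ∩ Y := by
        rw [inter_assoc, inter_self]
      rw [h10] at h9
      unfold dg
      linarith
    have h11 := S.dg_other (i := i) (S.sides_mem hS haX)
    rw [← hj] at h11
    have h12 : 5 * S.nn / 8 + S.ξ * S.nn ≤ (S.dg j a : ℝ) := by linarith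
    have hdm' : S.m0 < (S.dg j a : ℝ) := by linarith
    exact ⟨S.mem_huge_of_bigdeg hstar hS hDY haX hdm', h12⟩
  -- step 4 : S2 := (C ∩ Y) \ TY
  set S2 := (S.comp i vC ∩ Y) \ TY with hS2def
  have hS2card : ((S2.card : ℕ) : ℝ) = ((S.comp i vC ∩ Y).card : ℝ) - (TY.card : ℝ) := by
    have h1' := card_sdiff_of_subset hTY
    have h2' : ((S2.card : ℕ) : ℝ) = (((S.comp i vC ∩ Y).card - TY.card : ℕ) : ℝ) := by
      rw [hS2def]; exact_mod_cast congrArg (Nat.cast : ℕ → ℝ) h1'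
    rwa [Nat.cast_sub (card_le_card hTY)] at h2'
  have hmemS2 : ∀ b ∈ S2, b ∈ S.comp j vD ∧ 5 * S.nn / 8 + S.ξ * S.nn ≤ (S.dg j b : ℝ) := by
    intro b hb
    have hbY : b ∈ Y := (mem_inter.mp (mem_sdiff.mp (hS2def ▸ hb)).1).2
    have h1' : (S.dg i b : ℝ) ≤ (TX.card : ℝ) :=
      S.dg_le_cover (fun b' a hb' hR => S.cov_flip hS hcovC b' a hb' hR) (hS2def ▸ hb)
    have h2' := S.dg_other (i := i) (S.sides_mem (S.sides_symm hS) hbY)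
    rw [← hj] at h2'
    have h12 : 5 * S.nn / 8 + S.ξ * S.nn ≤ (S.dg j b : ℝ) := by linarith
    have hdm' : S.m0 < (S.dg j b : ℝ) := by linarith
    exact ⟨S.mem_huge_of_bigdeg hstar (S.sides_symm hS) hDX hbY hdm', h12⟩
  -- sizes : |S1| + |S2| ≥ 5nn/8 ± and k fits
  set k := ⌈S.m0⌉₊ with hkdef
  have hkub : (k : ℝ) < S.m0 + 1 := Nat.ceil_lt_add_one (le_of_lt S.m0_pos)
  have hklb : S.m0 ≤ (k : ℝ) := Nat.le_ceil _
  have hkle : k ≤ S1.card + S2.card := by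
    have : (k : ℝ) ≤ ((S1.card : ℕ) : ℝ) + ((S2.card : ℕ) : ℝ) := by
      rw [hS1card, hS2card]
      linarith
    exact_mod_cast this
  obtain ⟨S1', S2', hS1', hS2', hScard⟩ := split_sets hkle
  have hfin := S.SAT hstar (i := j) (v0 := vD) hS
    (hS1'.trans sdiff_subset)
    (hS2'.trans (sdiff_subset.trans inter_subset_right))
    (fun a ha => (hmemS1 a (hS1' ha)).1) (fun b hb => (hmemS2 b (hS2' hb)).1)
    (d := 5 * S.nn / 8 + S.ξ * S.nn)
    (fun a ha => (hmemS1 a (hS1' ha)).2) (fun b hb => (hmemS2 b (hS2' hb)).2)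
    (by
      have : ((S1'.card + S2'.card : ℕ) : ℝ) = (k : ℝ) := by exact_mod_cast congrArg (Nat.cast : ℕ → ℝ) hScard
      push_cast at this
      linarith)
  have : ((S1'.card + S2'.card : ℕ) : ℝ) = (k : ℝ) := by exact_mod_cast congrArg (Nat.cast : ℕ → ℝ) hScard
  push_cast at this
  linarith

/-- Both colors have a huge component. -/
lemma branch_both (hstar : S.Star) {i j : Fin 2} (hj : j = otherC i) (vC vD : V)
    (hCA : S.nn - S.m0 < ((S.comp i vC ∩ S.A).card : ℝ))
    (hCB : S.nn - S.m0 < ((S.comp i vC ∩ S.B).card : ℝ))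
    (hDA : S.nn - S.m0 < ((S.comp j vD ∩ S.A).card : ℝ))
    (hDB : S.nn - S.m0 < ((S.comp j vD ∩ S.B).card : ℝ)) : False := by
  obtain ⟨TA, TB, hTA, hTB, hTsum, hcovC⟩ := S.konig hstar S.sides_AB i vC
  obtain ⟨UA, UB, hUA, hUB, hUsum, hcovD⟩ := S.konig hstar S.sides_AB j vD
  have hcovC' := S.cov_flip S.sides_AB hcovC
  have hcovD' := S.cov_flip S.sides_AB hcovD
  have hji : i = otherC j := by rw [hj, otherC_inv]
  by_cases hTAs : (TA.card : ℝ) < 3 * S.nn / 8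
  · by_cases hTBs : (TB.card : ℝ) < 3 * S.nn / 8
    · exact S.bb_B1 hstar hj hDA hDB hTA hTB hCA hCB hTsum hcovC hTAs hTBs
    · push_neg at hTBs
      have hTAs' : (TA.card : ℝ) < S.m0 - 3 * S.nn / 8 := by linarith
      by_cases hUAs : (UA.card : ℝ) < 3 * S.nn / 8
      · by_cases hUBs : (UB.card : ℝ) < 3 * S.nn / 8
        · exact S.bb_B1 hstar hji hCA hCB hUA hUB hDA hDB hUsum hcovD hUAs hUBs
        · push_neg at hUBs
          have hUAs' : (UA.card : ℝ) < S.m0 - 3 * S.nn / 8 := by linarith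
          exact S.bb_P hstar hj S.sides_AB hCB hDA hTA hTB hUA hUB hTsum hUsum
            hcovC hcovD hTAs' hUAs'
      · push_neg at hUAs
        have hUBs' : (UB.card : ℝ) < S.m0 - 3 * S.nn / 8 := by linarith
        exact S.bb_CORE hstar hj S.sides_AB hCA hCB hDA hDB hTA hTB hUA hUB hTsum hUsum
          hcovC hcovD hTAs' hUBs'
  · push_neg at hTAs
    have hTBs' : (TB.card : ℝ) < S.m0 - 3 * S.nn / 8 := by linarith
    by_cases hUAs : (UA.card : ℝ) < 3 * S.nn / 8
    · by_cases hUBs : (UB.card : ℝ) < 3 * S.nn / 8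
      · exact S.bb_B1 hstar hji hCA hCB hUA hUB hDA hDB hUsum hcovD hUAs hUBs
      · push_neg at hUBs
        have hUAs' : (UA.card : ℝ) < S.m0 - 3 * S.nn / 8 := by linarith
        exact S.bb_CORE hstar hj (S.sides_symm S.sides_AB) hCB hCA hDB hDA hTB hTA hUB hUA
          (by linarith) (by linarith) hcovC' hcovD' hTBs' hUAs'
    · push_neg at hUAs
      have hUBs' : (UB.card : ℝ) < S.m0 - 3 * S.nn / 8 := by linarith
      exact S.bb_P hstar hj (S.sides_symm S.sides_AB) hCA hDB hTB hTA hUB hUA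
        (by linarith) (by linarith) hcovC' hcovD' hTBs' hUBs'

theorem main (hstar : S.Star) : False := by
  have upg : ∀ (i : Fin 2) (v : V), S.m0 ≤ ((S.comp i v ∩ S.A).card : ℝ) →
      (S.nn - S.m0 < ((S.comp i v ∩ S.A).card : ℝ) ∧
        S.nn - S.m0 < ((S.comp i v ∩ S.B).card : ℝ)) := by
    intro i v hv
    rcases S.dicho hstar S.sides_AB i v with h | h
    · exact (by linarith [h.1] : False).elim
    · exact h
  by_cases h0 : ∃ v, S.m0 ≤ ((S.comp 0 v ∩ S.A).card : ℝ)
  · by_cases h1 : ∃ v, S.m0 ≤ ((S.comp 1 v ∩ S.A).card : ℝ)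
    · obtain ⟨vC, hvC⟩ := h0
      obtain ⟨vD, hvD⟩ := h1
      obtain ⟨hCA, hCB⟩ := upg 0 vC hvC
      obtain ⟨hDA, hDB⟩ := upg 1 vD hvD
      exact S.branch_both hstar (show (1 : Fin 2) = otherC 0 by decide) vC vD hCA hCB hDA hDB
    · push_neg at h1
      obtain ⟨vC, hvC⟩ := h0
      obtain ⟨hCA, hCB⟩ := upg 0 vC hvC
      refine S.branch_single hstar 0 vC hCA hCB ?_
      intro v
      rw [show otherC (0 : Fin 2) = 1 from by decide]
      exact h1 v
  · push_neg at h0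
    by_cases h1 : ∃ v, S.m0 ≤ ((S.comp 1 v ∩ S.A).card : ℝ)
    · obtain ⟨vD, hvD⟩ := h1
      obtain ⟨hDA, hDB⟩ := upg 1 vD hvD
      refine S.branch_single hstar 1 vD hDA hDB ?_
      intro v
      rw [show otherC (1 : Fin 2) = 0 from by decide]
      exact h0 v
    · push_neg at h1
      exact S.branch_SS hstar h0 h1

/-- The abstract core theorem: a large connected monochromatic matching exists. -/
theorem core_exists : ∃ (i : Fin 2) (X Y : Finset V) (pr : Finset (V × V)),
    S.Sides X Y ∧ S.MP i X Y pr ∧ S.m0 ≤ (pr.card : ℝ) := by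
  by_contra h
  push_neg at h
  exact S.main (fun i X Y pr hS hMP => h i X Y pr hS hMP)

end BipSetup
end CMMD

namespace CMMD

open Finset in
/-- Build a `HasConnMatching` witness from a finset of pairwise-disjoint, mutually
reachable color-`i` edges. -/
lemma build_matching {V : Type*} [DecidableEq V] (G : SimpleGraph V)
    (χ : Sym2 V → Fin 2) (i : Fin 2) (X Y : Finset V) (hXY : Disjoint X Y)
    (pr : Finset (V × V))
    (hmem : ∀ p ∈ pr, p.1 ∈ X ∧ p.2 ∈ Y ∧ (colorSubgraph G χ i).Adj p.1 p.2)
    (hinj1 : Set.InjOn Prod.fst (↑pr : Set (V × V)))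
    (hinj2 : Set.InjOn Prod.snd (↑pr : Set (V × V)))
    (hreach : ∀ p ∈ pr, ∀ q ∈ pr, (colorSubgraph G χ i).Reachable p.1 q.1)
    {b : ℝ} (hb : b ≤ 2 * pr.card) :
    HasConnMatching (colorSubgraph G χ i) b := by
  classical
  set W := pr.image Prod.fst ∪ pr.image Prod.snd with hW
  refine ⟨{ verts := ↑W
            Adj := fun u v => ∃ p ∈ pr, (p.1 = u ∧ p.2 = v) ∨ (p.1 = v ∧ p.2 = u)
            adj_sub := ?_
            edge_vert := ?_
            symm := ?_ }, ?_, ?_, ?_⟩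
  · rintro u v ⟨p, hp, ⟨rfl, rfl⟩ | ⟨rfl, rfl⟩⟩
    · exact (hmem p hp).2.2
    · exact (hmem p hp).2.2.symm
  · rintro u v ⟨p, hp, ⟨rfl, rfl⟩ | ⟨rfl, rfl⟩⟩
    · exact Finset.mem_coe.mpr (mem_union_left _ (mem_image_of_mem _ hp))
    · exact Finset.mem_coe.mpr (mem_union_right _ (mem_image_of_mem _ hp))
  · constructor; rintro u v ⟨p, hp, h | h⟩
    · exact ⟨p, hp, Or.inr h⟩
    · exact ⟨p, hp, Or.inl h⟩
  · -- IsMatching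
    intro v hv
    rcases mem_union.mp (Finset.mem_coe.mp hv) with h | h
    · obtain ⟨p, hp, rfl⟩ := mem_image.mp h
      refine ⟨p.2, ⟨p, hp, Or.inl ⟨rfl, rfl⟩⟩, ?_⟩
      rintro w ⟨q, hq, ⟨h1, h2⟩ | ⟨h1, h2⟩⟩
      · have : q = p := hinj1 (Finset.mem_coe.mpr hq) (Finset.mem_coe.mpr hp) h1
        rw [← h2, this]
      · exfalso
        have hX : q.2 ∈ X := by rw [h2]; exact (hmem p hp).1
        exact (Finset.disjoint_right.mp hXY (hmem q hq).2.1) hX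
    · obtain ⟨p, hp, rfl⟩ := mem_image.mp h
      refine ⟨p.1, ⟨p, hp, Or.inr ⟨rfl, rfl⟩⟩, ?_⟩
      rintro w ⟨q, hq, ⟨h1, h2⟩ | ⟨h1, h2⟩⟩
      · exfalso
        have hY : q.1 ∈ Y := by rw [h1]; exact (hmem p hp).2.1
        exact (Finset.disjoint_left.mp hXY (hmem q hq).1) hY
      · have : q = p := hinj2 (Finset.mem_coe.mpr hq) (Finset.mem_coe.mpr hp) h2
        rw [← h1, this]
  · -- reachability
    have key : ∀ u ∈ W, ∃ p ∈ pr, (colorSubgraph G χ i).Reachable u p.1 := by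
      intro u hu
      rcases mem_union.mp hu with h | h
      · obtain ⟨p, hp, rfl⟩ := mem_image.mp h
        exact ⟨p, hp, SimpleGraph.Reachable.refl _⟩
      · obtain ⟨p, hp, rfl⟩ := mem_image.mp h
        exact ⟨p, hp, ((hmem p hp).2.2.symm).reachable⟩
    intro u hu v hv
    obtain ⟨p, hp, hup⟩ := key u (Finset.mem_coe.mp hu)
    obtain ⟨q, hq, hvq⟩ := key v (Finset.mem_coe.mp hv)
    exact (hup.trans (hreach p hp q hq)).trans hvq.symm
  · -- cardinality
    have hdisj : Disjoint (pr.image Prod.fst) (pr.image Prod.snd) := by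
      refine hXY.mono ?_ ?_
      · intro x hx
        obtain ⟨p, hp, rfl⟩ := mem_image.mp hx
        exact (hmem p hp).1
      · intro x hx
        obtain ⟨p, hp, rfl⟩ := mem_image.mp hx
        exact (hmem p hp).2.1
    have hc : W.card = pr.card + pr.card := by
      rw [hW, card_union_of_disjoint hdisj, Finset.card_image_of_injOn hinj1,
        Finset.card_image_of_injOn hinj2]
    have : (W.card : ℝ) = 2 * pr.card := by rw [hc]; push_cast; ring
    calc b ≤ 2 * pr.card := hb
      _ = ((↑W : Set V).ncard : ℝ) := by rw [Set.ncard_coe_finset, this]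

end CMMD

/-- For `0 < ξ ≤ 10⁻³` there exists `N₀` such that: every bipartite graph `G` with parts
of size `N = (2 + 8ξ)k' ≥ N₀` and minimum degree at least `(7/8 + ξ)(2 + 8ξ)k'` has, for
every 2-edge-coloring, a monochromatic connected component containing a matching that
saturates at least `(2 + 0.1ξ)k'` vertices. -/
theorem connected_matching_min_degree (ξ : ℝ) (hξ0 : 0 < ξ) (hξ1 : ξ ≤ 1 / 1000) :
    ∃ N₀ : ℕ, ∀ (k' : ℝ) (N : ℕ), (N : ℝ) = (2 + 8 * ξ) * k' → N₀ ≤ N →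
      ∀ G : SimpleGraph (Fin N ⊕ Fin N), G ≤ completeBipartiteGraph (Fin N) (Fin N) →
      (∀ v, (7 / 8 + ξ) * ((2 + 8 * ξ) * k') ≤ ((G.neighborSet v).ncard : ℝ)) →
      ∀ χ : Sym2 (Fin N ⊕ Fin N) → Fin 2,
        ∃ i : Fin 2, HasConnMatching (colorSubgraph G χ i) ((2 + 0.1 * ξ) * k') := by
  classical
  refine ⟨⌈1000 / ξ⌉₊, ?_⟩
  intro k' N hNk hN0 G hGle hGdeg χ
  have hNbig : (1000 : ℝ) ≤ ξ * N := by
    have h1 : (1000 / ξ : ℝ) ≤ (⌈1000 / ξ⌉₊ : ℝ) := Nat.le_ceil _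
    have h2 : ((⌈1000 / ξ⌉₊ : ℕ) : ℝ) ≤ (N : ℝ) := by exact_mod_cast hN0
    have h3 : (1000 / ξ : ℝ) ≤ (N : ℝ) := le_trans h1 h2
    calc (1000 : ℝ) = ξ * (1000 / ξ) := by field_simp
      _ ≤ ξ * N := mul_le_mul_of_nonneg_left h3 hξ0.le
  let S : CMMD.BipSetup (Fin N ⊕ Fin N) :=
    { A := Finset.univ.image Sum.inl
      B := Finset.univ.image Sum.inr
      adj := G.Adj
      c := fun u v => χ s(u, v)
      ξ := ξ
      k' := k'
      N := N
      hAB := by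
        rw [Finset.disjoint_left]
        rintro x hx hy
        obtain ⟨a, _, rfl⟩ := Finset.mem_image.mp hx
        obtain ⟨b, _, h⟩ := Finset.mem_image.mp hy
        exact Sum.inl_ne_inr h.symm
      hA := by
        rw [Finset.card_image_of_injective _ Sum.inl_injective, Finset.card_univ,
          Fintype.card_fin]
      hB := by
        rw [Finset.card_image_of_injective _ Sum.inr_injective, Finset.card_univ,
          Fintype.card_fin]
      hsymm := fun u v h => h.symm
      hbip := by
        intro u v h
        have h2 := hGle h
        rcases u with a | a <;> rcases v with b | b <;>
          simp [completeBipartiteGraph] at h2 <;> simp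
      hcsymm := fun u v => by show χ s(u, v) = χ s(v, u); rw [Sym2.eq_swap]
      hξ0 := hξ0
      hξ1 := hξ1
      hNk := hNk
      hNbig := hNbig
      hdeg := by
        intro v _
        have h := hGdeg v
        have hset : G.neighborSet v = ↑(Finset.univ.filter (G.Adj v)) := by
          ext u; simp [SimpleGraph.neighborSet]
        rw [hset, Set.ncard_coe_finset] at h
        exact h }
  obtain ⟨i, X, Y, pr, hS, hMP, hcard⟩ := S.core_exists
  obtain ⟨hmem, hinj1, hinj2, hreach⟩ := hMP
  refine ⟨i, ?_⟩
  have hXYdisj : Disjoint X Y := S.sides_disj hS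
  have hmem' : ∀ p ∈ pr, p.1 ∈ X ∧ p.2 ∈ Y ∧ (colorSubgraph G χ i).Adj p.1 p.2 := by
    intro p hp
    obtain ⟨h1, h2, h3⟩ := hmem p hp
    exact ⟨h1, h2, h3⟩
  have htrans : ∀ a b : Fin N ⊕ Fin N, Relation.ReflTransGen (S.R i) a b →
      (colorSubgraph G χ i).Reachable a b := by
    intro a b h
    induction h with
    | refl => exact SimpleGraph.Reachable.refl _
    | tail _ hadj ih => exact ih.trans (SimpleGraph.Adj.reachable hadj)
  have hreach' : ∀ p ∈ pr, ∀ q ∈ pr, (colorSubgraph G χ i).Reachable p.1 q.1 := by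
    intro p hp q hq
    exact htrans _ _ (hreach p hp q hq)
  have hb : (2 + 0.1 * ξ) * k' ≤ 2 * (pr.card : ℝ) := by
    have hm : (1 + 0.05 * ξ) * k' ≤ (pr.card : ℝ) := hcard
    have he : (2 + 0.1 * ξ) * k' = 2 * ((1 + 0.05 * ξ) * k') := by norm_num; ring
    rw [he]
    linarith
  exact CMMD.build_matching G χ i X Y hXYdisj pr hmem' hinj1 hinj2 hreach' hb
end

section
/- Let 0 < ξ ≤ 10⁻³ and let G be a bipartite graph with bipartition {V₁, V₂}, |V₁| = |V₂| = (2 + 8ξ)k′ (with k′ sufficiently large) and minimum degree δ(G) ≥ (7/8 + ξ)(2 + 8ξ)k′, whose edges are 2-colored red and blue. Let C be the vertex set of a connected component of the spanning subgraph of red edges. If for some s ∈ {1, 2} both |C ∩ V_s| ≥ (1 + 4ξ)k′ and |V_{3−s} \ C| ≥ (1 + 4ξ)k′, then the bipartite graph of blue edges of G between C ∩ V_s and V_{3−s} \ C contains a connected matching saturating at least (2 + 8ξ)k′ vertices. -/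
/-- The bipartite graph of edges of `H` with one endpoint in `A` and the other in `B`. -/
def betweenGraph {V : Type*} (H : SimpleGraph V) (A B : Set V) : SimpleGraph V where
  Adj u v := H.Adj u v ∧ ((u ∈ A ∧ v ∈ B) ∨ (u ∈ B ∧ v ∈ A))
  symm := ⟨fun u v h => ⟨h.1.symm, by tauto⟩⟩
  loopless := ⟨fun u h => H.loopless.irrefl u h.1⟩

/-!
Every edge of `G` leaving the red component `C` is blue, so the blue graph between
`A = C ∩ V_s` and `B = V_{3-s} \ C` inherits the minimum degree of `G`: each vertex misses at most
`N / 8` vertices of the opposite part, while `|A|, |B| ≥ N / 2`. In such a nearly complete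
bipartite graph two vertices on the same side have a common neighbour, so `A ∪ B` lies in one
component, and Hall's condition holds for any part of `A` of size at most `|B|`; this gives a
matching saturating `2 min(|A|, |B|) ≥ N` vertices.
-/

theorem HasConnMatching.mono {V : Type*} {G : SimpleGraph V} {b b' : ℝ}
    (h : HasConnMatching G b') (hb : b ≤ b') : HasConnMatching G b :=
  let ⟨M, hM, hreach, hcard⟩ := h
  ⟨M, hM, hreach, hb.trans hcard⟩

theorem colorSubgraph_one_adj_of_mem_supp_of_notMem_supp {V : Type*} {G : SimpleGraph V}
    {χ : Sym2 V → Fin 2} {c : (colorSubgraph G χ 0).ConnectedComponent} {a b : V}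
    (ha : a ∈ c.supp) (hb : b ∉ c.supp) (h : G.Adj a b) : (colorSubgraph G χ 1).Adj a b := by
  refine ⟨h, ?_⟩
  by_contra hχ
  have hred : (colorSubgraph G χ 0).Adj a b := ⟨h, by omega⟩
  exact hb (c.mem_supp_of_adj_mem_supp ha hred)

namespace SimpleGraph

variable {V : Type*} {G H : SimpleGraph V} {A B : Set V} {D : ℕ}

def MissesAtMost (H : SimpleGraph V) (A B : Set V) (D : ℕ) : Prop :=
  ∀ a ∈ A, (B \ H.neighborSet a).ncard ≤ D

section MissesAtMost

variable [Finite V]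

theorem MissesAtMost.of_adj {A' B' : Set V} (h : G.MissesAtMost A B D) (hA : A' ⊆ A)
    (hB : B' ⊆ B) (hadj : ∀ a ∈ A', ∀ b ∈ B', G.Adj a b → H.Adj a b) :
    H.MissesAtMost A' B' D := fun a ha =>
  (Set.ncard_le_ncard fun b (hb : b ∈ B' \ H.neighborSet a) =>
    (⟨hB hb.1, fun hab => hb.2 (hadj a ha b hb.1 hab)⟩ : b ∈ B \ G.neighborSet a)).trans
    (h a (hA ha))

theorem MissesAtMost.of_neighborSet_subset {X Y : Set V} (hsub : ∀ u ∈ X, G.neighborSet u ⊆ Y)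
    (hdeg : ∀ u ∈ X, Y.ncard ≤ (G.neighborSet u).ncard + D) :
    G.MissesAtMost X Y D := fun u hu => by
  rw [Set.ncard_sdiff (hsub u hu)]
  exact Nat.sub_le_iff_le_add'.2 (hdeg u hu)

theorem MissesAtMost.exists_adj {S : Set V} {a : V} (h : H.MissesAtMost A B D) (ha : a ∈ A)
    (hS : S ⊆ B) (hD : D < S.ncard) : ∃ b ∈ S, H.Adj a b := by
  by_contra! hnadj
  have : S ⊆ B \ H.neighborSet a := fun b hb => ⟨hS hb, hnadj b hb⟩
  exact ((Set.ncard_le_ncard this).trans (h a ha)).not_gt hD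

theorem MissesAtMost.ncard_le_ncard_inter_add {a : V} (h : H.MissesAtMost A B D) (ha : a ∈ A) :
    B.ncard ≤ (B ∩ H.neighborSet a).ncard + D := by
  rw [← Set.ncard_inter_add_ncard_sdiff_eq_ncard B (H.neighborSet a)]
  exact Nat.add_le_add_left (h a ha) _

theorem MissesAtMost.exists_common_neighbor {x y : V} (h : H.MissesAtMost A B D)
    (hB : 2 * D < B.ncard) (hx : x ∈ A) (hy : y ∈ A) :
    ∃ b ∈ B, H.Adj x b ∧ H.Adj y b := by
  have := h.ncard_le_ncard_inter_add hx
  obtain ⟨b, ⟨hbB, hxb⟩, hyb⟩ :=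
    h.exists_adj (S := B ∩ H.neighborSet x) hy Set.inter_subset_left (by omega)
  exact ⟨b, hbB, hxb, hyb⟩

theorem MissesAtMost.reachable (hAB : H.MissesAtMost A B D) (hBA : H.MissesAtMost B A D)
    (hA : 2 * D < A.ncard) (hB : 2 * D < B.ncard) :
    ∀ u ∈ A ∪ B, ∀ v ∈ A ∪ B, H.Reachable u v := by
  have reachable_A : ∀ u ∈ A, ∀ v ∈ A, H.Reachable u v := fun u hu v hv => by
    obtain ⟨b, -, hub, hvb⟩ := hAB.exists_common_neighbor hB hu hv
    exact hub.reachable.trans hvb.reachable.symm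
  have reaches_A : ∀ u ∈ A ∪ B, ∃ a ∈ A, H.Reachable u a := by
    rintro u (hu | hu)
    · exact ⟨u, hu, .rfl⟩
    · obtain ⟨a, ha, hua, -⟩ := hBA.exists_common_neighbor hA hu hu
      exact ⟨a, ha, hua.reachable⟩
  intro u hu v hv
  obtain ⟨a, ha, hua⟩ := reaches_A u hu
  obtain ⟨a', ha', hva'⟩ := reaches_A v hv
  exact hua.trans ((reachable_A a ha a' ha').trans hva'.symm)

/-- Hall's condition holds: a set `S ⊆ A` with `|S| ≤ |B| - D` already has `|B| - D` neighbours
in `B`, and a larger one has more than `D` elements, so it is adjacent to every vertex of `B`. -/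
theorem MissesAtMost.exists_injective (hAB : H.MissesAtMost A B D)
    (hBA : H.MissesAtMost B A D) (hB : 2 * D < B.ncard) (hle : A.ncard ≤ B.ncard) :
    ∃ f : A → V, Function.Injective f ∧ ∀ a, f a ∈ B ∧ H.Adj a (f a) := by
  classical
  have := Fintype.ofFinite V
  refine (Fintype.all_card_le_filter_rel_iff_exists_injective
    fun (a : A) b => b ∈ B ∧ H.Adj a b).1 fun S => ?_
  set T : Finset V := {b | ∃ a ∈ S, b ∈ B ∧ H.Adj a b}
  have mem_T {a : A} {b : V} (ha : a ∈ S) (hb : b ∈ B) (hab : H.Adj a b) :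
      b ∈ (T : Set V) := by
    simpa [T] using ⟨a, ⟨a.2, ha⟩, hb, hab⟩
  rcases S.eq_empty_or_nonempty with rfl | ⟨a, haS⟩
  · simp
  rw [← Set.ncard_coe_finset T]
  by_cases hS : S.card + D ≤ B.ncard
  · have : B ∩ H.neighborSet a ⊆ T := fun b hb => mem_T haS hb.1 hb.2
    have := (hAB.ncard_le_ncard_inter_add a.2).trans
      (Nat.add_le_add_right (Set.ncard_le_ncard this) D)
    omega
  · have hB_sub : B ⊆ T := fun b hb => by
      have hS_ncard : ((Subtype.val '' (S : Set A)) : Set V).ncard = S.card := by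
        rw [Set.ncard_image_of_injective _ Subtype.val_injective, Set.ncard_coe_finset]
      obtain ⟨_, ⟨a, ha, rfl⟩, hba⟩ :=
        hBA.exists_adj (S := Subtype.val '' (S : Set A)) hb (by rintro _ ⟨a, -, rfl⟩; exact a.2)
          (by omega)
      exact mem_T ha hb hba.symm
    calc S.card ≤ Fintype.card A := S.card_le_univ
      _ = A.ncard := by rw [Fintype.card_eq_nat_card, Nat.card_coe_set_eq]
      _ ≤ B.ncard := hle
      _ ≤ (T : Set V).ncard := Set.ncard_le_ncard hB_sub

theorem MissesAtMost.exists_isMatching (hdisj : Disjoint A B) (hAB : H.MissesAtMost A B D)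
    (hBA : H.MissesAtMost B A D) (hB : 2 * D < B.ncard) (hle : A.ncard ≤ B.ncard) :
    ∃ M : H.Subgraph, M.IsMatching ∧ M.verts ⊆ A ∪ B ∧ M.verts.ncard = 2 * A.ncard := by
  obtain ⟨f, hf, hfB⟩ := hAB.exists_injective hBA hB hle
  have hrange : Set.range f ⊆ B := Set.range_subset_iff.2 fun a => (hfB a).1
  obtain ⟨M, hM, hMmatch⟩ := Subgraph.IsMatching.exists_of_disjoint_sets_of_equiv
    (hdisj.mono_right hrange) (Equiv.ofInjective f hf) fun a => (hfB a).2
  refine ⟨M, hMmatch, hM ▸ Set.union_subset_union_right A hrange, ?_⟩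
  rw [hM, Set.ncard_union_eq (hdisj.mono_right hrange), Set.ncard_range_of_injective hf,
    Nat.card_coe_set_eq, two_mul]

theorem MissesAtMost.hasConnMatching (hdisj : Disjoint A B) (hAB : H.MissesAtMost A B D)
    (hBA : H.MissesAtMost B A D) (hA : 2 * D < A.ncard) (hB : 2 * D < B.ncard) :
    HasConnMatching H (2 * min A.ncard B.ncard : ℕ) := by
  obtain ⟨A', hA'A, hA'⟩ := Set.exists_subset_card_eq (min_le_left A.ncard B.ncard)
  obtain ⟨M, hM, hMverts, hMcard⟩ :=
    (hAB.of_adj hA'A subset_rfl fun _ _ _ _ => id).exists_isMatching (hdisj.mono_left hA'A)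
      (hBA.of_adj subset_rfl hA'A fun _ _ _ _ => id) hB (hA' ▸ min_le_right _ _)
  have hreach := hAB.reachable hBA hA hB
  refine ⟨M, hM, fun u hu v hv => hreach u ?_ v ?_, by rw [hMcard, hA']⟩
  · exact Set.union_subset_union_left B hA'A (hMverts hu)
  · exact Set.union_subset_union_left B hA'A (hMverts hv)

end MissesAtMost

theorem neighborSet_inl_subset_range_inr {α β : Type*} {G : SimpleGraph (α ⊕ β)}
    (hG : G ≤ completeBipartiteGraph α β) :
    ∀ u ∈ Set.range Sum.inl, G.neighborSet u ⊆ Set.range Sum.inr := by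
  rintro _ ⟨a, rfl⟩ (_ | b) h
  · simpa using hG h
  · exact ⟨b, rfl⟩

theorem neighborSet_inr_subset_range_inl {α β : Type*} {G : SimpleGraph (α ⊕ β)}
    (hG : G ≤ completeBipartiteGraph α β) :
    ∀ u ∈ Set.range Sum.inr, G.neighborSet u ⊆ Set.range Sum.inl := by
  rintro _ ⟨b, rfl⟩ (a | _) h
  · exact ⟨a, rfl⟩
  · simpa using hG h

theorem missesAtMost_of_le_completeBipartiteGraph {N D : ℕ} {G : SimpleGraph (Fin N ⊕ Fin N)}
    (hG : G ≤ completeBipartiteGraph (Fin N) (Fin N))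
    (hdeg : ∀ v, N ≤ (G.neighborSet v).ncard + D) {X Y : Set (Fin N ⊕ Fin N)}
    (hXY : X = Set.range Sum.inl ∧ Y = Set.range Sum.inr ∨
      X = Set.range Sum.inr ∧ Y = Set.range Sum.inl) :
    G.MissesAtMost X Y D := by
  have hl := Set.ncard_range_of_injective (Sum.inl_injective (α := Fin N) (β := Fin N))
  have hr := Set.ncard_range_of_injective (Sum.inr_injective (α := Fin N) (β := Fin N))
  rw [Nat.card_eq_fintype_card, Fintype.card_fin] at hl hr
  rcases hXY with ⟨rfl, rfl⟩ | ⟨rfl, rfl⟩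
  · exact .of_neighborSet_subset (neighborSet_inl_subset_range_inr hG) fun u _ =>
      hr.trans_le (hdeg u)
  · exact .of_neighborSet_subset (neighborSet_inr_subset_range_inl hG) fun u _ =>
      hl.trans_le (hdeg u)

end SimpleGraph

open SimpleGraph

theorem blue_connected_matching_across_red_component_general (ξ : ℝ) (hξ0 : 0 < ξ) :
    ∃ K₀ : ℝ, ∀ k' : ℝ, K₀ ≤ k' → ∀ N : ℕ, (N : ℝ) = (2 + 8 * ξ) * k' →
      ∀ G : SimpleGraph (Fin N ⊕ Fin N), G ≤ completeBipartiteGraph (Fin N) (Fin N) →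
      (∀ v, (7 / 8 + ξ) * ((2 + 8 * ξ) * k') ≤ ((G.neighborSet v).ncard : ℝ)) →
      ∀ χ : Sym2 (Fin N ⊕ Fin N) → Fin 2,
      ∀ c : (colorSubgraph G χ 0).ConnectedComponent,
      ∀ Vs Vt : Set (Fin N ⊕ Fin N),
        ((Vs = Set.range Sum.inl ∧ Vt = Set.range Sum.inr) ∨
          (Vs = Set.range Sum.inr ∧ Vt = Set.range Sum.inl)) →
        (1 + 4 * ξ) * k' ≤ (((c.supp ∩ Vs)).ncard : ℝ) →
        (1 + 4 * ξ) * k' ≤ ((Vt \ c.supp).ncard : ℝ) →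
        HasConnMatching (betweenGraph (colorSubgraph G χ 1) (c.supp ∩ Vs) (Vt \ c.supp))
          ((2 + 8 * ξ) * k') := by
  refine ⟨1, fun k' hk' N hN G hG hdeg χ c Vs Vt hVst hA hB => ?_⟩
  have hdegN : ∀ v, N ≤ (G.neighborSet v).ncard + N / 8 := fun v => by
    have : (7 * N : ℝ) ≤ 8 * (G.neighborSet v).ncard := by nlinarith [hdeg v]
    have : 7 * N ≤ 8 * (G.neighborSet v).ncard := by exact_mod_cast this
    omega
  have hblue : ∀ a ∈ c.supp ∩ Vs, ∀ b ∈ Vt \ c.supp, G.Adj a b →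
      (betweenGraph (colorSubgraph G χ 1) (c.supp ∩ Vs) (Vt \ c.supp)).Adj a b :=
    fun a ha b hb h =>
      ⟨colorSubgraph_one_adj_of_mem_supp_of_notMem_supp ha.1 hb.2 h, .inl ⟨ha, hb⟩⟩
  have hAB := (missesAtMost_of_le_completeBipartiteGraph hG hdegN hVst).of_adj
    Set.inter_subset_right Set.sdiff_subset hblue
  have hBA := (missesAtMost_of_le_completeBipartiteGraph hG hdegN
    (hVst.symm.imp And.symm And.symm)).of_adj Set.sdiff_subset Set.inter_subset_right
    fun b hb a ha h => (hblue a ha b hb h.symm).symm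
  have hNA : (N : ℝ) ≤ 2 * (c.supp ∩ Vs).ncard := by linarith
  have hNB : (N : ℝ) ≤ 2 * (Vt \ c.supp).ncard := by linarith
  norm_cast at hNA hNB
  have hN0 : 0 < N := by exact_mod_cast (show (0 : ℝ) < N by nlinarith)
  refine (hAB.hasConnMatching (Set.disjoint_left.2 fun x hx hx' => hx'.2 hx.1) hBA
    (by omega) (by omega)).mono ?_
  rw [← hN]
  exact_mod_cast (by omega : N ≤ 2 * min (c.supp ∩ Vs).ncard (Vt \ c.supp).ncard)

/-- Claim: with `C` the vertex set of a red component, if `|C ∩ V_s| ≥ (1+4ξ)k'` and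
`|V_{3−s} \ C| ≥ (1+4ξ)k'`, then the blue bipartite graph between `C ∩ V_s` and
`V_{3−s} \ C` contains a connected matching saturating at least `(2+8ξ)k'` vertices. -/
theorem blue_connected_matching_across_red_component (ξ : ℝ) (hξ0 : 0 < ξ)
    (hξ1 : ξ ≤ 1 / 1000) :
    ∃ K₀ : ℝ, ∀ k' : ℝ, K₀ ≤ k' → ∀ N : ℕ, (N : ℝ) = (2 + 8 * ξ) * k' →
      ∀ G : SimpleGraph (Fin N ⊕ Fin N), G ≤ completeBipartiteGraph (Fin N) (Fin N) →
      (∀ v, (7 / 8 + ξ) * ((2 + 8 * ξ) * k') ≤ ((G.neighborSet v).ncard : ℝ)) →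
      ∀ χ : Sym2 (Fin N ⊕ Fin N) → Fin 2,
      ∀ c : (colorSubgraph G χ 0).ConnectedComponent,
      ∀ Vs Vt : Set (Fin N ⊕ Fin N),
        ((Vs = Set.range Sum.inl ∧ Vt = Set.range Sum.inr) ∨
          (Vs = Set.range Sum.inr ∧ Vt = Set.range Sum.inl)) →
        (1 + 4 * ξ) * k' ≤ (((c.supp ∩ Vs)).ncard : ℝ) →
        (1 + 4 * ξ) * k' ≤ ((Vt \ c.supp).ncard : ℝ) →
        HasConnMatching (betweenGraph (colorSubgraph G χ 1) (c.supp ∩ Vs) (Vt \ c.supp))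
          ((2 + 8 * ξ) * k') :=
  blue_connected_matching_across_red_component_general ξ hξ0
end

section
/- Let 0 < ξ ≤ 10⁻³ and let G be a bipartite graph with bipartition {V₁, V₂}, |V₁| = |V₂| = (2 + 8ξ)k′ (with k′ sufficiently large) and minimum degree δ(G) ≥ (7/8 + ξ)(2 + 8ξ)k′, whose edges are 2-colored red and blue. Let C be the vertex set of a connected component of the spanning subgraph of red edges, and let {T, U, S} be a partition of C such that every vertex of T has fewer than ξ²k′ red neighbors in T and no red neighbors in U. If for some s ∈ {1, 2} both |(T ∪ U) ∩ V_s| ≥ (1 + 4ξ)k′ and |V_{3−s} \ (U ∪ S)| ≥ (1 + 4ξ)k′, then the bipartite graph of blue edges of G between (T ∪ U) ∩ V_s and V_{3−s} \ (U ∪ S) contains a connected matching saturating at least (2 + 8ξ)k′ vertices. -/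
/-! Put `A = (T ∪ U) ∩ V_s` and `B = V_t \ (U ∪ S)`. The partition hypotheses force every red
edge between `A` and `B` to join two vertices of `T`, so each vertex of `A ∪ B` has at most
`ξ²k'` red neighbours on the other side. With the minimum degree this means that in blue every
vertex misses at most `γ = (1/8 - ξ)N + ξ²k'` vertices of the other side, and `2γ < |A|, |B|`.
Hence any two vertices on one side have a common blue neighbour, so the blue graph between `A`
and `B` is connected, and Hall's condition holds for the smaller side: a matching saturating it
covers at least `N = (2 + 8ξ)k'` vertices. -/

open Set

theorem Set.ncard_add_ncard_le_ncard_inter_add_ncard {α : Type*} {s t u : Set α} (hs : s ⊆ u)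
    (ht : t ⊆ u) (hu : u.Finite) : s.ncard + t.ncard ≤ (s ∩ t).ncard + u.ncard := by
  rw [← ncard_union_add_ncard_inter s t (hu.subset hs) (hu.subset ht), add_comm]
  exact Nat.add_le_add_left (ncard_le_ncard (union_subset hs ht) hu) _

theorem Set.inter_nonempty_of_ncard_lt_ncard_add_ncard {α : Type*} {s t u : Set α} (hs : s ⊆ u)
    (ht : t ⊆ u) (hu : u.Finite) (h : u.ncard < s.ncard + t.ncard) : (s ∩ t).Nonempty := by
  have := ncard_add_ncard_le_ncard_inter_add_ncard hs ht hu
  exact nonempty_of_ncard_ne_zero (by omega)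

namespace SimpleGraph

variable {V : Type*}

structure IsAlmostCompleteBipartiteWith (H : SimpleGraph V) (A B : Set V) (γ : ℝ) : Prop
    extends H.IsBipartiteWith A B where
  ncard_neighborSet_left : ∀ v ∈ A, (B.ncard : ℝ) - γ ≤ (H.neighborSet v).ncard
  ncard_neighborSet_right : ∀ w ∈ B, (A.ncard : ℝ) - γ ≤ (H.neighborSet w).ncard

theorem IsBipartiteWith.two_mul_ncard_le_ncard_verts [Finite V] {H : SimpleGraph V}
    {A B : Set V} (hH : H.IsBipartiteWith A B) {M : H.Subgraph} (hM : M.IsMatching)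
    (hAM : A ⊆ M.verts) : 2 * A.ncard ≤ M.verts.ncard := by
  choose p hp using fun a : A => hM (hAM a.2)
  have hp_inj : Function.Injective p := fun a b hab =>
    Subtype.ext (hM.eq_of_adj_right (hp a).1 (hab ▸ (hp b).1))
  have hpB : range p ⊆ B := by
    rintro _ ⟨a, rfl⟩
    exact hH.mem_of_mem_adj a.2 (M.adj_sub (hp a).1)
  have hpM : range p ⊆ M.verts := by
    rintro _ ⟨a, rfl⟩
    exact M.edge_vert (hp a).1.symm
  calc 2 * A.ncard = (A ∪ range p).ncard := by
        rw [ncard_union_eq (hH.disjoint.mono_right hpB), ncard_range_of_injective hp_inj,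
          Nat.card_coe_set_eq]
        ring
    _ ≤ M.verts.ncard := ncard_le_ncard (union_subset hAM hpM)

namespace IsAlmostCompleteBipartiteWith

variable {H : SimpleGraph V} {A B : Set V} {γ : ℝ}

theorem symm (h : H.IsAlmostCompleteBipartiteWith A B γ) :
    H.IsAlmostCompleteBipartiteWith B A γ :=
  ⟨h.toIsBipartiteWith.symm, h.ncard_neighborSet_right, h.ncard_neighborSet_left⟩

variable [Finite V]

theorem exists_common_neighbor (h : H.IsAlmostCompleteBipartiteWith A B γ)
    (hB : 2 * γ < B.ncard) {x y : V} (hx : x ∈ A) (hy : y ∈ A) :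
    ∃ w, H.Adj x w ∧ H.Adj y w := by
  have hx' := h.ncard_neighborSet_left x hx
  have hy' := h.ncard_neighborSet_left y hy
  exact inter_nonempty_of_ncard_lt_ncard_add_ncard
    (s := H.neighborSet x) (t := H.neighborSet y)
    (isBipartiteWith_neighborSet_subset h.toIsBipartiteWith hx)
    (isBipartiteWith_neighborSet_subset h.toIsBipartiteWith hy) (toFinite B)
    (by rw [← Nat.cast_lt (α := ℝ), Nat.cast_add]; linarith)

theorem exists_adj_of_mem_right (h : H.IsAlmostCompleteBipartiteWith A B γ)
    (hA : 2 * γ < A.ncard) {w : V} (hw : w ∈ B) : ∃ v ∈ A, H.Adj w v := by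
  have hpos : (0 : ℝ) < (H.neighborSet w).ncard := by
    linarith [h.ncard_neighborSet_right w hw, (A.ncard.cast_nonneg : (0 : ℝ) ≤ _)]
  obtain ⟨v, hv⟩ := (ncard_pos (toFinite _)).1 (by exact_mod_cast hpos)
  exact ⟨v, h.mem_of_mem_adj' hw hv.symm, hv⟩

theorem reachable (h : H.IsAlmostCompleteBipartiteWith A B γ) (hA : 2 * γ < A.ncard)
    (hB : 2 * γ < B.ncard) {u v : V} (hu : u ∈ A ∪ B) (hv : v ∈ A ∪ B) : H.Reachable u v := by
  have reach_left : ∀ u ∈ A ∪ B, ∃ a ∈ A, H.Reachable u a := by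
    rintro u (hu | hu)
    · exact ⟨u, hu, .rfl⟩
    · obtain ⟨a, ha, hua⟩ := h.exists_adj_of_mem_right hA hu
      exact ⟨a, ha, hua.reachable⟩
  obtain ⟨a, ha, hua⟩ := reach_left u hu
  obtain ⟨b, hb, hvb⟩ := reach_left v hv
  obtain ⟨w, haw, hbw⟩ := h.exists_common_neighbor hB ha hb
  exact hua.trans (haw.reachable.trans (hbw.reachable.symm.trans hvb.symm))

/-- A small set `s ⊆ A` is served by the neighbourhood of one of its vertices; a large one
meets the neighbourhood of every vertex of `B`. -/
theorem ncard_le_ncard_biUnion_neighborSet (h : H.IsAlmostCompleteBipartiteWith A B γ)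
    (hB : 2 * γ ≤ B.ncard) (hAB : A.ncard ≤ B.ncard) {s : Set V} (hs : s ⊆ A) :
    s.ncard ≤ (⋃ x ∈ s, H.neighborSet x).ncard := by
  rcases s.eq_empty_or_nonempty with rfl | ⟨x, hx⟩
  · simp
  by_cases hsmall : (s.ncard : ℝ) ≤ B.ncard - γ
  · have hsub : ((H.neighborSet x).ncard : ℝ) ≤ (⋃ x ∈ s, H.neighborSet x).ncard := by
      exact_mod_cast ncard_le_ncard (subset_biUnion_of_mem hx)
    exact_mod_cast hsmall.trans ((h.ncard_neighborSet_left x (hs hx)).trans hsub)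
  · have hcover : B ⊆ ⋃ x ∈ s, H.neighborSet x := by
      intro w hw
      have hw' := h.ncard_neighborSet_right w hw
      obtain ⟨y, hys, hwy⟩ := inter_nonempty_of_ncard_lt_ncard_add_ncard (t := H.neighborSet w) hs
        (isBipartiteWith_neighborSet_subset' h.toIsBipartiteWith hw) (toFinite A)
        (by rw [← Nat.cast_lt (α := ℝ), Nat.cast_add]; linarith)
      exact mem_biUnion hys (H.adj_symm hwy)
    calc s.ncard ≤ A.ncard := ncard_le_ncard hs
      _ ≤ B.ncard := hAB
      _ ≤ _ := ncard_le_ncard hcover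

theorem exists_isMatching_two_mul_ncard_le (h : H.IsAlmostCompleteBipartiteWith A B γ)
    (hB : 2 * γ ≤ B.ncard) (hAB : A.ncard ≤ B.ncard) :
    ∃ M : H.Subgraph, M.IsMatching ∧ 2 * A.ncard ≤ M.verts.ncard := by
  have : H.LocallyFinite := fun _ => Fintype.ofFinite _
  obtain ⟨M, hAM, hM⟩ := exists_isMatching_of_forall_ncard_le h.toIsBipartiteWith
    fun _ hs => h.ncard_le_ncard_biUnion_neighborSet hB hAB hs
  exact ⟨M, hM, h.two_mul_ncard_le_ncard_verts hM hAM⟩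

theorem hasConnMatching (h : H.IsAlmostCompleteBipartiteWith A B γ) (hA : 2 * γ < A.ncard)
    (hB : 2 * γ < B.ncard) {b : ℝ} (hbA : b ≤ 2 * A.ncard) (hbB : b ≤ 2 * B.ncard) :
    HasConnMatching H b := by
  obtain ⟨M, hM, hcard⟩ : ∃ M : H.Subgraph, M.IsMatching ∧ b ≤ M.verts.ncard := by
    rcases le_total A.ncard B.ncard with hAB | hBA
    · obtain ⟨M, hM, hcard⟩ := h.exists_isMatching_two_mul_ncard_le hB.le hAB
      exact ⟨M, hM, hbA.trans (by exact_mod_cast hcard)⟩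
    · obtain ⟨M, hM, hcard⟩ := h.symm.exists_isMatching_two_mul_ncard_le hA.le hBA
      exact ⟨M, hM, hbB.trans (by exact_mod_cast hcard)⟩
  have hverts : M.verts ⊆ A ∪ B := fun v hv => by
    obtain ⟨w, hvw, -⟩ := hM hv
    rcases h.mem_of_adj (M.adj_sub hvw) with ⟨hvA, -⟩ | ⟨hvB, -⟩
    exacts [Or.inl hvA, Or.inr hvB]
  exact ⟨M, hM, fun u hu v hv => h.reachable hA hB (hverts hu) (hverts hv), hcard⟩

end IsAlmostCompleteBipartiteWith

theorem isBipartiteWith_betweenGraph (H : SimpleGraph V) {A B : Set V} (hAB : Disjoint A B) :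
    (betweenGraph H A B).IsBipartiteWith A B :=
  ⟨hAB, fun _ _ h => h.2⟩

theorem betweenGraph_comm (H : SimpleGraph V) (A B : Set V) :
    betweenGraph H A B = betweenGraph H B A := by
  ext u v
  exact and_congr_right' or_comm

theorem betweenGraph_neighborSet_of_mem_left (H : SimpleGraph V) {A B : Set V}
    (hAB : Disjoint A B) {v : V} (hv : v ∈ A) :
    (betweenGraph H A B).neighborSet v = H.neighborSet v ∩ B := by
  ext w
  have hvB : v ∉ B := hAB.notMem_of_mem_left hv
  simp only [mem_neighborSet, betweenGraph, mem_inter_iff]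
  tauto

theorem isBipartiteWith_of_le_completeBipartiteGraph {α : Type*}
    {G : SimpleGraph (α ⊕ α)} (hG : G ≤ completeBipartiteGraph α α) {P Q : Set (α ⊕ α)}
    (hPQ : P = range Sum.inl ∧ Q = range Sum.inr ∨ P = range Sum.inr ∧ Q = range Sum.inl) :
    G.IsBipartiteWith P Q := by
  have h : G.IsBipartiteWith (range Sum.inl) (range Sum.inr) := by
    refine ⟨isCompl_range_inl_range_inr.disjoint, ?_⟩
    rintro (a | a) (b | b) hab
    · simpa using hG hab
    · simp
    · simp
    · simpa using hG hab
  rcases hPQ with ⟨rfl, rfl⟩ | ⟨rfl, rfl⟩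
  exacts [h, h.symm]

theorem neighborSet_eq_colorSubgraph_union (G : SimpleGraph V) (χ : Sym2 V → Fin 2) (v : V) :
    G.neighborSet v =
      (colorSubgraph G χ 0).neighborSet v ∪ (colorSubgraph G χ 1).neighborSet v := by
  ext w
  simp only [mem_neighborSet, colorSubgraph, mem_union]
  generalize χ s(v, w) = i
  fin_cases i <;> simp

theorem ncard_sub_sub_le_ncard_colorSubgraph_one [Finite V] {G : SimpleGraph V}
    {χ : Sym2 V → Fin 2} {P Q X : Set V} (hG : G.IsBipartiteWith P Q)
    {v : V} (hv : v ∈ P) (hX : X ⊆ Q) {δ ρ : ℝ} (hδ : δ ≤ (G.neighborSet v).ncard)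
    (hρ : ((colorSubgraph G χ 0).neighborSet v ∩ X).ncard ≤ ρ) :
    X.ncard - (Q.ncard - δ) - ρ ≤ ((colorSubgraph G χ 1).neighborSet v ∩ X).ncard := by
  have hle := ncard_add_ncard_le_ncard_inter_add_ncard hX
    (isBipartiteWith_neighborSet_subset hG hv) (toFinite Q)
  have hsplit : X ∩ G.neighborSet v ⊆ ((colorSubgraph G χ 0).neighborSet v ∩ X) ∪
      ((colorSubgraph G χ 1).neighborSet v ∩ X) := by
    rw [neighborSet_eq_colorSubgraph_union G χ v, inter_union_distrib_left, inter_comm X,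
      inter_comm X]
  have := (ncard_le_ncard hsplit).trans (ncard_union_le _ _)
  have := (Nat.cast_le (α := ℝ)).2 (hle.trans (Nat.add_le_add_right this _))
  push_cast at this
  linarith

theorem isAlmostCompleteBipartiteWith_betweenGraph_colorSubgraph [Finite V] {G : SimpleGraph V}
    {χ : Sym2 V → Fin 2} {P Q A B : Set V} (hG : G.IsBipartiteWith P Q) (hA : A ⊆ P)
    (hB : B ⊆ Q) {n : ℕ} (hP : P.ncard = n) (hQ : Q.ncard = n) {δ ρ : ℝ}
    (hδ : ∀ v, δ ≤ (G.neighborSet v).ncard)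
    (hρA : ∀ v ∈ A, ((colorSubgraph G χ 0).neighborSet v ∩ B).ncard ≤ ρ)
    (hρB : ∀ w ∈ B, ((colorSubgraph G χ 0).neighborSet w ∩ A).ncard ≤ ρ) :
    (betweenGraph (colorSubgraph G χ 1) A B).IsAlmostCompleteBipartiteWith A B (n - δ + ρ) := by
  have hAB : Disjoint A B := hG.disjoint.mono hA hB
  refine ⟨isBipartiteWith_betweenGraph _ hAB, fun v hv => ?_, fun w hw => ?_⟩
  · have := ncard_sub_sub_le_ncard_colorSubgraph_one hG (hA hv) hB (hδ v) (hρA v hv)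
    rw [betweenGraph_neighborSet_of_mem_left _ hAB hv]
    rw [hQ] at this
    linarith
  · have := ncard_sub_sub_le_ncard_colorSubgraph_one hG.symm (hB hw) hA (hδ w) (hρB w hw)
    rw [betweenGraph_comm, betweenGraph_neighborSet_of_mem_left _ hAB.symm hw]
    rw [hP] at this
    linarith

section TuttePartition

variable {R : SimpleGraph V} {T U S : Set V}

theorem mem_of_adj_of_mem_union {c : R.ConnectedComponent} (hc : T ∪ U ∪ S = c.supp)
    (hTU : ∀ v ∈ T, R.neighborSet v ∩ U = ∅) {x y : V} (hx : x ∈ T ∪ U) (hy : y ∉ U ∪ S)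
    (hxy : R.Adj x y) : x ∈ T ∧ y ∈ T := by
  have hyc : y ∈ T ∪ U ∪ S := hc ▸ c.mem_supp_of_adj_mem_supp (hc ▸ Or.inl hx) hxy
  have hyT : y ∈ T := by
    simp only [mem_union] at hyc hy
    tauto
  refine ⟨hx.resolve_right fun hxU => ?_, hyT⟩
  exact (eq_empty_iff_forall_notMem.1 (hTU y hyT)) x ⟨hxy.symm, hxU⟩

theorem ncard_neighborSet_inter_le [Finite V] {ρ : ℝ} (hρ : 0 ≤ ρ)
    (hT : ∀ v ∈ T, ((R.neighborSet v ∩ T).ncard : ℝ) < ρ) {x : V} {X : Set V}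
    (hX : ∀ y ∈ X, R.Adj x y → x ∈ T ∧ y ∈ T) : ((R.neighborSet x ∩ X).ncard : ℝ) ≤ ρ := by
  by_cases hxT : x ∈ T
  · have hsub : R.neighborSet x ∩ X ⊆ R.neighborSet x ∩ T :=
      fun y hy => ⟨hy.1, (hX y hy.2 hy.1).2⟩
    exact le_of_lt (lt_of_le_of_lt (by exact_mod_cast ncard_le_ncard hsub) (hT x hxT))
  · have hempty : R.neighborSet x ∩ X = ∅ :=
      eq_empty_iff_forall_notMem.2 fun y hy => hxT (hX y hy.2 hy.1).1
    simpa [hempty] using hρ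

end TuttePartition

end SimpleGraph

open SimpleGraph

theorem blue_connected_matching_from_tutte_partition_general (ξ : ℝ) (hξ0 : 0 < ξ) :
    ∃ K₀ : ℝ, ∀ k' : ℝ, K₀ ≤ k' → ∀ N : ℕ, (N : ℝ) = (2 + 8 * ξ) * k' →
      ∀ G : SimpleGraph (Fin N ⊕ Fin N), G ≤ completeBipartiteGraph (Fin N) (Fin N) →
      (∀ v, (7 / 8 + ξ) * ((2 + 8 * ξ) * k') ≤ ((G.neighborSet v).ncard : ℝ)) →
      ∀ χ : Sym2 (Fin N ⊕ Fin N) → Fin 2,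
      ∀ c : (colorSubgraph G χ 0).ConnectedComponent,
      ∀ T U S : Set (Fin N ⊕ Fin N),
        T ∪ U ∪ S = c.supp → Disjoint T U → Disjoint T S → Disjoint U S →
        (∀ v ∈ T, ((((colorSubgraph G χ 0).neighborSet v) ∩ T).ncard : ℝ) < ξ ^ 2 * k') →
        (∀ v ∈ T, ((colorSubgraph G χ 0).neighborSet v) ∩ U = ∅) →
        ∀ Vs Vt : Set (Fin N ⊕ Fin N),
          ((Vs = Set.range Sum.inl ∧ Vt = Set.range Sum.inr) ∨
            (Vs = Set.range Sum.inr ∧ Vt = Set.range Sum.inl)) →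
          (1 + 4 * ξ) * k' ≤ (((T ∪ U) ∩ Vs).ncard : ℝ) →
          (1 + 4 * ξ) * k' ≤ ((Vt \ (U ∪ S)).ncard : ℝ) →
          HasConnMatching
            (betweenGraph (colorSubgraph G χ 1) ((T ∪ U) ∩ Vs) (Vt \ (U ∪ S)))
            ((2 + 8 * ξ) * k') := by
  refine ⟨1, fun k' hK N hN G hG hGdeg χ c T U S hc _ _ _ hTsparse hTU Vs Vt hV hA hB => ?_⟩
  have hGV := isBipartiteWith_of_le_completeBipartiteGraph hG hV
  have hcard : Vs.ncard = N ∧ Vt.ncard = N := by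
    rcases hV with ⟨rfl, rfl⟩ | ⟨rfl, rfl⟩ <;>
      simp [ncard_range_of_injective, Sum.inl_injective, Sum.inr_injective]
  have hρ : 0 ≤ ξ ^ 2 * k' := by positivity
  have hH := isAlmostCompleteBipartiteWith_betweenGraph_colorSubgraph hGV inter_subset_right
    sdiff_subset hcard.1 hcard.2 hGdeg
    (fun v hv => ncard_neighborSet_inter_le hρ hTsparse fun y hy hvy =>
      mem_of_adj_of_mem_union hc hTU hv.1 hy.2 hvy)
    (fun w hw => ncard_neighborSet_inter_le hρ hTsparse fun y hy hwy =>
      (mem_of_adj_of_mem_union hc hTU hy.1 hw.2 hwy.symm).symm)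
  have hk : 0 < k' := by linarith
  have hγ : 2 * (N - (7 / 8 + ξ) * ((2 + 8 * ξ) * k') + ξ ^ 2 * k') < (1 + 4 * ξ) * k' := by
    rw [hN]; nlinarith [mul_pos hξ0 hk, mul_pos (mul_pos hξ0 hξ0) hk]
  exact hH.hasConnMatching (hγ.trans_le hA) (hγ.trans_le hB) (by linarith) (by linarith)

/-- Claim: with `C` the vertex set of a red component and `{T, U, S}` a partition of `C`
where every vertex of `T` has fewer than `ξ²k'` red neighbors in `T` and no red
neighbors in `U`: if `|(T ∪ U) ∩ V_s| ≥ (1+4ξ)k'` and `|V_{3−s} \ (U ∪ S)| ≥ (1+4ξ)k'`,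
then the blue bipartite graph between `(T ∪ U) ∩ V_s` and `V_{3−s} \ (U ∪ S)` contains
a connected matching saturating at least `(2+8ξ)k'` vertices. -/
theorem blue_connected_matching_from_tutte_partition (ξ : ℝ) (hξ0 : 0 < ξ)
    (hξ1 : ξ ≤ 1 / 1000) :
    ∃ K₀ : ℝ, ∀ k' : ℝ, K₀ ≤ k' → ∀ N : ℕ, (N : ℝ) = (2 + 8 * ξ) * k' →
      ∀ G : SimpleGraph (Fin N ⊕ Fin N), G ≤ completeBipartiteGraph (Fin N) (Fin N) →
      (∀ v, (7 / 8 + ξ) * ((2 + 8 * ξ) * k') ≤ ((G.neighborSet v).ncard : ℝ)) →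
      ∀ χ : Sym2 (Fin N ⊕ Fin N) → Fin 2,
      ∀ c : (colorSubgraph G χ 0).ConnectedComponent,
      ∀ T U S : Set (Fin N ⊕ Fin N),
        T ∪ U ∪ S = c.supp → Disjoint T U → Disjoint T S → Disjoint U S →
        (∀ v ∈ T, ((((colorSubgraph G χ 0).neighborSet v) ∩ T).ncard : ℝ) < ξ ^ 2 * k') →
        (∀ v ∈ T, ((colorSubgraph G χ 0).neighborSet v) ∩ U = ∅) →
        ∀ Vs Vt : Set (Fin N ⊕ Fin N),
          ((Vs = Set.range Sum.inl ∧ Vt = Set.range Sum.inr) ∨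
            (Vs = Set.range Sum.inr ∧ Vt = Set.range Sum.inl)) →
          (1 + 4 * ξ) * k' ≤ (((T ∪ U) ∩ Vs).ncard : ℝ) →
          (1 + 4 * ξ) * k' ≤ ((Vt \ (U ∪ S)).ncard : ℝ) →
          HasConnMatching
            (betweenGraph (colorSubgraph G χ 1) ((T ∪ U) ∩ Vs) (Vt \ (U ∪ S)))
            ((2 + 8 * ξ) * k') :=
  blue_connected_matching_from_tutte_partition_general ξ hξ0
end
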